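/- arXiv:1901.08770 — 5 statements merged into one kernel-verified Lean document; each statement's English description precedes it below -/
import Mathlib

section
/- Let T* be a tree on a finite vertex set V with at least 3 vertices, and let Σ* be a positive definite real matrix indexed by V whose conditional independence structure is given by T*; write Ω* = (Σ*)⁻¹. Let S be a set of leaves of T* such that distinct leaves in S have distinct neighbors, let π be the associated leaf-swap permutation, and let D* be a diagonal matrix with nonnegative entries such that D*_{bb} > 0 for every vertex b that is the neighbor in T* of some leaf in S. Then there exist a positive definite matrix Σ^q and a diagonal matrix D^q with nonnegative entries such that Σ* + D* = Σ^q + D^q and, for all i ≠ j, the (i,j) entry of (Σ^q)⁻¹ is nonzero if and only if π(i) and π(j) are adjacent in T*. -/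
open Matrix

/-- `S` has conditional independence structure given by the simple graph `G`:
for all `i ≠ j`, the `(i,j)` entry of `S⁻¹` is nonzero exactly when `i` and `j`
are adjacent in `G`. -/
def CondIndepStruct {V : Type*} [Fintype V] [DecidableEq V]
    (S : Matrix V V ℝ) (G : SimpleGraph V) : Prop :=
  ∀ i j : V, i ≠ j → (S⁻¹ i j ≠ 0 ↔ G.Adj i j)

/-- A leaf of a graph: a vertex with exactly one neighbor. -/
def IsLeaf {V : Type*} (G : SimpleGraph V) (a : V) : Prop :=
  ∃! b : V, G.Adj a b

/-- `D` is a diagonal matrix with nonnegative entries. -/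
def IsDiagNonneg {V : Type*} (D : Matrix V V ℝ) : Prop :=
  (∀ i j : V, i ≠ j → D i j = 0) ∧ ∀ i : V, 0 ≤ D i i

section helpers
variable {V : Type*} [Fintype V] [DecidableEq V]

lemma sum_two_support {a b : V} (hab : a ≠ b) (f : V → ℝ)
    (h : ∀ k, k ≠ a → k ≠ b → f k = 0) : ∑ k, f k = f a + f b := by
  rw [← Finset.sum_pair hab]
  exact (Finset.sum_subset (Finset.subset_univ _) (fun x _ hx => by
    simp only [Finset.mem_insert, Finset.mem_singleton, not_or] at hx
    exact h x hx.1 hx.2)).symm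

lemma posdef_diag_pos {M : Matrix V V ℝ} (hM : M.PosDef) (i : V) : 0 < M i i := by
  have := hM.dotProduct_mulVec_pos (x := Pi.single i 1) (by
    intro h
    have := congrFun h i
    simp at this)
  simpa [Matrix.mulVec_single, single_dotProduct] using this

lemma single_swap (T : SimpleGraph V) (Sg : Matrix V V ℝ) (hPD : Sg.PosDef)
    (hCI : CondIndepStruct Sg T) (a b : V) (hleaf : IsLeaf T a)
    (hab : T.Adj a b) (d : ℝ) (hd : 0 < d) :
    ∃ (S1 : Matrix V V ℝ) (δ : ℝ), S1.PosDef ∧ δ ≤ 0 ∧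
      S1 = Sg + Matrix.diagonal (fun v => if v = a then δ else if v = b then d else 0) ∧
      ∀ i j : V, i ≠ j →
        (S1⁻¹ i j ≠ 0 ↔ T.Adj (Equiv.swap a b i) (Equiv.swap a b j)) := by
  have hne : a ≠ b := T.ne_of_adj hab
  set Ω : Matrix V V ℝ := Sg⁻¹ with hΩdef
  have hΩPD : Ω.PosDef := hPD.inv
  have hdet : IsUnit Sg.det := (Matrix.isUnit_iff_isUnit_det _).1 hPD.isUnit
  have hSΩ : Sg * Ω = 1 := Matrix.mul_nonsing_inv _ hdet
  have hΩS : Ω * Sg = 1 := Matrix.nonsing_inv_mul _ hdet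
  have hsym : ∀ i j, Ω j i = Ω i j := fun i j => by
    simpa using hΩPD.1.apply i j
  have hsymS : ∀ i j, Sg j i = Sg i j := fun i j => by
    simpa using hPD.1.apply i j
  have hωaa : 0 < Ω a a := posdef_diag_pos hΩPD a
  have hωab : Ω a b ≠ 0 := (hCI a b hne).2 hab
  have huniqb : ∀ x, T.Adj a x → x = b := by
    intro x hx
    obtain ⟨b0, _, huniq⟩ := hleaf
    exact (huniq x hx).trans (huniq b hab).symm
  have hΩa0 : ∀ j, j ≠ a → j ≠ b → Ω a j = 0 := by
    intro j hja hjb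
    by_contra h
    exact hjb (huniqb j ((hCI a j (Ne.symm hja)).1 h))
  set δ : ℝ := -(Ω a a)⁻¹ with hδdef
  set μ : ℝ := (Ω a b)⁻¹ with hμdef
  set γ : ℝ := -((d⁻¹ + Ω b b) / (Ω a b) ^ 2) with hγdef
  have hδneg : δ < 0 := neg_neg_iff_pos.mpr (inv_pos.mpr hωaa)
  set Δf : V → ℝ := fun v => if v = a then δ else if v = b then d else 0 with hΔdef
  set C : Matrix V V ℝ := Matrix.of fun i j =>
    if i = a then (if j = a then γ else if j = b then μ else 0)
    else if i = b ∧ j = a then μ else 0 with hCdef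
  have hCa : ∀ j, j ≠ a → j ≠ b → C a j = 0 := by
    intro j h1 h2; simp [hCdef, h1, h2]
  have hCout : ∀ k j, k ≠ a → k ≠ b → C k j = 0 := by
    intro k j h1 h2; simp [hCdef, h1, h2]
  set S1 : Matrix V V ℝ := Sg + Matrix.diagonal Δf with hS1def
  set Ω1 : Matrix V V ℝ := Ω - Ω * C * Ω with hΩ1def
  -- entry values
  have hCaa : C a a = γ := by simp [hCdef]
  have hCab : C a b = μ := by simp [hCdef, hne, Ne.symm hne]
  have hCba : C b a = μ := by simp [hCdef, Ne.symm hne]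
  have hCbb : C b b = (0:ℝ) := by simp [hCdef, hne, Ne.symm hne]
  have hCbo : ∀ j, j ≠ a → C b j = 0 := by
    intro j hj; simp [hCdef, Ne.symm hne, hj]
  have hΔa : Δf a = δ := by simp [hΔdef]
  have hΔb : Δf b = d := by simp [hΔdef, Ne.symm hne]
  have hΔo : ∀ k, k ≠ a → k ≠ b → Δf k = 0 := by
    intro k h1 h2; simp [hΔdef, h1, h2]
  have hd' : d ≠ 0 := ne_of_gt hd
  have hωaa' : Ω a a ≠ 0 := ne_of_gt hωaa
  -- (Ω * C) computation
  have hΩC : ∀ i m, (Ω * C) i m = Ω i a * C a m + Ω i b * C b m := by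
    intro i m
    have := sum_two_support hne (fun k => Ω i k * C k m)
      (fun k h1 h2 => by simp [hCout k m h1 h2])
    simpa [Matrix.mul_apply] using this
  -- key: S1 * Ω1 = 1
  have hE : Matrix.diagonal Δf - C - Matrix.diagonal Δf * Ω * C = 0 := by
    ext i j
    have hmul : (Matrix.diagonal Δf * Ω * C) i j = Δf i * ((Ω * C) i j) := by
      rw [Matrix.mul_assoc, Matrix.diagonal_mul]
    rw [Matrix.sub_apply, Matrix.sub_apply, hmul, hΩC, Matrix.zero_apply,
      Matrix.diagonal_apply]
    by_cases hja : j = a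
    · by_cases hia : i = a
      · rw [hja, hia]
        rw [hCaa, hCba, hΔa, if_pos rfl]
        rw [hδdef, hμdef, hγdef]
        field_simp
        ring
      · by_cases hib : i = b
        · rw [hja, hib, hCaa, hCba, hΔb, if_neg (Ne.symm hne), hsym a b]
          rw [hμdef, hγdef]
          field_simp
          ring
        · rw [hja, hCaa, hCba, hΔo i hia hib, hCout i a hia hib,
            if_neg hia]
          ring
    · by_cases hjb : j = b
      · by_cases hia : i = a
        · rw [hjb, hia, hCab, hCbb, hΔa, if_neg hne]
          rw [hδdef, hμdef]
          field_simp
          ring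
        · by_cases hib : i = b
          · rw [hjb, hib, hCab, hCbb, hΔb, if_pos rfl, hsym a b]
            rw [hμdef]
            field_simp
            ring
          · rw [hjb, hCab, hCbb, hΔo i hia hib, hCout i b hia hib,
              if_neg hib]
            ring
      · have h0a : C a j = 0 := hCa j hja hjb
        have h0b : C b j = 0 := hCbo j hja
        have h0i : C i j = 0 := by
          by_cases hia : i = a
          · rw [hia]; exact h0a
          · by_cases hib : i = b
            · rw [hib]; exact h0b
            · exact hCout i j hia hib
        rw [h0a, h0b, h0i]
        by_cases hij : i = j
        · rw [if_pos hij, hΔo i (hij ▸ hja) (hij ▸ hjb)]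
          ring
        · rw [if_neg hij]
          ring
  have hkey : S1 * Ω1 = 1 := by
    have expand : S1 * Ω1 =
        1 + (Matrix.diagonal Δf - C - Matrix.diagonal Δf * Ω * C) * Ω := by
      rw [hS1def, hΩ1def]
      rw [Matrix.add_mul, Matrix.mul_sub, Matrix.mul_sub]
      rw [hSΩ]
      rw [show Sg * (Ω * C * Ω) = C * Ω by
        rw [← Matrix.mul_assoc, ← Matrix.mul_assoc, hSΩ, Matrix.one_mul]]
      rw [Matrix.sub_mul, Matrix.sub_mul]
      noncomm_ring
    rw [expand, hE, Matrix.zero_mul, add_zero]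
  have hinv : S1⁻¹ = Ω1 := Matrix.inv_eq_right_inv hkey
  have hμ0 : μ ≠ 0 := inv_ne_zero hωab
  -- covariance relations from leaf structure
  set r : ℝ := -(Ω a b / Ω a a) with hrdef
  have hr0 : r ≠ 0 := by
    simp only [hrdef, neg_ne_zero, div_ne_zero_iff]
    exact ⟨hωab, hωaa'⟩
  have hrowa : ∀ j, Ω a a * Sg a j + Ω a b * Sg b j = if a = j then 1 else 0 := by
    intro j
    have h2 := sum_two_support hne (fun k => Ω a k * Sg k j)
      (fun k hk1 hk2 => by simp [hΩa0 k hk1 hk2])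
    calc Ω a a * Sg a j + Ω a b * Sg b j = (Ω * Sg) a j := by
          rw [Matrix.mul_apply]; exact h2.symm
      _ = (1 : Matrix V V ℝ) a j := by rw [hΩS]
      _ = if a = j then 1 else 0 := Matrix.one_apply
  have hSa : ∀ j, j ≠ a → Sg a j = r * Sg b j := by
    intro j hj
    have h := hrowa j
    rw [if_neg (fun hh => hj hh.symm)] at h
    rw [hrdef]
    field_simp
    linarith
  have hSab : Sg a b = r * Sg b b := hSa b (Ne.symm hne)
  have hSaa : Sg a a = -δ + r * Sg a b := by
    have h := hrowa a
    rw [if_pos rfl, hsymS a b] at h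
    rw [hδdef, hrdef]
    field_simp
    linarith
  -- quadratic form identity
  have hmvSa : ∀ x : V → ℝ, (Sg *ᵥ x) a = r * (Sg *ᵥ x) b + (Sg a a - r * Sg a b) * x a := by
    intro x
    have hterm : ∀ k, Sg a k * x k
        = r * (Sg b k * x k) + (if k = a then (Sg a a - r * Sg a b) * x a else 0) := by
      intro k
      by_cases hk : k = a
      · rw [hk, if_pos rfl, hsymS a b]; ring
      · rw [hSa k hk, if_neg hk]; ring
    show (∑ k, Sg a k * x k) = r * (∑ k, Sg b k * x k) + (Sg a a - r * Sg a b) * x a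
    rw [Finset.sum_congr rfl (fun k _ => hterm k), Finset.sum_add_distrib,
      ← Finset.mul_sum, Finset.sum_ite_eq' Finset.univ a
        (fun _ => (Sg a a - r * Sg a b) * x a), if_pos (Finset.mem_univ a)]
  -- positive definiteness of S1
  have hS1PD : S1.PosDef := by
    refine Matrix.PosDef.of_dotProduct_mulVec_pos ?_ ?_
    · exact (hPD.1.add (Matrix.isHermitian_diagonal _))
    · intro x hx
      have hstar : star x = x := funext fun k => rfl
      rw [hstar]
      set y : V → ℝ := x + (x a) • (r • (Pi.single b 1 : V → ℝ) - Pi.single a 1) with hydef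
      have hya : y a = 0 := by
        simp [hydef, Pi.single_eq_same, Pi.single_eq_of_ne hne]
      have hyb : y b = x b + x a * r := by
        simp [hydef, Pi.single_eq_same, Pi.single_eq_of_ne (Ne.symm hne)]
      have hyk : ∀ k, k ≠ a → k ≠ b → y k = x k := by
        intro k h1 h2
        simp [hydef, Pi.single_eq_of_ne h1, Pi.single_eq_of_ne h2]
      have hS1x : x ⬝ᵥ (S1 *ᵥ x) = x ⬝ᵥ (Sg *ᵥ x) + δ * (x a)^2 + d * (x b)^2 := by
        rw [hS1def, Matrix.add_mulVec, dotProduct_add]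
        have hdm : x ⬝ᵥ (Matrix.diagonal Δf *ᵥ x) = δ * (x a)^2 + d * (x b)^2 := by
          have h2 := sum_two_support hne (fun k => x k * (Δf k * x k))
            (fun k h1 h2 => by simp [hΔo k h1 h2])
          calc x ⬝ᵥ (Matrix.diagonal Δf *ᵥ x) = ∑ k, x k * (Δf k * x k) := by
                simp [dotProduct, Matrix.mulVec_diagonal]
            _ = x a * (Δf a * x a) + x b * (Δf b * x b) := h2
            _ = δ * (x a)^2 + d * (x b)^2 := by rw [hΔa, hΔb]; ring
        rw [hdm]; ring
      have hySy : y ⬝ᵥ (Sg *ᵥ y) = x ⬝ᵥ (Sg *ᵥ x) + δ * (x a)^2 := by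
        set u : V → ℝ := r • (Pi.single b 1 : V → ℝ) - Pi.single a 1 with hudef
        have hSgu : ∀ z : V → ℝ, z ⬝ᵥ (Sg *ᵥ u) = r * (Sg *ᵥ z) b - (Sg *ᵥ z) a := by
          intro z
          rw [hudef, Matrix.mulVec_sub, Matrix.mulVec_smul, dotProduct_sub,
            dotProduct_smul]
          have h1 : z ⬝ᵥ (Sg *ᵥ Pi.single b 1) = (Sg *ᵥ z) b := by
            rw [Matrix.mulVec_single]
            show (∑ k, z k * (Sg k b * 1)) = ∑ k, Sg b k * z k
            exact Finset.sum_congr rfl (fun k _ => by rw [hsymS b k]; ring)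
          have h2 : z ⬝ᵥ (Sg *ᵥ Pi.single a 1) = (Sg *ᵥ z) a := by
            rw [Matrix.mulVec_single]
            show (∑ k, z k * (Sg k a * 1)) = ∑ k, Sg a k * z k
            exact Finset.sum_congr rfl (fun k _ => by rw [hsymS a k]; ring)
          rw [h1, h2]; simp only [smul_eq_mul]
        have huSx : u ⬝ᵥ (Sg *ᵥ x) = r * (Sg *ᵥ x) b - (Sg *ᵥ x) a := by
          rw [hudef, sub_dotProduct, smul_dotProduct]
          rw [single_dotProduct, single_dotProduct]
          simp only [smul_eq_mul, one_mul]
        have huSu : u ⬝ᵥ (Sg *ᵥ u) = Sg a a - r * Sg a b := by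
          rw [hSgu u]
          have hb : (Sg *ᵥ u) b = r * Sg b b - Sg b a := by
            rw [hudef, Matrix.mulVec_sub, Matrix.mulVec_smul,
              Matrix.mulVec_single, Matrix.mulVec_single]
            simp
          have ha : (Sg *ᵥ u) a = r * Sg a b - Sg a a := by
            rw [hudef, Matrix.mulVec_sub, Matrix.mulVec_smul,
              Matrix.mulVec_single, Matrix.mulVec_single]
            simp
          rw [hb, ha, hsymS a b, hSab]; ring
        have hxSu : x ⬝ᵥ (Sg *ᵥ u) = -(Sg a a - r * Sg a b) * x a := by
          rw [hSgu x, hmvSa x]; ring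
        have huSx' : u ⬝ᵥ (Sg *ᵥ x) = -(Sg a a - r * Sg a b) * x a := by
          rw [huSx, hmvSa x]; ring
        rw [hydef]
        simp only [Matrix.mulVec_add, Matrix.mulVec_smul, add_dotProduct,
          dotProduct_add, smul_dotProduct, dotProduct_smul,
          smul_eq_mul]
        rw [hxSu, huSx', huSu, hSaa]
        ring
      have htotal : x ⬝ᵥ (S1 *ᵥ x) = y ⬝ᵥ (Sg *ᵥ y) + d * (x b)^2 := by
        rw [hS1x, hySy]
      rw [htotal]
      by_cases hy : y = 0
      · have hxb : x b ≠ 0 := by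
          intro hxb0
          apply hx
          funext k
          by_cases hk1 : k = a
          · have := congrFun hy b
            rw [hyb, hxb0] at this
            simp only [Pi.zero_apply] at this
            have hxa : x a = 0 := by
              have : x a * r = 0 := by linarith
              rcases mul_eq_zero.1 this with h | h
              · exact h
              · exact absurd h hr0
            rw [hk1]; exact hxa
          · by_cases hk2 : k = b
            · rw [hk2]; exact hxb0
            · have := congrFun hy k
              rw [hyk k hk1 hk2] at this
              exact this
        rw [hy]
        simp only [Matrix.mulVec_zero, dotProduct_zero, zero_add]
        positivity
      · have h1 := hPD.dotProduct_mulVec_pos hy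
        rw [funext fun k => (rfl : star y k = y k)] at h1
        have h2 : 0 ≤ d * (x b)^2 := by positivity
        calc (0:ℝ) < y ⬝ᵥ (Sg *ᵥ y) := h1
          _ ≤ y ⬝ᵥ (Sg *ᵥ y) + d * (x b)^2 := by linarith
  -- pattern of the inverse
  have hΩCΩ : ∀ i j, (Ω * C * Ω) i j
      = (Ω i a * γ + Ω i b * μ) * Ω a j + (Ω i a * μ) * Ω b j := by
    intro i j
    have h2 := sum_two_support hne (fun m => (Ω * C) i m * Ω m j)
      (fun m h1 h2 => by show (Ω * C) i m * Ω m j = 0; rw [hΩC, hCa m h1 h2, hCbo m h1]; simp)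
    calc (Ω * C * Ω) i j = ∑ m, (Ω * C) i m * Ω m j := Matrix.mul_apply
      _ = (Ω * C) i a * Ω a j + (Ω * C) i b * Ω b j := h2
      _ = _ := by rw [hΩC, hΩC, hCaa, hCba, hCab, hCbb]; ring
  have hval : ∀ i j, S1⁻¹ i j
      = Ω i j - ((Ω i a * γ + Ω i b * μ) * Ω a j + (Ω i a * μ) * Ω b j) := by
    intro i j
    rw [hinv, hΩ1def, Matrix.sub_apply, hΩCΩ]
  refine ⟨S1, δ, hS1PD, le_of_lt hδneg, rfl, ?_⟩
  have hnz4 : Ω a a * (d⁻¹ * μ) ≠ 0 :=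
    mul_ne_zero hωaa' (mul_ne_zero (inv_ne_zero hd') hμ0)
  intro i j hij
  rw [hval]
  by_cases hia : i = a
  · by_cases hjb : j = b
    · rw [hia, hjb, Equiv.swap_apply_left, Equiv.swap_apply_right]
      have hvv : Ω a b - ((Ω a a * γ + Ω a b * μ) * Ω a b + (Ω a a * μ) * Ω b b)
          = Ω a a * (d⁻¹ * μ) := by
        rw [hγdef, hμdef]
        field_simp
        ring
      rw [hvv]
      exact iff_of_true hnz4 hab.symm
    · by_cases hja : j = a
      · exact absurd (hia.trans hja.symm) hij
      · rw [hia, Equiv.swap_apply_left, Equiv.swap_apply_of_ne_of_ne hja hjb]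
        rw [hΩa0 j hja hjb]
        rw [← hCI b j (fun h => hjb h.symm)]
        show 0 - ((Ω a a * γ + Ω a b * μ) * 0 + Ω a a * μ * Ω b j) ≠ 0 ↔ Sg⁻¹ b j ≠ 0
        simp [hωaa', hμ0]
        exact Iff.rfl
  · by_cases hib : i = b
    · by_cases hja : j = a
      · rw [hib, hja, Equiv.swap_apply_right, Equiv.swap_apply_left]
        have hvv : Ω b a - ((Ω b a * γ + Ω b b * μ) * Ω a a + (Ω b a * μ) * Ω b a)
            = Ω a a * (d⁻¹ * μ) := by
          rw [hsym a b, hγdef, hμdef]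
          field_simp
          ring
        rw [hvv]
        exact iff_of_true hnz4 hab
      · by_cases hjb : j = b
        · exact absurd (hib.trans hjb.symm) hij
        · rw [hib, Equiv.swap_apply_right, Equiv.swap_apply_of_ne_of_ne hja hjb]
          have hvv : Ω b j - ((Ω b a * γ + Ω b b * μ) * Ω a j + (Ω b a * μ) * Ω b j)
              = 0 := by
            rw [hΩa0 j hja hjb, hsym a b, hμdef]
            field_simp
            ring
          rw [hvv]
          have hnadj : ¬ T.Adj a j := fun h => hjb (huniqb j h)
          simp [hnadj]
    · by_cases hja : j = a
      · rw [hja, Equiv.swap_apply_left, Equiv.swap_apply_of_ne_of_ne hia hib]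
        have hΩia : Ω i a = 0 := by rw [hsym a i]; exact hΩa0 i hia hib
        have hvv : Ω i a - ((Ω i a * γ + Ω i b * μ) * Ω a a + (Ω i a * μ) * Ω b a)
            = -(Ω i b * μ) * Ω a a := by
          rw [hΩia]; ring
        rw [hvv]
        rw [← hCI i b hib]
        show -(Ω i b * μ) * Ω a a ≠ 0 ↔ Sg⁻¹ i b ≠ 0
        simp [hωaa', hμ0]
        exact Iff.rfl
      · by_cases hjb : j = b
        · rw [hjb, Equiv.swap_apply_right, Equiv.swap_apply_of_ne_of_ne hia hib]
          have hΩia : Ω i a = 0 := by rw [hsym a i]; exact hΩa0 i hia hib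
          have hvv : Ω i b - ((Ω i a * γ + Ω i b * μ) * Ω a b + (Ω i a * μ) * Ω b b)
              = 0 := by
            rw [hΩia, hμdef]
            field_simp
            ring
          rw [hvv]
          have hnadj : ¬ T.Adj i a := fun h => hib (huniqb i h.symm)
          simp [hnadj]
        · rw [Equiv.swap_apply_of_ne_of_ne hia hib, Equiv.swap_apply_of_ne_of_ne hja hjb]
          have hΩia : Ω i a = 0 := by rw [hsym a i]; exact hΩa0 i hia hib
          have hvv : Ω i j - ((Ω i a * γ + Ω i b * μ) * Ω a j + (Ω i a * μ) * Ω b j)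
              = Ω i j := by
            rw [hΩia, hΩa0 j hja hjb]; ring
          rw [hvv]
          exact hCI i j hij

lemma multi_swap (F : Finset V) :
    ∀ (T : SimpleGraph V) (Sg : Matrix V V ℝ), Sg.PosDef → CondIndepStruct Sg T →
    ∀ (nb : V → V) (d : V → ℝ) (σ : V → V),
    (∀ a ∈ F, IsLeaf T a) → (∀ a ∈ F, T.Adj a (nb a)) →
    (∀ a ∈ F, ∀ a' ∈ F, nb a = nb a' → a = a') →
    (∀ a ∈ F, nb a ∉ F) →
    (∀ a ∈ F, 0 < d (nb a)) →
    (∀ a ∈ F, σ a = nb a) → (∀ a ∈ F, σ (nb a) = a) →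
    (∀ v, v ∉ F → (∀ a ∈ F, v ≠ nb a) → σ v = v) →
    ∃ (Sq : Matrix V V ℝ) (Δ : V → ℝ), Sq.PosDef ∧
      Sq = Sg + Matrix.diagonal Δ ∧
      (∀ a ∈ F, Δ a ≤ 0) ∧ (∀ a ∈ F, Δ (nb a) = d (nb a)) ∧
      (∀ v, v ∉ F → (∀ a ∈ F, v ≠ nb a) → Δ v = 0) ∧
      (∀ i j : V, i ≠ j → (Sq⁻¹ i j ≠ 0 ↔ T.Adj (σ i) (σ j))) := by
  classical
  induction F using Finset.induction_on with
  | empty =>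
    intro T Sg hPD hCI nb d σ _ _ _ _ _ _ _ hfix
    refine ⟨Sg, 0, hPD, by ext i j; simp [Matrix.diagonal_apply], by simp, by simp, by simp, ?_⟩
    intro i j hij
    rw [hfix i (Finset.notMem_empty i) (fun a ha => absurd ha (Finset.notMem_empty a)),
      hfix j (Finset.notMem_empty j) (fun a ha => absurd ha (Finset.notMem_empty a))]
    exact hCI i j hij
  | @insert a F' haF' IH =>
    intro T Sg hPD hCI nb d σ hLeaf hAdj hInj hNb hD hσ1 hσ2 hσ3
    have memA : a ∈ insert a F' := Finset.mem_insert_self a F'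
    have memF' : ∀ a' ∈ F', a' ∈ insert a F' := fun a' h => Finset.mem_insert_of_mem h
    have hanba : a ≠ nb a := fun h => hNb a memA (h ▸ memA)
    have hnbaa : nb a ≠ a := Ne.symm hanba
    have hnbaF' : nb a ∉ F' := fun h => hNb a memA (memF' _ h)
    have hana : ∀ a' ∈ F', a' ≠ a := fun a' h hh => haF' (hh ▸ h)
    have hnb'a : ∀ a' ∈ F', nb a' ≠ a := fun a' h hh => hNb a' (memF' a' h) (hh ▸ memA)
    have hnb'nba : ∀ a' ∈ F', nb a' ≠ nb a :=
      fun a' h hh => (hana a' h) (hInj a' (memF' a' h) a memA hh)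
    have hanb' : ∀ a' ∈ F', a ≠ nb a' := fun a' h => Ne.symm (hnb'a a' h)
    have hnbanb' : ∀ a' ∈ F', nb a ≠ nb a' := fun a' h => Ne.symm (hnb'nba a' h)
    set τ : Equiv.Perm V := Equiv.swap a (nb a) with hτdef
    obtain ⟨S1, δ0, hS1PD, hδ0, hS1eq, hS1pat⟩ :=
      single_swap T Sg hPD hCI a (nb a) (hLeaf a memA) (hAdj a memA) (d (nb a)) (hD a memA)
    set T1 : SimpleGraph V := SimpleGraph.comap (fun v => τ v) T with hT1def
    have hT1adj : ∀ i j, T1.Adj i j ↔ T.Adj (τ i) (τ j) := fun i j => Iff.rfl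
    have hCI1 : CondIndepStruct S1 T1 := fun i j hij => (hS1pat i j hij)
    have hτfix : ∀ v, v ≠ a → v ≠ nb a → τ v = v :=
      fun v h1 h2 => Equiv.swap_apply_of_ne_of_ne h1 h2
    set σ'' : V → V := fun v => if v ∈ F' ∨ ∃ a' ∈ F', v = nb a' then σ v else v with hσ''def
    have hσ''1 : ∀ a' ∈ F', σ'' a' = σ a' := by
      intro a' h
      show (if _ then _ else _) = _
      rw [if_pos (Or.inl h)]
    have hσ''2 : ∀ a' ∈ F', σ'' (nb a') = σ (nb a') := by
      intro a' h
      show (if _ then _ else _) = _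
      rw [if_pos (Or.inr ⟨a', h, rfl⟩)]
    have hσ''3 : ∀ v, v ∉ F' → (∀ a' ∈ F', v ≠ nb a') → σ'' v = v := by
      intro v h1 h2
      show (if _ then _ else _) = _
      rw [if_neg]
      rintro (h | ⟨a', ha', hv⟩)
      · exact h1 h
      · exact h2 a' ha' hv
    have ha'nba : ∀ a' ∈ F', a' ≠ nb a := fun a' h hh => hnbaF' (hh ▸ h)
    have hτa' : ∀ a' ∈ F', τ a' = a' := fun a' h => hτfix a' (hana a' h) (ha'nba a' h)
    have hτnb' : ∀ a' ∈ F', τ (nb a') = nb a' :=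
      fun a' h => hτfix (nb a') (hnb'a a' h) (hnb'nba a' h)
    have hτinvol : ∀ v, τ (τ v) = v := fun v => Equiv.swap_apply_self a (nb a) v
    -- leaves of T1
    have hLeaf1 : ∀ a' ∈ F', IsLeaf T1 a' := by
      intro a' h
      obtain ⟨y, hy, huy⟩ := hLeaf a' (memF' a' h)
      refine ⟨nb a', ?_, ?_⟩
      · show T.Adj (τ a') (τ (nb a'))
        rw [hτa' a' h, hτnb' a' h]
        exact hAdj a' (memF' a' h)
      · intro x hx
        have hx' : T.Adj a' (τ x) := by
          have : T.Adj (τ a') (τ x) := hx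
          rwa [hτa' a' h] at this
        have h1 : τ x = y := huy (τ x) hx'
        have h2 : nb a' = y := huy (nb a') (hAdj a' (memF' a' h))
        have : τ x = nb a' := h1.trans h2.symm
        calc x = τ (τ x) := (hτinvol x).symm
          _ = τ (nb a') := by rw [this]
          _ = nb a' := hτnb' a' h
    have hAdj1 : ∀ a' ∈ F', T1.Adj a' (nb a') := by
      intro a' h
      show T.Adj (τ a') (τ (nb a'))
      rw [hτa' a' h, hτnb' a' h]
      exact hAdj a' (memF' a' h)
    obtain ⟨S2, Δ2, hS2PD, hS2eq, hΔ2neg, hΔ2nb, hΔ2zero, hS2pat⟩ :=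
      IH T1 S1 hS1PD hCI1 nb d σ''
        hLeaf1 hAdj1
        (fun x hx y hy hxy => hInj x (memF' x hx) y (memF' y hy) hxy)
        (fun x hx hmem => hNb x (memF' x hx) (memF' _ hmem))
        (fun x hx => hD x (memF' x hx))
        (fun x hx => (hσ''1 x hx).trans (hσ1 x (memF' x hx)))
        (fun x hx => (hσ''2 x hx).trans (hσ2 x (memF' x hx)))
        hσ''3
    -- assemble
    set Δ1f : V → ℝ := fun v => if v = a then δ0 else if v = nb a then d (nb a) else 0
      with hΔ1fdef
    have hΔ1fa : Δ1f a = δ0 := by simp [hΔ1fdef]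
    have hΔ1fnba : Δ1f (nb a) = d (nb a) := by simp [hΔ1fdef, hnbaa]
    have hΔ1fz : ∀ v, v ≠ a → v ≠ nb a → Δ1f v = 0 := by
      intro v h1 h2; simp [hΔ1fdef, h1, h2]
    have hΔ2a : Δ2 a = 0 := hΔ2zero a haF' (fun a' h => hanb' a' h)
    have hΔ2nba : Δ2 (nb a) = 0 := hΔ2zero (nb a) hnbaF' (fun a' h => hnbanb' a' h)
    have hτσ : ∀ v, τ (σ'' v) = σ v := by
      intro v
      by_cases hv1 : v ∈ F'
      · rw [hσ''1 v hv1, hσ1 v (memF' v hv1), hτnb' v hv1]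
      · by_cases hv2 : ∃ a' ∈ F', v = nb a'
        · obtain ⟨a', ha', rfl⟩ := hv2
          rw [hσ''2 a' ha', hσ2 a' (memF' a' ha'), hτa' a' ha']
        · have hσ''v : σ'' v = v := hσ''3 v hv1 (fun a' h hh => hv2 ⟨a', h, hh⟩)
          rw [hσ''v]
          by_cases hv3 : v = a
          · rw [hv3, hσ1 a memA]
            exact Equiv.swap_apply_left a (nb a)
          · by_cases hv4 : v = nb a
            · rw [hv4, hσ2 a memA]
              exact Equiv.swap_apply_right a (nb a)
            · rw [hτfix v hv3 hv4, hσ3 v (fun h => by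
                rcases Finset.mem_insert.1 h with h | h
                exacts [hv3 h, hv1 h])
                (fun x hx => by
                  rcases Finset.mem_insert.1 hx with h | h
                  · exact h ▸ hv4
                  · exact fun hh => hv2 ⟨x, h, hh⟩)]
    refine ⟨S2, fun v => Δ1f v + Δ2 v, hS2PD, ?_, ?_, ?_, ?_, ?_⟩
    · rw [hS2eq, hS1eq]
      have : Matrix.diagonal (fun v => Δ1f v + Δ2 v)
          = Matrix.diagonal Δ1f + Matrix.diagonal Δ2 := by
        rw [← Matrix.diagonal_add]
      rw [this, ← add_assoc]
    · intro x hx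
      show Δ1f x + Δ2 x ≤ 0
      rcases Finset.mem_insert.1 hx with h | h
      · rw [h, hΔ1fa, hΔ2a, add_zero]; exact hδ0
      · rw [hΔ1fz x (hana x h) (ha'nba x h), zero_add]
        exact hΔ2neg x h
    · intro x hx
      show Δ1f (nb x) + Δ2 (nb x) = d (nb x)
      rcases Finset.mem_insert.1 hx with h | h
      · rw [h, hΔ1fnba, hΔ2nba, add_zero]
      · rw [hΔ1fz (nb x) (hnb'a x h) (hnb'nba x h), zero_add]
        exact hΔ2nb x h
    · intro v hv1 hv2
      have hva : v ≠ a := fun h => hv1 (h ▸ memA)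
      have hvna : v ≠ nb a := hv2 a memA
      show Δ1f v + Δ2 v = 0
      rw [hΔ1fz v hva hvna, zero_add]
      exact hΔ2zero v (fun h => hv1 (memF' v h)) (fun x hx => hv2 x (memF' x hx))
    · intro i j hij
      rw [← hτσ i, ← hτσ j]
      exact hS2pat i j hij

lemma no_adjacent_leaves (T : SimpleGraph V) (hconn : T.Connected)
    (hcard : 3 ≤ Fintype.card V) {a b : V} (hab : T.Adj a b)
    (hla : IsLeaf T a) (hlb : IsLeaf T b) : False := by
  have hex : ∃ c : V, c ≠ a ∧ c ≠ b := by
    by_contra h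
    push_neg at h
    have hsub : (Finset.univ : Finset V) ⊆ {a, b} := by
      intro x _
      by_cases hx : x = a
      · simp [hx]
      · simp [h x hx]
    have hc1 := Finset.card_le_card hsub
    rw [Finset.card_univ] at hc1
    have hc2 : ({a, b} : Finset V).card ≤ 2 :=
      (Finset.card_insert_le a {b}).trans (by simp)
    omega
  obtain ⟨c, hca, hcb⟩ := hex
  obtain ⟨p⟩ := hconn.preconnected a c
  have key : ∀ (u v : V) (_ : T.Walk u v), (u = a ∨ u = b) → (v = a ∨ v = b) := by
    intro u v q
    induction q with
    | nil => exact id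
    | @cons u w v h q ih =>
      intro hu
      apply ih
      rcases hu with hu | hu
      · rw [hu] at h
        obtain ⟨y, _, huy⟩ := hla
        right
        exact (huy w h).trans (huy b hab).symm
      · rw [hu] at h
        obtain ⟨y, _, huy⟩ := hlb
        left
        exact (huy w h).trans (huy a hab.symm).symm
  rcases key a c p (Or.inl rfl) with h | h
  · exact hca h
  · exact hcb h

end helpers

theorem stmt_0 {V : Type*} [Fintype V] [DecidableEq V]
    (Tstar : SimpleGraph V) (hTree : Tstar.IsTree) (hcard : 3 ≤ Fintype.card V)
    (Sig : Matrix V V ℝ) (hPD : Sig.PosDef) (hCI : CondIndepStruct Sig Tstar)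
    -- `S` is a set of leaves of `Tstar` such that distinct leaves in `S` have
    -- distinct neighbors
    (S : Set V) (hleaf : ∀ a ∈ S, IsLeaf Tstar a)
    (hdistinct : ∀ a ∈ S, ∀ a' ∈ S, a ≠ a' →
      ∀ b b' : V, Tstar.Adj a b → Tstar.Adj a' b' → b ≠ b')
    -- `π` is the associated leaf-swap permutation: it exchanges each `a ∈ S`
    -- with its unique neighbor and fixes all other vertices
    (π : Equiv.Perm V)
    (hπ1 : ∀ a ∈ S, Tstar.Adj a (π a))
    (hπ2 : ∀ v : V, π (π v) = v)
    (hπ3 : ∀ v : V, π v ≠ v → v ∈ S ∨ ∃ a ∈ S, Tstar.Adj a v)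
    -- `Dstar` is diagonal, nonnegative, with strictly positive entries at
    -- neighbors of leaves in `S`
    (Dstar : Matrix V V ℝ) (hD : IsDiagNonneg Dstar)
    (hDpos : ∀ b : V, (∃ a ∈ S, Tstar.Adj a b) → 0 < Dstar b b) :
    ∃ (Sq Dq : Matrix V V ℝ), Sq.PosDef ∧ IsDiagNonneg Dq ∧
      Sig + Dstar = Sq + Dq ∧
      ∀ i j : V, i ≠ j → (Sq⁻¹ i j ≠ 0 ↔ Tstar.Adj (π i) (π j)) := by
  classical
  have hconn := hTree.isConnected
  set F : Finset V := S.toFinset with hF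
  have hmem : ∀ a, a ∈ F ↔ a ∈ S := fun a => Set.mem_toFinset
  have hnbnotin : ∀ a ∈ F, π a ∉ F := by
    intro a haF hpaF
    exact no_adjacent_leaves Tstar hconn hcard (hπ1 a ((hmem a).1 haF))
      (hleaf a ((hmem a).1 haF)) (hleaf (π a) ((hmem _).1 hpaF))
  obtain ⟨Sq, Δ, hSqPD, hSqeq, hΔ1, hΔ2, hΔ3, hpat⟩ :=
    multi_swap F Tstar Sig hPD hCI (fun v => π v) (fun v => Dstar v v) (fun v => π v)
      (fun a ha => hleaf a ((hmem a).1 ha))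
      (fun a ha => hπ1 a ((hmem a).1 ha))
      (fun a _ a' _ h => π.injective h)
      hnbnotin
      (fun a ha => hDpos (π a) ⟨a, (hmem a).1 ha, hπ1 a ((hmem a).1 ha)⟩)
      (fun a _ => rfl)
      (fun a _ => hπ2 a)
      (by
        intro v hv hv2
        by_contra h
        rcases hπ3 v h with hS | ⟨a, haS, hadj⟩
        · exact hv ((hmem v).2 hS)
        · have hva : v = π a := by
            obtain ⟨y, _, huy⟩ := hleaf a haS
            exact (huy v hadj).trans (huy (π a) (hπ1 a haS)).symm
          exact hv2 a ((hmem a).2 haS) hva)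
  refine ⟨Sq, Dstar - Matrix.diagonal Δ, hSqPD, ⟨?_, ?_⟩, ?_, hpat⟩
  · intro i j hij
    rw [Matrix.sub_apply, hD.1 i j hij, Matrix.diagonal_apply_ne _ hij]
    ring
  · intro i
    rw [Matrix.sub_apply, Matrix.diagonal_apply_eq]
    by_cases hi : i ∈ F
    · have h1 := hΔ1 i hi
      have h2 := hD.2 i
      linarith
    · by_cases hi2 : ∃ a ∈ F, i = π a
      · obtain ⟨a, haF, rfl⟩ := hi2
        rw [hΔ2 a haF]
        simp
      · rw [hΔ3 i hi (fun a haF h => hi2 ⟨a, haF, h⟩)]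
        simpa using hD.2 i
  · rw [hSqeq]
    abel
end

section
/- Let T* be a tree on a finite vertex set V with at least 3 vertices, let Σ* be a positive definite real matrix indexed by V whose conditional independence structure is given by T*, write Ω* = (Σ*)⁻¹, let D* be a diagonal matrix with nonnegative entries, and set Σ^o = Σ* + D*. Suppose Σ' is positive definite, D' is a diagonal matrix with nonnegative entries, Σ' + D' = Σ^o, the conditional independence structure of Σ' is given by a tree T', and moreover D'_{aa} < 1/Ω*_{aa} for every leaf a of T*. Then T' = T*, i.e., T' and T* have exactly the same edges. -/
set_option linter.unusedSectionVars false
set_option linter.unusedVariables false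
set_option maxHeartbeats 1000000

open Matrix

namespace TreeCI

open SimpleGraph

variable {V : Type*} [Fintype V] [DecidableEq V] {T : SimpleGraph V}


open SimpleGraph

variable {V : Type*} [Fintype V] [DecidableEq V] {T : SimpleGraph V}

/-- `k` lies on every walk from `i` to `j`. -/
def Sep (T : SimpleGraph V) (k i j : V) : Prop := ∀ w : T.Walk i j, k ∈ w.support

lemma sep_symm {k i j : V} (h : Sep T k i j) : Sep T k j i := fun w => by
  have := h w.reverse
  rwa [Walk.support_reverse, List.mem_reverse] at this

lemma not_sep_nil {k i : V} (hk : k ≠ i) : ¬ Sep T k i i := fun h => by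
  have := h Walk.nil
  simp only [Walk.support_nil, List.mem_singleton] at this
  exact hk this

lemma sep_of_mem_path (hT : T.IsTree) {i j k : V} (p : T.Walk i j)
    (hp : p.IsPath) (hk : k ∈ p.support) : Sep T k i j := by
  intro w
  obtain ⟨q, _, hq⟩ := hT.existsUnique_path i j
  have h1 : p = q := hq p hp
  have h2 : w.bypass = q := hq w.bypass w.bypass_isPath
  have : k ∈ w.bypass.support := by rw [h2, ← h1]; exact hk
  exact w.support_bypass_subset this

lemma not_sep_of_adj {i j k : V} (h : T.Adj i j) (hki : k ≠ i) (hkj : k ≠ j) :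
    ¬ Sep T k i j := by
  intro hs
  have := hs h.toWalk
  simp only [Adj.toWalk, Walk.support_cons, Walk.support_nil, List.mem_cons,
    List.mem_singleton, List.not_mem_nil, or_false] at this
  rcases this with h1 | h1
  · exact hki h1
  · exact hkj h1

lemma exists_sep_of_not_adj (hT : T.IsTree) {i j : V} (hij : i ≠ j) (hna : ¬ T.Adj i j) :
    ∃ k, k ≠ i ∧ k ≠ j ∧ Sep T k i j := by
  obtain ⟨p, hp, _⟩ := hT.existsUnique_path i j
  cases p with
  | nil => exact absurd rfl hij
  | @cons _ x _ h q =>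
    rcases eq_or_ne x j with rfl | hxj
    · exact absurd h hna
    · refine ⟨x, h.ne', hxj, sep_of_mem_path hT _ hp ?_⟩
      simp only [Walk.support_cons, List.mem_cons]
      exact Or.inr q.start_mem_support

/-- from a leaf's neighbor: any nonempty walk starting at `k` whose unique neighbor is `b`
passes through `b`. -/
lemma mem_support_of_start (hub : ∀ c, T.Adj k c → c = b) {x : V} (hkx : k ≠ x)
    (w : T.Walk k x) : b ∈ w.support := by
  cases w with
  | nil => exact absurd rfl hkx
  | cons h q =>
    rw [Walk.support_cons, List.mem_cons]
    right
    have := hub _ h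
    rw [← this]
    exact q.start_mem_support

lemma mem_tail_of_start (hub : ∀ c, T.Adj k c → c = b) {x : V} (hkx : k ≠ x)
    (w : T.Walk k x) : b ∈ w.support.tail := by
  cases w with
  | nil => exact absurd rfl hkx
  | cons h q =>
    rw [Walk.support_cons, List.tail_cons]
    have := hub _ h
    rw [← this]
    exact q.start_mem_support

lemma leaf_sep {k b : V} (hub : ∀ c, T.Adj k c → c = b) {x : V} (hx : x ≠ k) :
    Sep T b x k := by
  intro w
  have := mem_support_of_start hub (Ne.symm hx) w.reverse
  rwa [Walk.support_reverse, List.mem_reverse] at this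

lemma not_sep_of_leaf (hT : T.IsTree) {k : V} (hl : IsLeaf T k) {i j : V}
    (hki : k ≠ i) (hkj : k ≠ j) : ¬ Sep T k i j := by
  obtain ⟨b, hb, hub⟩ := hl
  rcases eq_or_ne i j with rfl | hij
  · exact not_sep_nil hki
  intro hs
  obtain ⟨p, hp, _⟩ := hT.existsUnique_path i j
  have hk := hs p
  have hspec := p.take_spec hk
  have hnodup : (((p.takeUntil k hk).append (p.dropUntil k hk)).support).Nodup := by
    rw [hspec]; exact hp.support_nodup
  rw [Walk.support_append, List.nodup_append] at hnodup
  have hb1 : b ∈ (p.takeUntil k hk).support := by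
    have := mem_support_of_start hub hki (p.takeUntil k hk).reverse
    rwa [Walk.support_reverse, List.mem_reverse] at this
  have hb2 : b ∈ (p.dropUntil k hk).support.tail :=
    mem_tail_of_start hub hkj (p.dropUntil k hk)
  exact hnodup.2.2 b hb1 b hb2 rfl

lemma sep_of_two_nbrs (hT : T.IsTree) {k u v : V} (hu : T.Adj k u) (hv : T.Adj k v)
    (huv : u ≠ v) : Sep T k u v := by
  have hp : (Walk.cons hu.symm (Walk.cons hv Walk.nil)).IsPath := by
    rw [Walk.isPath_def]
    simp [hu.ne', hv.ne', huv, hu.ne, hv.ne]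
  refine sep_of_mem_path hT _ hp ?_
  simp

lemma exists_two_nbrs (hT : T.IsTree) (h3 : 3 ≤ Fintype.card V) {k : V}
    (hk : ¬ IsLeaf T k) : ∃ u v, T.Adj k u ∧ T.Adj k v ∧ u ≠ v := by
  have hnt : Nontrivial V := Fintype.one_lt_card_iff_nontrivial.mp (by omega)
  obtain ⟨y, hy⟩ := exists_ne k
  obtain ⟨p, _, _⟩ := hT.existsUnique_path k y
  have hnbr : ∃ u, T.Adj k u := by
    cases p with
    | nil => exact absurd rfl hy.symm
    | cons h q => exact ⟨_, h⟩
  obtain ⟨u, hu⟩ := hnbr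
  by_contra hcon
  push_neg at hcon
  exact hk ⟨u, hu, fun c hc => hcon c u hc hu⟩

lemma exists_third (h3 : 3 ≤ Fintype.card V) (k c : V) : ∃ x, x ≠ k ∧ x ≠ c := by
  by_contra h
  push_neg at h
  have hsub : (Finset.univ : Finset V) ⊆ {k, c} := by
    intro x _
    rcases eq_or_ne x k with rfl | hxk
    · simp
    · simp [h x hxk]
  have := Finset.card_le_card hsub
  simp only [Finset.card_univ] at this
  have h2 : ({k, c} : Finset V).card ≤ 2 := by
    apply le_trans (Finset.card_insert_le _ _)
    simp
  omega

lemma exists_nbr_sep (hT : T.IsTree) (h3 : 3 ≤ Fintype.card V) {k c : V}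
    (hk : ¬ IsLeaf T k) (hc : c ≠ k) :
    ∃ v, T.Adj k v ∧ Sep T k v c ∧ v ≠ c := by
  obtain ⟨u₁, u₂, h1, h2, h12⟩ := exists_two_nbrs hT h3 hk
  have hsep12 := sep_of_two_nbrs hT h1 h2 h12
  by_cases hs : Sep T k u₁ c
  · refine ⟨u₁, h1, hs, ?_⟩
    rintro rfl
    exact not_sep_nil (Ne.symm hc) hs
  · obtain ⟨w₁, hw₁⟩ : ∃ w₁ : T.Walk u₁ c, k ∉ w₁.support := by
      by_contra h
      push_neg at h
      exact hs h
    refine ⟨u₂, h2, ?_, ?_⟩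
    · intro w
      by_contra hkw
      have := hsep12 (w₁.append w.reverse)
      rw [Walk.mem_support_append_iff] at this
      rcases this with h' | h'
      · exact hw₁ h'
      · rw [Walk.support_reverse, List.mem_reverse] at h'
        exact hkw h'
    · rintro rfl
      exact hw₁ (hsep12 w₁)

lemma leaf_nbr_not_leaf (hT : T.IsTree) (h3 : 3 ≤ Fintype.card V) {k c : V}
    (hl : IsLeaf T k) (hkc : T.Adj k c) : ¬ IsLeaf T c := by
  intro hlc
  obtain ⟨b, hb, hub⟩ := hl
  obtain ⟨b', hb', hub'⟩ := hlc
  have hubc : ∀ d, T.Adj k d → d = c := fun d hd => (hub d hd).trans (hub c hkc).symm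
  have hub2 : ∀ d, T.Adj c d → d = k := fun d hd => (hub' d hd).trans (hub' k hkc.symm).symm
  obtain ⟨x, hxk, hxc⟩ := exists_third h3 k c
  have h1 : Sep T c x k := leaf_sep hubc hxk
  have h2 : Sep T k x c := leaf_sep hub2 hxc
  obtain ⟨p, hp, _⟩ := hT.existsUnique_path x k
  have hcmem : c ∈ p.support := h1 p
  have hspec := p.take_spec hcmem
  have hnodup : (((p.takeUntil c hcmem).append (p.dropUntil c hcmem)).support).Nodup := by
    rw [hspec]; exact hp.support_nodup
  rw [Walk.support_append, List.nodup_append] at hnodup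
  have hk1 : k ∈ (p.takeUntil c hcmem).support := h2 _
  have hk2 : k ∈ (p.dropUntil c hcmem).support.tail := by
    have hend : k ∈ (p.dropUntil c hcmem).support := Walk.end_mem_support _
    rw [Walk.support_eq_cons (p.dropUntil c hcmem), List.mem_cons] at hend
    rcases hend with h' | h'
    · exact absurd h'.symm hkc.ne'
    · exact h'
  exact hnodup.2.2 k hk1 k hk2 rfl



lemma first_hit (S : Set V) [DecidablePred (· ∈ S)] :
    ∀ {b i : V} (Q : T.Walk b i), i ∈ S →
    ∃ (m : V) (Q₁ : T.Walk b m) (Q₂ : T.Walk m i), m ∈ S ∧ Q = Q₁.append Q₂ ∧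
      ∀ x ∈ Q₁.support, x ∈ S → x = m := by
  intro b i Q
  induction Q with
  | nil =>
    intro hi
    exact ⟨_, Walk.nil, Walk.nil, hi, rfl, by intro x hx _; simpa using hx⟩
  | @cons u y w h q ih =>
    intro hi
    by_cases hu : u ∈ S
    · exact ⟨u, Walk.nil, Walk.cons h q, hu, rfl, by intro x hx _; simpa using hx⟩
    · obtain ⟨m, Q₁, Q₂, hm, heq, hfirst⟩ := ih hi
      refine ⟨m, Walk.cons h Q₁, Q₂, hm, by rw [heq, Walk.cons_append], ?_⟩
      intro x hx hxS
      rw [Walk.support_cons, List.mem_cons] at hx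
      rcases hx with rfl | hx
      · exact absurd hxS hu
      · exact hfirst x hx hxS

lemma exists_meet (hT : T.IsTree) {i j b : V} (hbi : b ≠ i) (hbj : b ≠ j)
    (hns : ¬ Sep T b i j) :
    ∃ m, m ≠ b ∧ Sep T m b i ∧ Sep T m b j ∧
      (m = i ∨ m = j ∨ (m ≠ i ∧ m ≠ j ∧ Sep T m i j)) := by
  classical
  obtain ⟨w, hw⟩ : ∃ w : T.Walk i j, b ∉ w.support := by
    by_contra h; push_neg at h; exact hns h
  set P := w.bypass with hPdef
  have hPp : P.IsPath := w.bypass_isPath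
  have hbP : b ∉ P.support := fun h => hw (w.support_bypass_subset h)
  obtain ⟨Q, hQ, _⟩ := hT.existsUnique_path b i
  obtain ⟨m, Q₁, Q₂, hmP, heq, hfirst⟩ :=
    first_hit {x | x ∈ P.support} Q (by simpa using P.start_mem_support)
  have hmP' : m ∈ P.support := hmP
  have hQ₁path : Q₁.IsPath := by
    rw [heq] at hQ; exact hQ.of_append_left
  have hmb : m ≠ b := fun h => hbP (h ▸ hmP')
  have hsep1 : Sep T m b i := by
    refine sep_of_mem_path hT Q hQ ?_
    rw [heq, Walk.mem_support_append_iff]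
    exact Or.inl Q₁.end_mem_support
  have hstatus : m = i ∨ m = j ∨ (m ≠ i ∧ m ≠ j ∧ Sep T m i j) := by
    by_cases h1 : m = i
    · exact Or.inl h1
    by_cases h2 : m = j
    · exact Or.inr (Or.inl h2)
    · exact Or.inr (Or.inr ⟨h1, h2, sep_of_mem_path hT P hPp hmP'⟩)
  have hsep2 : Sep T m b j := by
    set P₂ := P.dropUntil m hmP' with hP₂def
    have hP₂ : P₂.IsPath := hPp.dropUntil hmP'
    have hdisj : ∀ a ∈ Q₁.support, a ∉ P₂.support.tail := by
      intro a ha hat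
      have haP : a ∈ P.support :=
        P.support_dropUntil_subset hmP' (List.mem_of_mem_tail hat)
      have ham : a = m := hfirst a ha haP
      rw [ham] at hat
      have hcons : P₂.support = m :: P₂.support.tail := Walk.support_eq_cons P₂
      have hnd := hP₂.support_nodup
      rw [hcons] at hnd
      exact (List.nodup_cons.mp hnd).1 hat
    have hR : (Q₁.append P₂).IsPath := by
      rw [Walk.isPath_def, Walk.support_append, List.nodup_append]
      exact ⟨hQ₁path.support_nodup,
        hP₂.support_nodup.sublist (List.tail_sublist _),
          fun a ha b hb hab => by subst hab; exact hdisj a ha hb⟩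
    refine sep_of_mem_path hT (Q₁.append P₂) hR ?_
    rw [Walk.mem_support_append_iff]
    exact Or.inl Q₁.end_mem_support
  exact ⟨m, hmb, hsep1, hsep2, hstatus⟩


lemma star_triv (z : V → ℝ) : star z = z := funext fun _ => star_trivial _

lemma posdef_apply {S : Matrix V V ℝ} (hS : S.PosDef) {z : V → ℝ} (hz : z ≠ 0) :
    0 < z ⬝ᵥ (S *ᵥ z) := by
  have := hS.dotProduct_mulVec_pos hz
  rwa [star_triv] at this

lemma psd_apply {S : Matrix V V ℝ} (hS : S.PosDef) (z : V → ℝ) :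
    0 ≤ z ⬝ᵥ (S *ᵥ z) := by
  have := hS.posSemidef.dotProduct_mulVec_nonneg z
  rwa [star_triv] at this

lemma diag_pos {S : Matrix V V ℝ} (hS : S.PosDef) (k : V) : 0 < S k k := by
  have h := posdef_apply hS (z := Pi.single k 1) (by
    intro h
    have := congrFun h k
    simp at this)
  rwa [mulVec_single_one, dotProduct, Finset.sum_eq_single k
    (by intro b _ hb; simp [Pi.single_eq_of_ne hb]) (by intro h; simp at h),
    Pi.single_eq_same, one_mul, Matrix.col_apply] at h

lemma symm_entry {S : Matrix V V ℝ} (hS : S.PosDef) (i j : V) : S i j = S j i := by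
  have := hS.isHermitian
  have h := congrFun (congrFun this.symm i) j
  simpa [Matrix.conjTranspose_apply] using h

lemma pair_vec_apply (a b : ℝ) {x y : V} (hxy : x ≠ y) :
    (a • (Pi.single x (1:ℝ) : V → ℝ) + b • (Pi.single y (1:ℝ) : V → ℝ)) y = b := by
  simp [Pi.single_eq_of_ne hxy.symm, Pi.single_eq_same]

lemma quad_expand (S : Matrix V V ℝ) (a b : ℝ) {x y : V} (hxy : x ≠ y) :
    (a • (Pi.single x (1:ℝ) : V → ℝ) + b • (Pi.single y (1:ℝ) : V → ℝ)) ⬝ᵥ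
      (S *ᵥ (a • (Pi.single x (1:ℝ) : V → ℝ) + b • (Pi.single y (1:ℝ) : V → ℝ)))
      = a^2 * S x x + a*b* S x y + a*b* S y x + b^2 * S y y := by
  simp only [Matrix.mulVec_add, Matrix.mulVec_smul, Matrix.mulVec_single_one, Matrix.col_apply,
    dotProduct_add, add_dotProduct, dotProduct_smul, smul_dotProduct,
    single_dotProduct, smul_eq_mul, Pi.add_apply, Pi.smul_apply, mul_one]
  ring

lemma sq_lt {S : Matrix V V ℝ} (hS : S.PosDef) {i j : V} (hij : i ≠ j) :
    S i j ^ 2 < S i i * S j j := by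
  set z : V → ℝ := S i j • (Pi.single i (1:ℝ) : V → ℝ) +
      (-(S i i)) • (Pi.single j (1:ℝ) : V → ℝ) with hzdef
  have hz : z ≠ 0 := by
    intro h
    have h2 : z j = -(S i i) := pair_vec_apply _ _ hij
    rw [h] at h2
    have := diag_pos hS i
    simp only [Pi.zero_apply] at h2
    nlinarith
  have h := posdef_apply hS hz
  rw [hzdef, quad_expand S _ _ hij] at h
  have hsym := symm_entry hS i j
  rw [← hsym] at h
  nlinarith [diag_pos hS i]


lemma sep_factor {T : SimpleGraph V} {S : Matrix V V ℝ} (hS : S.PosDef)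
    (hCI : ∀ i j : V, i ≠ j → (S⁻¹ i j ≠ 0 ↔ T.Adj i j))
    {i j k : V} (hki : k ≠ i) (hkj : k ≠ j) (hsep : Sep T k i j) :
    S i j * S k k = S i k * S k j := by
  classical
  have hΩPD : (S⁻¹).PosDef := hS.inv
  have hdet : IsUnit S.det := isUnit_iff_ne_zero.mpr hS.det_pos.ne'
  have hΩS : S⁻¹ * S = 1 := Matrix.nonsing_inv_mul S hdet
  set A : Set V := {x | x ≠ k ∧ ∃ w : T.Walk i x, k ∉ w.support} with hA
  have hiA : i ∈ A := ⟨Ne.symm hki, SimpleGraph.Walk.nil, by simp [hki]⟩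
  have hjA : j ∉ A := by rintro ⟨hjk, w, hw⟩; exact hw (hsep w)
  have hclose : ∀ x ∈ A, ∀ y, y ≠ k → T.Adj x y → y ∈ A := by
    rintro x ⟨hxk, w, hw⟩ y hyk hxy
    refine ⟨hyk, w.concat hxy, ?_⟩
    rw [SimpleGraph.Walk.support_concat]
    intro hmem
    rw [List.mem_append, List.mem_singleton] at hmem
    rcases hmem with h' | h'
    · exact hw h'
    · exact hyk h'.symm
  set w0 : V → ℝ := S k k • (Pi.single j (1:ℝ) : V → ℝ) -
      S k j • (Pi.single k (1:ℝ) : V → ℝ) with hw0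
  set u : V → ℝ := S *ᵥ w0 with hu
  have hu_val : ∀ x, u x = S k k * S x j - S k j * S x k := by
    intro x
    simp only [hu, hw0, Matrix.mulVec_sub, Matrix.mulVec_smul, Matrix.mulVec_single_one, Matrix.col_apply,
      Pi.sub_apply, Pi.smul_apply, smul_eq_mul, mul_one]
  have hu_k : u k = 0 := by rw [hu_val]; ring
  have hΩu : S⁻¹ *ᵥ u = w0 := by
    rw [hu, Matrix.mulVec_mulVec, hΩS, Matrix.one_mulVec]
  set z : V → ℝ := fun x => if x ∈ A then u x else 0 with hz
  have hΩz : ∀ x ∈ A, (S⁻¹ *ᵥ z) x = 0 := by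
    intro x hx
    have h1 : (S⁻¹ *ᵥ z) x = (S⁻¹ *ᵥ u) x := by
      simp only [Matrix.mulVec, dotProduct]
      apply Finset.sum_congr rfl
      intro y _
      by_cases hy : y ∈ A
      · simp only [hz, if_pos hy]
      · rw [hz]
        simp only [if_neg hy]
        by_cases hyk : y = k
        · simp [hyk, hu_k]
        · have hΩ0 : S⁻¹ x y = 0 := by
            by_contra hne
            have hxy : x ≠ y := by rintro rfl; exact hy hx
            exact hy (hclose x hx y hyk ((hCI x y hxy).mp hne))
          rw [hΩ0, zero_mul, zero_mul]
    rw [h1, hΩu, hw0]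
    have hxj : x ≠ j := by rintro rfl; exact hjA hx
    have hxk : x ≠ k := hx.1
    simp [Pi.single_eq_of_ne hxj, Pi.single_eq_of_ne hxk]
  have hquad : z ⬝ᵥ (S⁻¹ *ᵥ z) = 0 := by
    rw [dotProduct]
    apply Finset.sum_eq_zero
    intro x _
    by_cases hx : x ∈ A
    · rw [hΩz x hx, mul_zero]
    · rw [hz]; simp only [if_neg hx, zero_mul]
  have hz0 : z = 0 := by
    by_contra hne
    exact absurd hquad (posdef_apply hΩPD hne).ne'
  have hui : u i = 0 := by
    have := congrFun hz0 i
    rw [hz] at this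
    simpa [hiA] using this
  rw [hu_val] at hui
  linear_combination hui


lemma adj_ne (hT : T.IsTree) {S : Matrix V V ℝ} (hS : S.PosDef)
    (hCI : CondIndepStruct S T) {i j : V} (hadj : T.Adj i j) : S i j ≠ 0 := by
  intro h0
  classical
  have hij : i ≠ j := hadj.ne
  set Bi : Set V := {x | ∃ w : T.Walk x i, j ∉ w.support} with hBi
  set Bj : Set V := {x | ∃ w : T.Walk x j, i ∉ w.support} with hBj
  have hdisj : ∀ x, x ∈ Bi → x ∈ Bj → False := by
    rintro x ⟨w₁, hw₁⟩ ⟨w₂, hw₂⟩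
    obtain ⟨p, hp, _⟩ := hT.existsUnique_path x j
    by_cases hip : i ∈ p.support
    · exact hw₂ (sep_of_mem_path hT p hp hip w₂)
    · have hq : (p.concat hadj.symm).IsPath := by
        rw [Walk.isPath_def, Walk.support_concat,
          List.nodup_append]
        refine ⟨hp.support_nodup, List.nodup_singleton _, ?_⟩
        rintro a ha _ ha' rfl
        rw [List.mem_singleton] at ha'
        rw [ha'] at ha
        exact hip ha
      have hjmem : j ∈ (p.concat hadj.symm).support := by
        rw [Walk.support_concat, List.mem_append]
        exact Or.inl p.end_mem_support
      exact hw₁ (sep_of_mem_path hT _ hq hjmem w₁)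
  have hcover : ∀ x, x ∈ Bi ∨ x ∈ Bj := by
    intro x
    obtain ⟨p, hp, _⟩ := hT.existsUnique_path x i
    by_cases hjp : j ∈ p.support
    · right
      refine ⟨p.takeUntil j hjp, ?_⟩
      intro hi
      have hspec := p.take_spec hjp
      have hnodup : (((p.takeUntil j hjp).append (p.dropUntil j hjp)).support).Nodup := by
        rw [hspec]; exact hp.support_nodup
      rw [Walk.support_append, List.nodup_append] at hnodup
      have hi2 : i ∈ (p.dropUntil j hjp).support.tail := by
        have hend : i ∈ (p.dropUntil j hjp).support := Walk.end_mem_support _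
        rw [Walk.support_eq_cons (p.dropUntil j hjp), List.mem_cons] at hend
        rcases hend with h' | h'
        · exact absurd h' hij
        · exact h'
      exact hnodup.2.2 i hi i hi2 rfl
    · exact Or.inl ⟨p, hjp⟩
  have hiBi : i ∈ Bi := ⟨Walk.nil, by simp [hij.symm]⟩
  have hjBi : j ∉ Bi := fun h => hdisj j h ⟨Walk.nil, by simp [hij]⟩
  have hcol : ∀ x ∈ Bi, S x j = 0 := by
    intro x hx
    rcases eq_or_ne x i with rfl | hxi
    · exact h0
    · have hsep : Sep T i x j := by
        intro w
        by_contra hiw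
        exact hdisj x hx ⟨w, hiw⟩
      have he := sep_factor hS hCI (Ne.symm hxi) hij hsep
      rw [h0, mul_zero] at he
      rcases mul_eq_zero.mp he with h' | h'
      · exact h'
      · exact absurd h' (diag_pos hS i).ne'
  have hdet : IsUnit S.det := isUnit_iff_ne_zero.mpr hS.det_pos.ne'
  have hΩS : S⁻¹ * S = 1 := Matrix.nonsing_inv_mul S hdet
  have hrow : ∑ y, S⁻¹ i y * S y j = (0:ℝ) := by
    have h := congrFun (congrFun hΩS i) j
    rw [Matrix.mul_apply, Matrix.one_apply_ne hij] at h
    exact h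
  have hterm : ∀ y, S⁻¹ i y * S y j = if y = j then S⁻¹ i j * S j j else 0 := by
    intro y
    rcases eq_or_ne y j with rfl | hyj
    · rw [if_pos rfl]
    · rw [if_neg hyj]
      rcases hcover y with hy | hy
      · rw [hcol y hy, mul_zero]
      · have hyi : y ≠ i := by
          rintro rfl
          exact hdisj y hiBi hy
        have hΩ0 : S⁻¹ i y = 0 := by
          by_contra hne
          have hAdj : T.Adj i y := (hCI i y (Ne.symm hyi)).mp hne
          have : y ∈ Bi := ⟨Walk.cons hAdj.symm Walk.nil, by
            rw [Walk.support_cons, Walk.support_nil]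
            intro hmem
            rcases List.mem_cons.mp hmem with h' | h'
            · exact hyj h'.symm
            · rw [List.mem_singleton] at h'
              exact hij h'.symm⟩
          exact hdisj y this hy
        rw [hΩ0, zero_mul]
  rw [Finset.sum_congr rfl (fun y _ => hterm y)] at hrow
  rw [Finset.sum_ite_eq' Finset.univ j (fun _ => S⁻¹ i j * S j j)] at hrow
  simp only [Finset.mem_univ, if_true] at hrow
  rcases mul_eq_zero.mp hrow with h' | h'
  · exact ((hCI i j hij).mpr hadj) h'
  · exact absurd h' (diag_pos hS j).ne'

lemma offdiag_ne_aux (hT : T.IsTree) {S : Matrix V V ℝ} (hS : S.PosDef)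
    (hCI : CondIndepStruct S T) :
    ∀ {i j : V} (p : T.Walk i j), p.IsPath → i ≠ j → S i j ≠ 0 := by
  intro i j p
  induction p with
  | nil => intro _ h; exact absurd rfl h
  | @cons u x w h q ih =>
    intro hp huw
    have h1 : S u x ≠ 0 := adj_ne hT hS hCI h
    rcases eq_or_ne x w with rfl | hxw
    · exact h1
    · have h2 : S x w ≠ 0 := ih hp.of_cons hxw
      have hxu : x ≠ u := h.ne'
      have hsep : Sep T x u w := by
        refine sep_of_mem_path hT (Walk.cons h q) hp ?_
        rw [Walk.support_cons, List.mem_cons]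
        exact Or.inr q.start_mem_support
      have heq := sep_factor hS hCI hxu hxw hsep
      intro h0
      rw [h0, zero_mul] at heq
      exact (mul_ne_zero h1 h2) heq.symm

lemma offdiag_ne (hT : T.IsTree) {S : Matrix V V ℝ} (hS : S.PosDef)
    (hCI : CondIndepStruct S T) {i j : V} (hij : i ≠ j) : S i j ≠ 0 := by
  obtain ⟨p, hp, _⟩ := hT.existsUnique_path i j
  exact offdiag_ne_aux hT hS hCI p hp hij

lemma triple_lt (hT : T.IsTree) {S : Matrix V V ℝ} (hS : S.PosDef)
    (hCI : CondIndepStruct S T) {i j k : V} (hij : i ≠ j) (hki : k ≠ i) (hkj : k ≠ j)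
    (hns : ¬ Sep T k i j) : |S i k * S k j| < S k k * |S i j| := by
  obtain ⟨m, hmk, hm1, hm2, hstat⟩ := exists_meet hT hki hkj hns
  have habs : 0 < |S i j| := abs_pos.mpr (offdiag_ne hT hS hCI hij)
  have f1 : S k i * S m m = S k m * S m i := by
    rcases eq_or_ne m i with rfl | hmi
    · ring
    · exact sep_factor hS hCI hmk hmi hm1
  have f2 : S k j * S m m = S k m * S m j := by
    rcases eq_or_ne m j with rfl | hmj
    · ring
    · exact sep_factor hS hCI hmk hmj hm2
  have f3 : S i j * S m m = S m i * S m j := by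
    rcases hstat with rfl | rfl | ⟨hmi, hmj, hmsep⟩
    · ring
    · linear_combination S m m * symm_entry hS i m
    · have e := sep_factor hS hCI hmi hmj hmsep
      linear_combination e + S m j * symm_entry hS i m
  have key : (S k i * S k j) * S m m ^ 2 = S k m ^2 * (S i j * S m m) := by
    linear_combination (S k j * S m m) * f1 + (S k m * S m i) * f2 - (S k m)^2 * f3
  have hsm := diag_pos hS m
  have hsq : S k m ^2 < S k k * S m m := sq_lt hS (Ne.symm hmk)
  have habs_eq : |S k i * S k j| * S m m ^ 2 = S k m ^2 * |S i j| * S m m := by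
    have h1 : |(S k i * S k j) * S m m ^ 2| = |S k i * S k j| * S m m ^2 := by
      rw [abs_mul, abs_of_nonneg (sq_nonneg (S m m))]
    have h2 : |S k m ^2 * (S i j * S m m)| = S k m ^2 * |S i j| * S m m := by
      rw [abs_mul, abs_mul, abs_of_nonneg (sq_nonneg (S k m)), abs_of_nonneg hsm.le,
        mul_assoc]
    rw [← h1, key, h2]
  have hlt : S k m ^2 * |S i j| * S m m < (S k k * |S i j|) * S m m ^2 := by
    nlinarith [mul_lt_mul_of_pos_right hsq (mul_pos habs hsm)]
  have h3 : |S k i * S k j| * S m m ^2 < (S k k * |S i j|) * S m m ^2 := by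
    rw [habs_eq]; exact hlt
  have hfin : |S k i * S k j| < S k k * |S i j| :=
    lt_of_mul_lt_mul_right h3 (sq_nonneg (S m m))
  rw [symm_entry hS i k]
  exact hfin

lemma triple_le (hT : T.IsTree) {S : Matrix V V ℝ} (hS : S.PosDef)
    (hCI : CondIndepStruct S T) {i j k : V} (hij : i ≠ j) (hki : k ≠ i) (hkj : k ≠ j) :
    |S i k * S k j| ≤ S k k * |S i j| := by
  by_cases hsep : Sep T k i j
  · have e := sep_factor hS hCI hki hkj hsep
    rw [← e, abs_mul, abs_of_pos (diag_pos hS k)]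
    exact le_of_eq (mul_comm _ _)
  · exact (triple_lt hT hS hCI hij hki hkj hsep).le

lemma leaf_bound (hT : T.IsTree) {S : Matrix V V ℝ} (hS : S.PosDef)
    (hCI : CondIndepStruct S T) {a b : V} (hub : ∀ c, T.Adj a c → c = b)
    (hb : T.Adj a b) {i j : V} (hia : i ≠ a) (hja : j ≠ a) (hij : i ≠ j) :
    S b b * |S i a * S a j| ≤ S a b ^ 2 * |S i j| := by
  have hba : b ≠ a := hb.ne'
  have hbbpos := diag_pos hS b
  have hsymab : S b a = S a b := symm_entry hS b a
  rcases eq_or_ne b i with rfl | hbi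
  · -- b = i
    have hbj : b ≠ j := hij
    have hsepja : Sep T b j a := leaf_sep hub hja
    have e2 : S a j * S b b = S a b * S b j := sep_factor hS hCI hba hbj (sep_symm hsepja)
    have e2' : |S a j| * S b b = |S a b| * |S b j| := by
      have h := congrArg abs e2
      rwa [abs_mul, abs_mul, abs_of_pos hbbpos] at h
    have h1 : |S b a * S a j| = |S a b| * |S a j| := by
      rw [abs_mul, hsymab]
    calc S b b * |S b a * S a j| = |S a b| * (|S a j| * S b b) := by rw [h1]; ring
      _ = |S a b| * (|S a b| * |S b j|) := by rw [e2']
      _ = S a b ^ 2 * |S b j| := by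
          rw [← mul_assoc, abs_mul_abs_self]; ring
      _ ≤ S a b ^ 2 * |S b j| := le_refl _
  rcases eq_or_ne b j with rfl | hbj
  · -- b = j
    have hsepia : Sep T b i a := leaf_sep hub hia
    have e1 : S i a * S b b = S i b * S b a := sep_factor hS hCI hbi hba hsepia
    have e1' : |S i a| * S b b = |S i b| * |S a b| := by
      have h := congrArg abs e1
      rwa [abs_mul, abs_mul, abs_of_pos hbbpos, hsymab] at h
    calc S b b * |S i a * S a b| = |S a b| * (|S i a| * S b b) := by
          rw [abs_mul]; ring
      _ = |S a b| * (|S i b| * |S a b|) := by rw [e1']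
      _ = S a b ^ 2 * |S i b| := by
          rw [show |S a b| * (|S i b| * |S a b|) = |S a b| * |S a b| * |S i b| by ring,
            abs_mul_abs_self]; ring
      _ ≤ S a b ^ 2 * |S i b| := le_refl _
  · -- general case
    have hsepia : Sep T b i a := leaf_sep hub hia
    have hsepja : Sep T b j a := leaf_sep hub hja
    have e1 : S i a * S b b = S i b * S b a := sep_factor hS hCI hbi hba hsepia
    have e2 : S a j * S b b = S a b * S b j := sep_factor hS hCI hba hbj (sep_symm hsepja)
    have tri := triple_le hT hS hCI hij hbi hbj
    -- |S i b * S b j| ≤ S b b * |S i j|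
    have e1' : |S i a| * S b b = |S i b| * |S a b| := by
      have h := congrArg abs e1
      rwa [abs_mul, abs_mul, abs_of_pos hbbpos, hsymab] at h
    have e2' : |S a j| * S b b = |S a b| * |S b j| := by
      have h := congrArg abs e2
      rwa [abs_mul, abs_mul, abs_of_pos hbbpos] at h
    have htri' : |S i b| * |S b j| ≤ S b b * |S i j| := by
      rw [← abs_mul]; exact tri
    have h1 : |S i a * S a j| * (S b b * S b b) = S a b ^ 2 * (|S i b| * |S b j|) := by
      rw [abs_mul]
      have habs2 : |S a b| * |S a b| = S a b ^ 2 := by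
        rw [abs_mul_abs_self]; ring
      linear_combination (|S a j| * S b b) * e1' + (|S i b| * |S a b|) * e2' +
        (|S i b| * |S b j|) * habs2
    have h2 : (S b b * |S i a * S a j|) * S b b ≤ (S a b ^ 2 * |S i j|) * S b b := by
      nlinarith [mul_le_mul_of_nonneg_left htri' (sq_nonneg (S a b))]
    exact le_of_mul_le_mul_right h2 hbbpos

lemma dot_comm {S : Matrix V V ℝ} (hS : S.PosDef) (v w : V → ℝ) :
    w ⬝ᵥ (S *ᵥ v) = v ⬝ᵥ (S *ᵥ w) := by
  simp only [Matrix.mulVec, dotProduct, Finset.mul_sum]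
  rw [Finset.sum_comm]
  apply Finset.sum_congr rfl
  intro x _
  apply Finset.sum_congr rfl
  intro y _
  rw [symm_entry hS y x]
  ring

lemma inv_diag_bound {S : Matrix V V ℝ} (hS : S.PosDef) {a b : V} (hab : a ≠ b) :
    S a b ^ 2 ≤ (S a a - 1 / S⁻¹ a a) * S b b := by
  have hΩPD : (S⁻¹).PosDef := hS.inv
  have hΩaa := diag_pos hΩPD a
  have hdet : IsUnit S.det := isUnit_iff_ne_zero.mpr hS.det_pos.ne'
  have hSΩ : S * S⁻¹ = 1 := Matrix.mul_nonsing_inv S hdet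
  have key : ∀ v : V → ℝ, v a = 1 → 1 / S⁻¹ a a ≤ v ⬝ᵥ (S *ᵥ v) := by
    intro v hva
    set w : V → ℝ := S⁻¹ *ᵥ (Pi.single a 1) with hw
    have hSw : S *ᵥ w = Pi.single a 1 := by
      rw [hw, Matrix.mulVec_mulVec, hSΩ, Matrix.one_mulVec]
    have hvw : v ⬝ᵥ (S *ᵥ w) = 1 := by
      rw [hSw, dotProduct_single, hva, one_mul]
    have hww : w ⬝ᵥ (S *ᵥ w) = S⁻¹ a a := by
      rw [hSw, dotProduct_single, mul_one, hw]
      simp [Matrix.mulVec_single]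
    have hwv : w ⬝ᵥ (S *ᵥ v) = 1 := by
      rw [dot_comm hS v w, hvw]
    set t : ℝ := 1 / S⁻¹ a a with ht
    have hq := psd_apply hS (v - t • w)
    have hexp : (v - t • w) ⬝ᵥ (S *ᵥ (v - t • w)) =
        v ⬝ᵥ (S *ᵥ v) - t * (w ⬝ᵥ (S *ᵥ v)) - t * (v ⬝ᵥ (S *ᵥ w)) +
          t ^ 2 * (w ⬝ᵥ (S *ᵥ w)) := by
      simp only [Matrix.mulVec_sub, Matrix.mulVec_smul, dotProduct_sub, sub_dotProduct,
        dotProduct_smul, smul_dotProduct, smul_eq_mul]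
      ring
    rw [hexp, hvw, hwv, hww] at hq
    have hne0 : S⁻¹ a a ≠ 0 := hΩaa.ne'
    have ht2 : t ^ 2 * S⁻¹ a a = t := by
      rw [ht, one_div, sq, mul_assoc, inv_mul_cancel₀ hne0, mul_one]
    rw [ht2] at hq
    linarith
  set r : ℝ := S a b / S b b with hr
  set v : V → ℝ := (1:ℝ) • (Pi.single a (1:ℝ) : V → ℝ) + (-r) • (Pi.single b (1:ℝ) : V → ℝ)
    with hv
  have hva : v a = 1 := by
    simp [hv, Pi.single_eq_of_ne hab, Pi.single_eq_same]
  have hkey := key v hva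
  rw [hv, quad_expand S 1 (-r) hab] at hkey
  have hsab := symm_entry hS a b
  have hbb := diag_pos hS b
  have h2 : (1:ℝ)^2 * S a a + 1*(-r)* S a b + 1*(-r)* S b a + (-r)^2 * S b b =
      S a a - S a b ^ 2 / S b b := by
    rw [hr, ← hsab]
    field_simp
    ring
  rw [h2] at hkey
  have h4 : (S a a - S a b ^ 2 / S b b) * S b b = S a a * S b b - S a b ^ 2 := by
    field_simp
  have h5 := mul_le_mul_of_nonneg_right hkey hbb.le
  rw [h4] at h5
  nlinarith [h5]

end TreeCI

theorem stmt_2 {V : Type*} [Fintype V] [DecidableEq V]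
    (Tstar : SimpleGraph V) (hTree : Tstar.IsTree) (hcard : 3 ≤ Fintype.card V)
    (Sig : Matrix V V ℝ) (hPD : Sig.PosDef) (hCI : CondIndepStruct Sig Tstar)
    (Dstar : Matrix V V ℝ) (hDstar : IsDiagNonneg Dstar)
    (Sig' : Matrix V V ℝ) (hPD' : Sig'.PosDef)
    (D' : Matrix V V ℝ) (hD' : IsDiagNonneg D')
    (hsum : Sig' + D' = Sig + Dstar)
    (T' : SimpleGraph V) (hTree' : T'.IsTree) (hCI' : CondIndepStruct Sig' T')
    (hnoise : ∀ a : V, IsLeaf Tstar a → D' a a < 1 / Sig⁻¹ a a) :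
    T' = Tstar := by
  open TreeCI in
  -- off-diagonal entries agree
  have hoff : ∀ {i j : V}, i ≠ j → Sig' i j = Sig i j := by
    intro i j hij
    have h := congrFun (congrFun hsum i) j
    simp only [Matrix.add_apply] at h
    rw [hD'.1 i j hij, hDstar.1 i j hij, add_zero, add_zero] at h
    exact h
  have hdiag : ∀ a : V, Sig' a a = Sig a a + Dstar a a - D' a a := by
    intro a
    have h := congrFun (congrFun hsum a) a
    simp only [Matrix.add_apply] at h
    linarith
  -- Step A: leaves of Tstar are leaves of T'
  have hleaf : ∀ a, IsLeaf Tstar a → IsLeaf T' a := by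
    intro a hla
    by_contra hnl
    obtain ⟨b, hb, hub⟩ := hla
    obtain ⟨u, v, hu, hv, huv⟩ := TreeCI.exists_two_nbrs hTree' hcard hnl
    have hsep := TreeCI.sep_of_two_nbrs hTree' hu hv huv
    have hau : a ≠ u := hu.ne
    have hav : a ≠ v := hv.ne
    have e1 := TreeCI.sep_factor hPD' hCI' hau hav hsep
    -- e1 : Sig' u v * Sig' a a = Sig' u a * Sig' a v
    rw [hoff huv, hoff (Ne.symm hau), hoff hav] at e1
    have hbound := TreeCI.leaf_bound hTree hPD hCI hub hb (Ne.symm hau) (Ne.symm hav) huv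
    have hcs := TreeCI.inv_diag_bound hPD hb.ne
    have hnz := hnoise a ⟨b, hb, hub⟩
    have hD0 := hDstar.2 a
    have hS'aa := hdiag a
    have hgt : Sig a b ^ 2 < Sig' a a * Sig b b := by
      nlinarith [TreeCI.diag_pos hPD b]
    have habsuv : 0 < |Sig u v| := abs_pos.mpr (TreeCI.offdiag_ne hTree hPD hCI huv)
    have habs_e1 : |Sig u v| * Sig' a a = |Sig u a * Sig a v| := by
      have h := congrArg abs e1
      rwa [abs_mul, abs_of_pos (TreeCI.diag_pos hPD' a)] at h
    nlinarith [mul_lt_mul_of_pos_right hgt habsuv, TreeCI.diag_pos hPD b,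
      TreeCI.diag_pos hPD' a, hbound, habs_e1]
  -- Step B: internal vertices of Tstar are internal in T'
  have hinternal : ∀ k, ¬ IsLeaf Tstar k → ¬ IsLeaf T' k := by
    intro k hkI hk'
    obtain ⟨c, hc, huc⟩ := hk'
    have hck : c ≠ k := hc.ne'
    have hcnl' : ¬ IsLeaf T' c := TreeCI.leaf_nbr_not_leaf hTree' hcard ⟨c, hc, huc⟩ hc
    have hcnl : ¬ IsLeaf Tstar c := fun h => hcnl' (hleaf c h)
    obtain ⟨v, hv, hvsep, hvc⟩ := TreeCI.exists_nbr_sep hTree hcard hkI hck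
    obtain ⟨w, hw, hwsep, hwk⟩ := TreeCI.exists_nbr_sep hTree hcard hcnl hc.ne
    have hkv : k ≠ v := hv.ne
    have hcw : c ≠ w := hw.ne
    have e1 := TreeCI.sep_factor hPD hCI hkv hc.ne hvsep
    -- e1 : Sig v c * Sig k k = Sig v k * Sig k c
    have e2 := TreeCI.sep_factor hPD hCI hcw hck hwsep
    -- e2 : Sig w k * Sig c c = Sig w c * Sig c k
    have s1 : TreeCI.Sep T' c v k := TreeCI.leaf_sep huc (Ne.symm hkv)
    have s2 : TreeCI.Sep T' c w k := TreeCI.leaf_sep huc hwk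
    have e3 := TreeCI.sep_factor hPD' hCI' (Ne.symm hvc) hck s1
    -- e3 : Sig' v k * Sig' c c = Sig' v c * Sig' c k
    have e4 := TreeCI.sep_factor hPD' hCI' hcw hck s2
    rw [hoff (Ne.symm hkv), hoff hvc, hoff hck] at e3
    rw [hoff hwk, hoff (Ne.symm hcw), hoff hck] at e4
    have hvk0 : Sig v k ≠ 0 := TreeCI.offdiag_ne hTree hPD hCI (Ne.symm hkv)
    have hwc0 : Sig w c ≠ 0 := TreeCI.offdiag_ne hTree hPD hCI (Ne.symm hcw)
    have hsq := TreeCI.sq_lt hPD hck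
    -- hsq : Sig c k ^ 2 < Sig c c * Sig k k
    have h5 : (Sig v k * Sig w c) * Sig' c c = (Sig w k * Sig v c) * Sig' c c := by
      linear_combination Sig w c * e3 - Sig v c * e4
    have hstar : Sig v k * Sig w c = Sig w k * Sig v c :=
      mul_right_cancel₀ (TreeCI.diag_pos hPD' c).ne' h5
    have hsymkc := TreeCI.symm_entry hPD k c
    have h7 : (Sig v k * Sig w c) * (Sig c c * Sig k k) =
        (Sig v k * Sig w c) * (Sig c k ^ 2) := by
      linear_combination (Sig w k * Sig c c) * e1 + (Sig v k * Sig k c) * e2 +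
        (Sig k k * Sig c c) * hstar + (Sig v k * Sig w c * Sig c k) * hsymkc
    have hfinal : Sig c c * Sig k k = Sig c k ^ 2 :=
      mul_left_cancel₀ (mul_ne_zero hvk0 hwc0) h7
    rw [← hfinal] at hsq
    exact lt_irrefl _ hsq
  -- Step C: diagonal equality at internal vertices
  have hsig : ∀ k, ¬ IsLeaf Tstar k → Sig k k = Sig' k k := by
    intro k hkI
    have hkI' := hinternal k hkI
    obtain ⟨u, v, hu, hv, huv⟩ := TreeCI.exists_two_nbrs hTree hcard hkI
    have e := TreeCI.sep_factor hPD hCI hu.ne hv.ne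
      (TreeCI.sep_of_two_nbrs hTree hu hv huv)
    -- e : Sig u v * Sig k k = Sig u k * Sig k v
    have tl := TreeCI.triple_le hTree' hPD' hCI' huv hu.ne hv.ne
    rw [hoff (Ne.symm hu.ne), hoff hv.ne, hoff huv] at tl
    -- tl : |Sig u k * Sig k v| ≤ Sig' k k * |Sig u v|
    have habs : 0 < |Sig u v| := abs_pos.mpr (TreeCI.offdiag_ne hTree hPD hCI huv)
    have h1 : |Sig u v| * Sig k k = |Sig u k * Sig k v| := by
      have h := congrArg abs e
      rwa [abs_mul, abs_of_pos (TreeCI.diag_pos hPD k)] at h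
    have hle1 : Sig k k ≤ Sig' k k := by nlinarith [h1, tl, habs]
    obtain ⟨u', v', hu', hv', huv'⟩ := TreeCI.exists_two_nbrs hTree' hcard hkI'
    have e' := TreeCI.sep_factor hPD' hCI' hu'.ne hv'.ne
      (TreeCI.sep_of_two_nbrs hTree' hu' hv' huv')
    rw [hoff huv', hoff (Ne.symm hu'.ne), hoff hv'.ne] at e'
    -- e' : Sig u' v' * Sig' k k = Sig u' k * Sig k v'
    have tl' := TreeCI.triple_le hTree hPD hCI huv' hu'.ne hv'.ne
    have habs' : 0 < |Sig u' v'| := abs_pos.mpr (TreeCI.offdiag_ne hTree hPD hCI huv')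
    have h1' : |Sig u' v'| * Sig' k k = |Sig u' k * Sig k v'| := by
      have h := congrArg abs e'
      rwa [abs_mul, abs_of_pos (TreeCI.diag_pos hPD' k)] at h
    have hle2 : Sig' k k ≤ Sig k k := by nlinarith [h1', tl', habs']
    linarith
  -- final: adjacency coincides
  ext i j
  constructor
  · intro hij'
    by_contra hna
    have hijne : i ≠ j := hij'.ne
    obtain ⟨k, hki, hkj, hsep⟩ := TreeCI.exists_sep_of_not_adj hTree hijne hna
    have hkI : ¬ IsLeaf Tstar k := fun hl => TreeCI.not_sep_of_leaf hTree hl hki hkj hsep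
    have hσ := hsig k hkI
    have e := TreeCI.sep_factor hPD hCI hki hkj hsep
    -- e : Sig i j * Sig k k = Sig i k * Sig k j
    have hns' : ¬ TreeCI.Sep T' k i j := TreeCI.not_sep_of_adj hij' hki hkj
    have strict := TreeCI.triple_lt hTree' hPD' hCI' hijne hki hkj hns'
    rw [hoff (Ne.symm hki), hoff hkj, hoff hijne] at strict
    -- strict : |Sig i k * Sig k j| < Sig' k k * |Sig i j|
    have habs : 0 < |Sig i j| := abs_pos.mpr (TreeCI.offdiag_ne hTree hPD hCI hijne)
    have h1 : |Sig i j| * Sig k k = |Sig i k * Sig k j| := by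
      have h := congrArg abs e
      rwa [abs_mul, abs_of_pos (TreeCI.diag_pos hPD k)] at h
    rw [← hσ] at strict
    nlinarith [h1, strict]
  · intro hij
    by_contra hna
    have hijne : i ≠ j := hij.ne
    obtain ⟨k, hki, hkj, hsep'⟩ := TreeCI.exists_sep_of_not_adj hTree' hijne hna
    have hkI' : ¬ IsLeaf T' k := fun hl => TreeCI.not_sep_of_leaf hTree' hl hki hkj hsep'
    have hkI : ¬ IsLeaf Tstar k := fun hl => hkI' (hleaf k hl)
    have hσ := hsig k hkI
    have e' := TreeCI.sep_factor hPD' hCI' hki hkj hsep'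
    rw [hoff hijne, hoff (Ne.symm hki), hoff hkj] at e'
    -- e' : Sig i j * Sig' k k = Sig i k * Sig k j
    have hns : ¬ TreeCI.Sep Tstar k i j := TreeCI.not_sep_of_adj hij hki hkj
    have strict := TreeCI.triple_lt hTree hPD hCI hijne hki hkj hns
    -- strict : |Sig i k * Sig k j| < Sig k k * |Sig i j|
    have habs : 0 < |Sig i j| := abs_pos.mpr (TreeCI.offdiag_ne hTree hPD hCI hijne)
    have h1 : |Sig i j| * Sig' k k = |Sig i k * Sig k j| := by
      have h := congrArg abs e'
      rwa [abs_mul, abs_of_pos (TreeCI.diag_pos hPD' k)] at h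
    rw [hσ] at strict
    nlinarith [h1, strict]
end

section
/- Let T* be a tree on a finite vertex set V with at least 3 vertices, let Σ* be a positive definite real matrix indexed by V whose conditional independence structure is given by T*, write Ω* = (Σ*)⁻¹, and suppose that for every leaf a of T* with unique neighbor b one has Ω*_{aa} > |Ω*_{ab}|. Let D* be a diagonal matrix with nonnegative entries and Σ^o = Σ* + D*. Suppose Σ' is positive definite, D' is a diagonal matrix with nonnegative entries, Σ' + D' = Σ^o, the conditional independence structure of Σ' is given by a tree T', and Ω' = (Σ')⁻¹ satisfies Ω'_{aa} > |Ω'_{ab}| for every leaf a of T' with unique neighbor b. Then T' = T*, i.e., T' and T* have exactly the same edges. -/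
set_option linter.unusedSectionVars false
set_option linter.unusedVariables false
set_option maxHeartbeats 1000000


open Matrix

namespace StmtAux
open SimpleGraph Walk

variable {V : Type*} [Fintype V] [DecidableEq V] {T : SimpleGraph V}

noncomputable def pt (hT : T.IsTree) (u v : V) : T.Walk u v :=
  (hT.existsUnique_path u v).exists.choose

lemma pt_isPath (hT : T.IsTree) (u v : V) : (pt hT u v).IsPath :=
  (hT.existsUnique_path u v).exists.choose_spec

lemma pt_unique (hT : T.IsTree) {u v : V} {p : T.Walk u v} (hp : p.IsPath) :
    p = pt hT u v :=
  ((hT.existsUnique_path u v).unique hp (pt_isPath hT u v))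

lemma pt_self (hT : T.IsTree) (u : V) : pt hT u u = Walk.nil :=
  (pt_unique hT IsPath.nil).symm

lemma pt_adj (hT : T.IsTree) {u v : V} (h : T.Adj u v) :
    pt hT u v = Walk.cons h Walk.nil := by
  refine (pt_unique hT ?_).symm
  rw [Walk.cons_isPath_iff]
  exact ⟨IsPath.nil, by simp [h.ne]⟩

lemma pt_rev (hT : T.IsTree) (u v : V) : pt hT v u = (pt hT u v).reverse :=
  (pt_unique hT ((pt_isPath hT u v).reverse)).symm

lemma mem_pt_symm (hT : T.IsTree) {u v w : V} (h : w ∈ (pt hT u v).support) :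
    w ∈ (pt hT v u).support := by
  rw [pt_rev hT u v, Walk.support_reverse, List.mem_reverse]; exact h

/-- Betweenness: `k` lies strictly between `i` and `j` in the tree. -/
def Btw (hT : T.IsTree) (i k j : V) : Prop :=
  k ∈ (pt hT i j).support ∧ k ≠ i ∧ k ≠ j

lemma Btw.symm {hT : T.IsTree} {i k j : V} (h : Btw hT i k j) : Btw hT j k i :=
  ⟨mem_pt_symm hT h.1, h.2.2, h.2.1⟩

/-- avoid-walk lemma -/
lemma avoid (hT : T.IsTree) {k p q s : V} (h1 : k ∉ (pt hT p q).support)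
    (h2 : k ∉ (pt hT q s).support) : k ∉ (pt hT p s).support := by
  intro hk
  have := pt_unique hT (Walk.bypass_isPath ((pt hT p q).append (pt hT q s)))
  rw [← this] at hk
  have hb := Walk.support_bypass_subset ((pt hT p q).append (pt hT q s)) hk
  rw [Walk.support_append] at hb
  rcases List.mem_append.1 hb with h | h
  · exact h1 h
  · exact h2 (List.mem_of_mem_tail h)

/-- two neighbors of a vertex: the vertex is between them -/
lemma btw_of_adj (hT : T.IsTree) {a u v : V} (h1 : T.Adj a u) (h2 : T.Adj a v)
    (huv : u ≠ v) : Btw hT u a v := by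
  have hw : (Walk.cons h1.symm (Walk.cons h2 Walk.nil) : T.Walk u v).IsPath := by
    rw [Walk.cons_isPath_iff, Walk.cons_isPath_iff]
    refine ⟨⟨IsPath.nil, by simp [h2.ne]⟩, ?_⟩
    simp only [Walk.support_cons, Walk.support_nil, List.mem_cons, List.not_mem_nil]
    push_neg
    exact ⟨h1.ne', huv, by simp⟩
  refine ⟨?_, h1.ne, h2.ne⟩
  rw [← pt_unique hT hw]
  simp

/-- if `u` is adjacent to `x` and lies on the path from `x` to `y`,
then the path starts with the edge `x-u`. -/
lemma path_start (hT : T.IsTree) {x y u : V} (hadj : T.Adj x u)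
    (hu : u ∈ (pt hT x y).support) :
    pt hT x y = Walk.cons hadj ((pt hT x y).dropUntil u hu) := by
  have h1 : ((pt hT x y).takeUntil u hu) = Walk.cons hadj Walk.nil := by
    rw [pt_unique hT ((pt_isPath hT x y).takeUntil hu)]
    exact (pt_unique hT (by rw [Walk.cons_isPath_iff]; exact ⟨IsPath.nil, by simp [hadj.ne]⟩)).symm
  conv_lhs => rw [← Walk.take_spec (pt hT x y) hu]
  rw [h1]
  rfl

lemma path_second_unique (hT : T.IsTree) {x y u w : V} (hadj : T.Adj x u)
    (hu : u ∈ (pt hT x y).support) (hadj2 : T.Adj x w)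
    (hw : w ∈ (pt hT x y).support) : u = w := by
  have e1 := path_start hT hadj hu
  have e2 := path_start hT hadj2 hw
  have g1 : (pt hT x y).getVert 1 = u := by rw [e1]; simp
  have g2 : (pt hT x y).getVert 1 = w := by rw [e2]; simp
  rw [g1] at g2; exact g2

/-- component membership: `u` is on the same side as `i` w.r.t. the cut set `K`. -/
def inA (hT : T.IsTree) (K : Finset V) (i u : V) : Prop :=
  u ∉ K ∧ ∀ k ∈ K, k ∉ (pt hT u i).support

lemma inA_base (hT : T.IsTree) {K : Finset V} {i : V} (hi : i ∉ K) : inA hT K i i := by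
  refine ⟨hi, fun k hk => ?_⟩
  rw [pt_self hT]
  simp only [Walk.support_nil, List.mem_cons, List.not_mem_nil, or_false]
  rintro rfl; exact hi hk

lemma inA_adj (hT : T.IsTree) {K : Finset V} {i u v : V} (hu : inA hT K i u)
    (hadj : T.Adj u v) (hv : v ∉ K) : inA hT K i v := by
  refine ⟨hv, fun k hk => ?_⟩
  by_cases hmem : v ∈ (pt hT u i).support
  · have : pt hT v i = (pt hT u i).dropUntil v hmem :=
      (pt_unique hT ((pt_isPath hT u i).dropUntil hmem)).symm
    rw [this]
    intro hcon
    exact hu.2 k hk (Walk.support_dropUntil_subset _ hmem hcon)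
  · have hp : (Walk.cons hadj.symm (pt hT u i) : T.Walk v i).IsPath := by
      rw [Walk.cons_isPath_iff]; exact ⟨pt_isPath hT u i, hmem⟩
    rw [← pt_unique hT hp]
    simp only [Walk.support_cons, List.mem_cons]
    rintro (rfl | hcon)
    · exact hv hk
    · exact hu.2 k hk hcon

lemma inA_of_adj_base (hT : T.IsTree) {K : Finset V} {i v : V} (hadj : T.Adj v i)
    (hv : v ∉ K) (hK : ∀ k ∈ K, k ≠ v ∧ k ≠ i) : inA hT K i v := by
  refine ⟨hv, fun k hk => ?_⟩
  rw [pt_adj hT hadj]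
  simp only [Walk.support_cons, Walk.support_nil, List.mem_cons, List.not_mem_nil, or_false]
  push_neg
  exact (hK k hk)

/-- no cycles: if `i ~ j`, `u ~ j`, `u ≠ i` then `j` is on the path from `u` to `i`. -/
lemma adj_adj_mem (hT : T.IsTree) {i j u : V} (hij : T.Adj i j) (huj : T.Adj u j)
    (hune : u ≠ i) (hj : j ∉ (pt hT u i).support) : False := by
  set q : T.Walk u j := (pt hT u i).append (Walk.cons hij Walk.nil) with hq
  have hqsupp : q.support = (pt hT u i).support ++ [j] := by
    rw [hq, Walk.support_append]; simp
  have hqpath : q.IsPath := by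
    rw [Walk.isPath_def, hqsupp]
    refine List.Nodup.append ((pt_isPath hT u i).support_nodup) (List.nodup_singleton j) ?_
    intro x hx hx'
    rw [List.mem_singleton] at hx'
    subst hx'
    exact hj hx
  have hcyc : (Walk.cons huj.symm q).IsCycle := by
    rw [Walk.cons_isCycle_iff]
    refine ⟨hqpath, ?_⟩
    rw [hq]
    rw [Walk.edges_append]
    simp only [Walk.edges_cons, Walk.edges_nil, List.mem_append, List.mem_cons,
      List.not_mem_nil, or_false]
    push_neg
    constructor
    · intro hmem
      exact hj (Walk.fst_mem_support_of_mem_edges _ hmem)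
    · intro hcon
      rw [Sym2.eq_iff] at hcon
      rcases hcon with ⟨h1, _⟩ | ⟨_, h2⟩
      · exact hij.ne h1.symm
      · exact hune h2
  exact hT.IsAcyclic _ hcyc

/-- the path from a leaf `a` starts with its unique neighbor `b`. -/
lemma leaf_btw (hT : T.IsTree) {a b x : V} (hab : T.Adj a b)
    (huniq : ∀ c, T.Adj a c → c = b) (hxa : x ≠ a) (hxb : x ≠ b) :
    Btw hT a b x := by
  obtain ⟨w, hadj, p', hp⟩ := Walk.exists_eq_cons_of_ne hxa.symm (pt hT a x)
  have hwb : w = b := huniq w hadj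
  subst hwb
  refine ⟨?_, hab.ne', hxb.symm⟩
  rw [hp]
  simp

lemma two_nbrs_of_not_leaf (hT : T.IsTree) {a : V} (h1 : 1 < Fintype.card V)
    (hnl : ¬ IsLeaf T a) : ∃ u v, T.Adj a u ∧ T.Adj a v ∧ u ≠ v := by
  obtain ⟨z, hz⟩ := Fintype.exists_ne_of_one_lt_card h1 a
  obtain ⟨w, hadj, p', hp⟩ := Walk.exists_eq_cons_of_ne (Ne.symm hz) (pt hT a z)
  by_contra hcon
  push_neg at hcon
  exact hnl ⟨w, hadj, fun c hc => by
    by_contra hne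
    exact hne (hcon c w hc hadj)⟩

lemma some_nbr (hT : T.IsTree) {a : V} (h1 : 1 < Fintype.card V) :
    ∃ u, T.Adj a u := by
  obtain ⟨z, hz⟩ := Fintype.exists_ne_of_one_lt_card h1 a
  obtain ⟨w, hadj, p', hp⟩ := Walk.exists_eq_cons_of_ne (Ne.symm hz) (pt hT a z)
  exact ⟨w, hadj⟩

end StmtAux


namespace StmtAux2

variable {V : Type*} [Fintype V] [DecidableEq V]

lemma sum_two {i j : V} (hij : i ≠ j) (f : V → ℝ) (h : ∀ u, u ≠ i → u ≠ j → f u = 0) :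
    ∑ u, f u = f i + f j := by
  rw [← Finset.sum_pair hij]
  refine (Finset.sum_subset (Finset.subset_univ _) ?_).symm
  intro x _ hx
  simp only [Finset.mem_insert, Finset.mem_singleton] at hx
  push_neg at hx
  exact h x hx.1 hx.2

lemma quad_apply (M : Matrix V V ℝ) (x : V → ℝ) :
    x ⬝ᵥ (M *ᵥ x) = ∑ u, ∑ v, x u * M u v * x v := by
  simp only [dotProduct, mulVec, dotProduct, Finset.mul_sum]
  exact Finset.sum_congr rfl fun u _ => Finset.sum_congr rfl fun v _ => by ring

lemma diag_pos {M : Matrix V V ℝ} (hM : M.PosDef) (i : V) : 0 < M i i := by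
  have hx : (Pi.single i 1 : V → ℝ) ≠ 0 := by
    intro h
    have := congrFun h i
    simp at this
  have := hM.dotProduct_mulVec_pos hx
  rw [star_trivial, quad_apply] at this
  have e : ∑ u, ∑ v, (Pi.single i 1 : V → ℝ) u * M u v * (Pi.single i 1 : V → ℝ) v
      = M i i := by
    have inner : ∀ u, ∑ v, (Pi.single i 1 : V → ℝ) u * M u v * (Pi.single i 1 : V → ℝ) v
        = (Pi.single i 1 : V → ℝ) u * M u i := by
      intro u
      rw [Finset.sum_eq_single i]
      · simp
      · intro b _ hb
        simp [Pi.single_apply, hb]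
      · simp
    rw [Finset.sum_congr rfl fun u _ => inner u, Finset.sum_eq_single i]
    · simp
    · intro b _ hb
      simp [Pi.single_apply, hb]
    · simp
  rw [e] at this
  exact this

lemma sq_lt {M : Matrix V V ℝ} (hM : M.PosDef) {i j : V} (hij : i ≠ j) :
    M i j ^ 2 < M i i * M j j := by
  have hsym : M j i = M i j := by
    have := congrFun (congrFun hM.1 j) i
    simpa [Matrix.conjTranspose_apply] using this.symm
  set x : V → ℝ := fun u => if u = i then M j j else if u = j then -(M i j) else 0 with hx
  have hxne : x ≠ 0 := by
    intro h
    have := congrFun h i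
    simp only [hx, if_pos rfl, Pi.zero_apply] at this
    exact (diag_pos hM j).ne' this
  have hq := hM.dotProduct_mulVec_pos hxne
  rw [star_trivial, quad_apply] at hq
  have inner : ∀ u, ∑ v, x u * M u v * x v = x u * M u i * x i + x u * M u j * x j := by
    intro u
    refine sum_two hij _ fun v hvi hvj => ?_
    simp [hx, hvi, hvj]
  have outer : ∑ u, ∑ v, x u * M u v * x v
      = (x i * M i i * x i + x i * M i j * x j) + (x j * M j i * x i + x j * M j j * x j) := by
    rw [Finset.sum_congr rfl fun u _ => inner u]
    exact sum_two hij _ fun u hui huj => by simp [hx, hui, huj]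
  have exi : x i = M j j := by simp [hx]
  have exj : x j = -(M i j) := by simp [hx, Ne.symm hij]
  rw [outer, exi, exj, hsym] at hq
  have hjj := diag_pos hM j
  nlinarith [hq, hjj]

/-- The energy lemma: a vector that is harmonic on a region `A` whose boundary
couplings vanish, vanishes on `A`. -/
lemma energy {Om : Matrix V V ℝ} (hOm : Om.PosDef) (A : Finset V) (g : V → ℝ)
    (h1 : ∀ u ∈ A, Om.mulVec g u = 0)
    (h2 : ∀ u ∈ A, ∀ v, v ∉ A → g u * Om u v * g v = 0) :
    ∀ u ∈ A, g u = 0 := by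
  set w : V → ℝ := fun u => if u ∈ A then g u else 0 with hw
  have hQ : w ⬝ᵥ (Om *ᵥ w) = 0 := by
    rw [quad_apply]
    rw [Finset.sum_eq_zero]
    intro u _
    by_cases hu : u ∈ A
    · have : ∀ v, w u * Om u v * w v = g u * Om u v * g v := by
        intro v
        by_cases hv : v ∈ A
        · simp [hw, hu, hv]
        · simp only [hw, hu, if_pos, if_neg hv]
          rw [mul_zero, h2 u hu v hv]
      rw [Finset.sum_congr rfl fun v _ => this v]
      have : ∑ v, g u * Om u v * g v = g u * (Om.mulVec g u) := by
        rw [mulVec, dotProduct, Finset.mul_sum]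
        exact Finset.sum_congr rfl fun v _ => by ring
      rw [this, h1 u hu, mul_zero]
    · exact Finset.sum_eq_zero fun v _ => by simp [hw, hu]
  by_contra hcon
  push_neg at hcon
  obtain ⟨u, hu, hgu⟩ := hcon
  have hwne : w ≠ 0 := by
    intro h
    have := congrFun h u
    simp only [hw, if_pos hu, Pi.zero_apply] at this
    exact hgu this
  have := hOm.dotProduct_mulVec_pos hwne
  rw [star_trivial, hQ] at this
  exact lt_irrefl 0 this

lemma mulVec_combo3 (M N : Matrix V V ℝ) (j x k : V) (c d e : ℝ) :
    M.mulVec (fun v => N v j * c - N v x * d - N v k * e)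
      = fun u => (M * N) u j * c - (M * N) u x * d - (M * N) u k * e := by
  funext u
  simp only [mulVec, dotProduct, Matrix.mul_apply]
  have e1 : ∑ v, M u v * (N v j * c - N v x * d - N v k * e)
      = ∑ v, (M u v * N v j * c - (M u v * N v x * d + M u v * N v k * e)) :=
    Finset.sum_congr rfl fun v _ => by ring
  rw [e1, Finset.sum_sub_distrib, Finset.sum_add_distrib, ← Finset.sum_mul, ← Finset.sum_mul,
    ← Finset.sum_mul]
  ring

lemma mulVec_combo2 (M N : Matrix V V ℝ) (j k : V) (c d : ℝ) :
    M.mulVec (fun v => N v j * c - N v k * d)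
      = fun u => (M * N) u j * c - (M * N) u k * d := by
  funext u
  simp only [mulVec, dotProduct, Matrix.mul_apply]
  have e1 : ∑ v, M u v * (N v j * c - N v k * d)
      = ∑ v, (M u v * N v j * c - M u v * N v k * d) :=
    Finset.sum_congr rfl fun v _ => by ring
  rw [e1, Finset.sum_sub_distrib, ← Finset.sum_mul, ← Finset.sum_mul]

lemma mulVec_col (M N : Matrix V V ℝ) (j : V) :
    M.mulVec (fun v => N v j) = fun u => (M * N) u j := by
  funext u
  simp only [mulVec, dotProduct, Matrix.mul_apply]

end StmtAux2


namespace StmtAux3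
open SimpleGraph Walk StmtAux StmtAux2

variable {V : Type*} [Fintype V] [DecidableEq V] {T : SimpleGraph V} {S : Matrix V V ℝ}

lemma inv_pd (hS : S.PosDef) : (S⁻¹).PosDef := hS.inv

lemma mul_inv_self (hS : S.PosDef) : S⁻¹ * S = 1 :=
  Matrix.nonsing_inv_mul S (isUnit_iff_ne_zero.mpr hS.det_pos.ne')

lemma ssym (hS : S.PosDef) (i j : V) : S i j = S j i := by
  have := congrFun (congrFun hS.1 i) j
  simpa [Matrix.conjTranspose_apply] using this.symm

lemma osym (hS : S.PosDef) (i j : V) : S⁻¹ i j = S⁻¹ j i := by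
  have := congrFun (congrFun (inv_pd hS).1 i) j
  simpa [Matrix.conjTranspose_apply] using this.symm

lemma om_eq_zero (hCI : CondIndepStruct S T) {i j : V} (hij : i ≠ j)
    (hna : ¬T.Adj i j) : S⁻¹ i j = 0 := by
  by_contra h
  exact hna ((hCI i j hij).1 h)

theorem prod_btw (hT : T.IsTree) (hS : S.PosDef) (hCI : CondIndepStruct S T)
    {i k j : V} (hbtw : Btw hT i k j) : S i j * S k k = S i k * S k j := by
  classical
  obtain ⟨hmem, hki, hkj⟩ := hbtw
  set g := fun u => S u j * S k k - S u k * S k j with hgdef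
  have hg : S⁻¹.mulVec g = fun u => (1 : Matrix V V ℝ) u j * S k k - (1 : Matrix V V ℝ) u k * S k j := by
    rw [hgdef, mulVec_combo2 S⁻¹ S j k (S k k) (S k j), mul_inv_self hS]
  set A := Finset.univ.filter (fun u => inA hT {k} i u) with hA
  have hmemA : ∀ u, u ∈ A ↔ inA hT {k} i u := by
    intro u; rw [hA, Finset.mem_filter]; simp
  have h1 : ∀ u ∈ A, S⁻¹.mulVec g u = 0 := by
    intro u hu
    rw [hmemA] at hu
    have huk : u ≠ k := by
      intro h; exact hu.1 (by simp [h])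
    have huj : u ≠ j := by
      rintro rfl
      exact hu.2 k (by simp) (mem_pt_symm hT hmem)
    rw [hg]
    simp [Matrix.one_apply, huj, huk]
  have h2 : ∀ u ∈ A, ∀ v, v ∉ A → g u * S⁻¹ u v * g v = 0 := by
    intro u hu v hv
    rw [hmemA] at hu
    by_cases hvk : v = k
    · have : g v = 0 := by rw [hgdef]; subst hvk; ring
      rw [this, mul_zero]
    · have hne : u ≠ v := by rintro rfl; exact hv ((hmemA u).2 hu)
      have : ¬T.Adj u v := by
        intro hadj
        exact hv ((hmemA v).2 (inA_adj hT hu hadj (by simp [hvk])))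
      rw [om_eq_zero hCI hne this, mul_zero, zero_mul]
  have hiA : i ∈ A := (hmemA i).2 (inA_base hT (by simp [Ne.symm hki]))
  have := energy (inv_pd hS) A g h1 h2 i hiA
  rw [hgdef] at this
  simp only at this
  linarith

theorem ne_of_adj (hT : T.IsTree) (hS : S.PosDef) (hCI : CondIndepStruct S T)
    {i j : V} (hadj : T.Adj i j) : S i j ≠ 0 := by
  classical
  intro h0
  set g := fun v : V => S v j with hgdef
  have hg : S⁻¹.mulVec g = fun u => (1 : Matrix V V ℝ) u j := by
    rw [hgdef, mulVec_col S⁻¹ S j, mul_inv_self hS]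
  set A := Finset.univ.filter (fun u => inA hT {j} i u) with hA
  have hmemA : ∀ u, u ∈ A ↔ inA hT {j} i u := by
    intro u; rw [hA, Finset.mem_filter]; simp
  have hiA : i ∈ A := (hmemA i).2 (inA_base hT (by simp [hadj.ne]))
  have h1 : ∀ u ∈ A, S⁻¹.mulVec g u = 0 := by
    intro u hu
    rw [hmemA] at hu
    have huj : u ≠ j := by intro h; exact hu.1 (by simp [h])
    rw [hg]
    simp [Matrix.one_apply, huj]
  have h2 : ∀ u ∈ A, ∀ v, v ∉ A → g u * S⁻¹ u v * g v = 0 := by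
    intro u hu v hv
    rw [hmemA] at hu
    by_cases hvj : v = j
    · by_cases hui : u = i
      · have : g u = 0 := by rw [hgdef, hui]; exact h0
        rw [this, zero_mul, zero_mul]
      · have huj : u ≠ j := by intro h; exact hu.1 (by simp [h])
        have : ¬T.Adj u v := by
          rw [hvj]
          intro hadj2
          exact adj_adj_mem hT hadj hadj2 hui (hu.2 j (by simp))
        have huv : u ≠ v := by rw [hvj]; exact huj
        rw [om_eq_zero hCI huv this, mul_zero, zero_mul]
    · have hne : u ≠ v := by rintro rfl; exact hv ((hmemA u).2 hu)
      have : ¬T.Adj u v := by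
        intro hadj2
        exact hv ((hmemA v).2 (inA_adj hT hu hadj2 (by simp [hvj])))
      rw [om_eq_zero hCI hne this, mul_zero, zero_mul]
  have hvanish := energy (inv_pd hS) A g h1 h2
  have hone := congrFun hg i
  simp only [Matrix.one_apply, if_neg hadj.ne] at hone
  rw [mulVec, dotProduct] at hone
  rw [Finset.sum_eq_single j] at hone
  · have hSjj := diag_pos hS j
    have : S⁻¹ i j = 0 := by
      rcases mul_eq_zero.1 hone with h | h
      · exact h
      · exact absurd h hSjj.ne'
    exact ((hCI i j hadj.ne).2 hadj) this
  · intro v _ hvj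
    by_cases hvA : v ∈ A
    · rw [hvanish v hvA, mul_zero]
    · by_cases hvi : v = i
      · subst hvi; rw [hvanish v hiA, mul_zero]
      · have : ¬T.Adj i v := by
          intro hadj2
          refine hvA ((hmemA v).2 ?_)
          refine ⟨by simp [hvj], fun m hm => ?_⟩
          simp only [Finset.mem_singleton] at hm
          subst hm
          rw [pt_adj hT hadj2.symm]
          simp only [Walk.support_cons, Walk.support_nil, List.mem_cons, List.not_mem_nil,
            or_false]
          push_neg
          exact ⟨Ne.symm hvj, Ne.symm hadj.ne⟩
        rw [om_eq_zero hCI (Ne.symm hvi) this, zero_mul]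
  · intro h; exact absurd (Finset.mem_univ j) h

theorem offdiag_ne (hT : T.IsTree) (hS : S.PosDef) (hCI : CondIndepStruct S T)
    {i j : V} (hij : i ≠ j) : S i j ≠ 0 := by
  classical
  suffices H : ∀ n i j, i ≠ j → (pt hT i j).length = n → S i j ≠ 0 from
    H (pt hT i j).length i j hij rfl
  intro n
  induction n using Nat.strong_induction_on with
  | _ n IH =>
    intro i j hij hlen
    obtain ⟨x, hadj, p', hp⟩ := Walk.exists_eq_cons_of_ne hij (pt hT i j)
    by_cases hxj : x = j
    · subst hxj; exact ne_of_adj hT hS hCI hadj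
    · have hp'path : p'.IsPath := by
        have := pt_isPath hT i j
        rw [hp] at this
        exact this.of_cons
      have hp' : p' = pt hT x j := pt_unique hT hp'path
      have hxi : x ≠ i := by
        have := pt_isPath hT i j
        rw [hp, Walk.cons_isPath_iff] at this
        intro h
        exact this.2 (h ▸ Walk.start_mem_support p')
      have hbtw : Btw hT i x j := ⟨by rw [hp]; simp, hxi, hxj⟩
      have heq := prod_btw hT hS hCI hbtw
      have h1 : S i x ≠ 0 := ne_of_adj hT hS hCI hadj
      have hlt : p'.length < n := by
        have := congrArg Walk.length hp
        rw [Walk.length_cons] at this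
        omega
      have h2 : S x j ≠ 0 := IH p'.length hlt x j hxj (by rw [← hp'])
      have h3 : (0:ℝ) < S x x := diag_pos hS x
      intro h0
      rw [h0, zero_mul] at heq
      exact (mul_ne_zero h1 h2) heq.symm

theorem cond_ne_of_adj (hT : T.IsTree) (hS : S.PosDef) (hCI : CondIndepStruct S T)
    {i j k : V} (hadj : T.Adj i j) (hki : k ≠ i) (hkj : k ≠ j) :
    S i j * S k k - S i k * S k j ≠ 0 := by
  classical
  intro h0
  set g := fun u => S u j * S k k - S u k * S k j with hgdef
  have hg : S⁻¹.mulVec g = fun u => (1 : Matrix V V ℝ) u j * S k k -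
      (1 : Matrix V V ℝ) u k * S k j := by
    rw [hgdef, mulVec_combo2 S⁻¹ S j k (S k k) (S k j), mul_inv_self hS]
  set A := Finset.univ.filter (fun u => inA hT {j, k} i u) with hA
  have hmemA : ∀ u, u ∈ A ↔ inA hT {j, k} i u := by
    intro u; rw [hA, Finset.mem_filter]; simp
  have hiA : i ∈ A := (hmemA i).2 (inA_base hT (by simp [hadj.ne, Ne.symm hki]))
  have h1 : ∀ u ∈ A, S⁻¹.mulVec g u = 0 := by
    intro u hu
    rw [hmemA] at hu
    have huj : u ≠ j := by intro h; exact hu.1 (by simp [h])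
    have huk : u ≠ k := by intro h; exact hu.1 (by simp [h])
    rw [hg]
    simp [Matrix.one_apply, huj, huk]
  have h2 : ∀ u ∈ A, ∀ v, v ∉ A → g u * S⁻¹ u v * g v = 0 := by
    intro u hu v hv
    rw [hmemA] at hu
    by_cases hvk : v = k
    · have : g v = 0 := by rw [hgdef]; subst hvk; ring
      rw [this, mul_zero]
    · by_cases hvj : v = j
      · by_cases hui : u = i
        · have : g u = 0 := by rw [hgdef, hui]; exact h0
          rw [this, zero_mul, zero_mul]
        · have huj : u ≠ j := by intro h; exact hu.1 (by simp [h])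
          have : ¬T.Adj u v := by
            rw [hvj]
            intro hadj2
            exact adj_adj_mem hT hadj hadj2 hui (hu.2 j (by simp))
          have huv : u ≠ v := by rw [hvj]; exact huj
          rw [om_eq_zero hCI huv this, mul_zero, zero_mul]
      · have hne : u ≠ v := by rintro rfl; exact hv ((hmemA u).2 hu)
        have : ¬T.Adj u v := by
          intro hadj2
          exact hv ((hmemA v).2 (inA_adj hT hu hadj2 (by simp [hvj, hvk])))
        rw [om_eq_zero hCI hne this, mul_zero, zero_mul]
  have hvanish := energy (inv_pd hS) A g h1 h2
  have hone := congrFun hg i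
  simp only [Matrix.one_apply, if_neg hadj.ne, if_neg hki.symm] at hone
  rw [mulVec, dotProduct] at hone
  rw [Finset.sum_eq_single j] at hone
  · have hgj : g j = S j j * S k k - S j k * S k j := by rw [hgdef]
    have hpos : (0:ℝ) < S j j * S k k - S j k * S k j := by
      have hsq := sq_lt hS (Ne.symm hkj)
      have hsy := ssym hS j k
      rw [← hsy]
      nlinarith [hsq]
    have : S⁻¹ i j = 0 := by
      have h' : S⁻¹ i j * g j = 0 := by linarith [hone]
      rcases mul_eq_zero.1 h' with h | h
      · exact h
      · rw [hgj] at h; linarith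
    exact ((hCI i j hadj.ne).2 hadj) this
  · intro v _ hvj
    by_cases hvA : v ∈ A
    · rw [hvanish v hvA, mul_zero]
    · by_cases hvk : v = k
      · have : g v = 0 := by rw [hgdef]; subst hvk; ring
        rw [this, mul_zero]
      · by_cases hvi : v = i
        · subst hvi; rw [hvanish v hiA, mul_zero]
        · have : ¬T.Adj i v := by
            intro hadj2
            refine hvA ((hmemA v).2 ?_)
            refine ⟨by simp [hvj, hvk], fun m hm => ?_⟩
            simp only [Finset.mem_insert, Finset.mem_singleton] at hm
            rw [pt_adj hT hadj2.symm]
            simp only [Walk.support_cons, Walk.support_nil, List.mem_cons, List.not_mem_nil,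
              or_false]
            push_neg
            rcases hm with rfl | rfl
            · exact ⟨Ne.symm hvj, Ne.symm hadj.ne⟩
            · exact ⟨Ne.symm hvk, hki⟩
          rw [om_eq_zero hCI (Ne.symm hvi) this, zero_mul]
  · intro h; exact absurd (Finset.mem_univ j) h

theorem cond_mult (hT : T.IsTree) (hS : S.PosDef) (hCI : CondIndepStruct S T)
    {i x j k : V} (hbtw : Btw hT i x j) (hkx : k ≠ x) (hki : k ≠ i) (hkj : k ≠ j) :
    (S i j * S k k - S i k * S k j) * (S x x * S k k - S x k * S k x)
      = (S i x * S k k - S i k * S k x) * (S x j * S k k - S x k * S k j) := by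
  classical
  obtain ⟨hmem, hxi, hxj⟩ := hbtw
  set det := S x x * S k k - S x k * S k x with hdet
  set A0 := S x j * S k k - S x k * S k j with hA0
  set B0 := S k j * S x x - S k x * S x j with hB0
  set G := fun u => S u j * det - S u x * A0 - S u k * B0 with hGdef
  have hg : S⁻¹.mulVec G = fun u => (1 : Matrix V V ℝ) u j * det -
      (1 : Matrix V V ℝ) u x * A0 - (1 : Matrix V V ℝ) u k * B0 := by
    rw [hGdef, mulVec_combo3 S⁻¹ S j x k det A0 B0, mul_inv_self hS]
  set A := Finset.univ.filter (fun u => inA hT {x, k} i u) with hA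
  have hmemA : ∀ u, u ∈ A ↔ inA hT {x, k} i u := by
    intro u; rw [hA, Finset.mem_filter]; simp
  have hiA : i ∈ A := (hmemA i).2 (inA_base hT (by simp [Ne.symm hxi, Ne.symm hki]))
  have hjA : j ∉ A := by
    intro hj
    rw [hmemA] at hj
    exact hj.2 x (by simp) (mem_pt_symm hT hmem)
  have h1 : ∀ u ∈ A, S⁻¹.mulVec G u = 0 := by
    intro u hu
    have huA := hu
    rw [hmemA] at hu
    have hux : u ≠ x := by intro h; exact hu.1 (by simp [h])
    have huk : u ≠ k := by intro h; exact hu.1 (by simp [h])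
    have huj : u ≠ j := by rintro rfl; exact hjA huA
    rw [hg]
    simp [Matrix.one_apply, huj, hux, huk]
  have h2 : ∀ u ∈ A, ∀ v, v ∉ A → G u * S⁻¹ u v * G v = 0 := by
    intro u hu v hv
    rw [hmemA] at hu
    by_cases hvx : v = x
    · have : G v = 0 := by rw [hGdef, hdet, hA0, hB0]; subst hvx; ring
      rw [this, mul_zero]
    · by_cases hvk : v = k
      · have : G v = 0 := by rw [hGdef, hdet, hA0, hB0]; subst hvk; ring
        rw [this, mul_zero]
      · have hne : u ≠ v := by rintro rfl; exact hv ((hmemA u).2 hu)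
        have : ¬T.Adj u v := by
          intro hadj2
          exact hv ((hmemA v).2 (inA_adj hT hu hadj2 (by simp [hvx, hvk])))
        rw [om_eq_zero hCI hne this, mul_zero, zero_mul]
  have hGi : G i = 0 := energy (inv_pd hS) A G h1 h2 i hiA
  rw [hGdef] at hGi
  simp only at hGi
  rw [hdet, hA0, hB0] at hGi
  linear_combination (S k k) * hGi

theorem cond_ne (hT : T.IsTree) (hS : S.PosDef) (hCI : CondIndepStruct S T)
    {i j k : V} (hij : i ≠ j) (hki : k ≠ i) (hkj : k ≠ j)
    (hkpath : k ∉ (pt hT i j).support) :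
    S i j * S k k - S i k * S k j ≠ 0 := by
  classical
  suffices H : ∀ n i j, i ≠ j → k ≠ i → k ≠ j → k ∉ (pt hT i j).support →
      (pt hT i j).length = n → S i j * S k k - S i k * S k j ≠ 0 from
    H (pt hT i j).length i j hij hki hkj hkpath rfl
  intro n
  induction n using Nat.strong_induction_on with
  | _ n IH =>
    intro i j hij hki hkj hkpath hlen
    obtain ⟨x, hadj, p', hp⟩ := Walk.exists_eq_cons_of_ne hij (pt hT i j)
    by_cases hxj : x = j
    · subst hxj; exact cond_ne_of_adj hT hS hCI hadj hki hkj
    · have hp'path : p'.IsPath := by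
        have := pt_isPath hT i j
        rw [hp] at this
        exact this.of_cons
      have hp' : p' = pt hT x j := pt_unique hT hp'path
      have hxi : x ≠ i := by
        have := pt_isPath hT i j
        rw [hp, Walk.cons_isPath_iff] at this
        intro h
        exact this.2 (h ▸ Walk.start_mem_support p')
      have hxmem : x ∈ (pt hT i j).support := by rw [hp]; simp
      have hkx : k ≠ x := by rintro rfl; exact hkpath hxmem
      have hbtw : Btw hT i x j := ⟨hxmem, hxi, hxj⟩
      have heq := cond_mult hT hS hCI hbtw hkx hki hkj
      have h1 : S i x * S k k - S i k * S k x ≠ 0 :=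
        cond_ne_of_adj hT hS hCI hadj hki hkx
      have hlt : p'.length < n := by
        have := congrArg Walk.length hp
        rw [Walk.length_cons] at this
        omega
      have hkp' : k ∉ (pt hT x j).support := by
        rw [← hp']
        intro hk
        apply hkpath
        rw [hp]
        exact List.mem_cons_of_mem _ hk
      have h2 : S x j * S k k - S x k * S k j ≠ 0 :=
        IH p'.length hlt x j hxj hkx hkj hkp' (by rw [← hp'])
      have h3 : (0:ℝ) < S x x * S k k - S x k * S k x := by
        have hsq := sq_lt hS hkx.symm
        have hsy := ssym hS x k
        rw [hsy] at hsq ⊢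
        nlinarith [hsq]
      intro h0
      rw [h0, zero_mul] at heq
      exact (mul_ne_zero h1 h2) heq.symm

theorem leaf_row (hT : T.IsTree) (hS : S.PosDef) (hCI : CondIndepStruct S T)
    {a b : V} (hab : T.Adj a b) (huniq : ∀ c, T.Adj a c → c = b)
    {j : V} (hj : j ≠ a) :
    S⁻¹ a a * S a j + S⁻¹ a b * S b j = 0 := by
  classical
  have hone : (S⁻¹ * S) a j = 0 := by
    rw [mul_inv_self hS, Matrix.one_apply, if_neg (Ne.symm hj)]
  rw [Matrix.mul_apply] at hone
  have hzero : ∀ v, v ≠ a → v ≠ b → S⁻¹ a v * S v j = 0 := by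
    intro v hva hvb
    have : ¬T.Adj a v := fun h => hvb (huniq v h)
    rw [om_eq_zero hCI (Ne.symm hva) this, zero_mul]
  have : ∑ v, S⁻¹ a v * S v j = S⁻¹ a a * S a j + S⁻¹ a b * S b j :=
    sum_two hab.ne _ hzero
  rw [this] at hone
  exact hone

/-- Step 1: a leaf of `T₂` must be a leaf of `T₁`. -/
theorem leaf_transfer
    (T₁ T₂ : SimpleGraph V) (h₁ : T₁.IsTree) (h₂ : T₂.IsTree)
    (hcard : 3 ≤ Fintype.card V)
    {S₁ S₂ : Matrix V V ℝ} (hPD₁ : S₁.PosDef) (hPD₂ : S₂.PosDef)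
    (hCI₁ : CondIndepStruct S₁ T₁) (hCI₂ : CondIndepStruct S₂ T₂)
    (hmaj₁ : ∀ a b : V, IsLeaf T₁ a → T₁.Adj a b → |S₁⁻¹ a b| < S₁⁻¹ a a)
    (hmaj₂ : ∀ a b : V, IsLeaf T₂ a → T₂.Adj a b → |S₂⁻¹ a b| < S₂⁻¹ a a)
    (hoff : ∀ i j : V, i ≠ j → S₁ i j = S₂ i j)
    {a : V} (hleaf : IsLeaf T₂ a) : IsLeaf T₁ a := by
  classical
  have h1card : 1 < Fintype.card V := by omega
  obtain ⟨b', hab', huniq'⟩ := hleaf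
  by_contra hnl
  obtain ⟨u₁, u₂, hau₁, hau₂, hu12⟩ := two_nbrs_of_not_leaf h₁ h1card hnl
  have hab'ne : a ≠ b' := hab'.ne
  obtain ⟨v, hav, p', hp⟩ := Walk.exists_eq_cons_of_ne hab'ne (pt h₁ a b')
  have hvmem : v ∈ (pt h₁ a b').support := by rw [hp]; simp
  have huex : ∃ u, T₁.Adj a u ∧ u ≠ v := by
    by_cases h : u₁ = v
    · exact ⟨u₂, hau₂, by rw [← h]; exact hu12.symm⟩
    · exact ⟨u₁, hau₁, h⟩
  obtain ⟨u, hau, huv⟩ := huex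
  have hunotmem : u ∉ (pt h₁ a b').support := fun hmem =>
    huv (path_second_unique h₁ hau hmem hav hvmem)
  set P := S₂⁻¹ a a with hPdef
  set Q := S₂⁻¹ a b' with hQdef
  have lemA2 : ∀ j, j ≠ a → j ≠ b' → P * S₁ a j + Q * S₁ b' j = 0 := by
    intro j hja hjb
    have := leaf_row h₂ hPD₂ hCI₂ hab' huniq' hja
    rwa [← hoff a j (Ne.symm hja), ← hoff b' j (Ne.symm hjb)] at this
  have hP : (0:ℝ) < P := diag_pos (inv_pd hPD₂) a
  by_cases hvb : v = b'
  · -- the neighbour of `a` towards `b'` is `b'` itself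
    subst hvb
    by_cases hex : ∃ w, T₁.Adj v w ∧ w ≠ a
    · obtain ⟨w, hvw, hwa⟩ := hex
      have hBtw1 : Btw h₁ u a v := btw_of_adj h₁ hau hav huv
      have e1 := prod_btw h₁ hPD₁ hCI₁ hBtw1
      have hBtw2 : Btw h₁ a v w := btw_of_adj h₁ hav.symm hvw (Ne.symm hwa)
      have e2 := prod_btw h₁ hPD₁ hCI₁ hBtw2
      have e3u := lemA2 u hau.ne' huv
      have e3w := lemA2 w hwa hvw.ne'
      rw [ssym hPD₁ u a] at e1
      have hρ : S₁ v w ≠ 0 := offdiag_ne h₁ hPD₁ hCI₁ hvw.ne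
      have hδ : S₁ u v ≠ 0 := offdiag_ne h₁ hPD₁ hCI₁ huv
      rw [ssym hPD₁ v u] at e3u
      have step1 : (Q * S₁ v v + P * S₁ a v) * S₁ v w = 0 := by
        linear_combination S₁ v v * e3w - P * e2
      have step2 : Q * S₁ v v + P * S₁ a v = 0 :=
        by rcases mul_eq_zero.1 step1 with h | h
           · exact h
           · exact absurd h hρ
      have step3 : (Q * S₁ a v + P * S₁ a a) * S₁ u v = 0 := by
        linear_combination S₁ a v * e3u + P * e1
      have step4 : Q * S₁ a v + P * S₁ a a = 0 :=
        by rcases mul_eq_zero.1 step3 with h | h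
           · exact h
           · exact absurd h hδ
      have step5 : P * (S₁ a a * S₁ v v) = P * (S₁ a v ^ 2) := by
        linear_combination S₁ v v * step4 - S₁ a v * step2
      have step6 : S₁ a a * S₁ v v = S₁ a v ^ 2 := mul_left_cancel₀ hP.ne' step5
      have := sq_lt hPD₁ hab'ne
      linarith
    · push_neg at hex
      have hleaf1 : IsLeaf T₁ v := ⟨a, hav.symm, fun c hc => hex c hc⟩
      have lemA1 := leaf_row h₁ hPD₁ hCI₁ hav.symm (fun c hc => hex c hc) (j := u) huv
      have e3u := lemA2 u hau.ne' huv
      have hα : S₁ a u ≠ 0 := offdiag_ne h₁ hPD₁ hCI₁ hau.ne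
      have hβ : S₁ v u ≠ 0 := offdiag_ne h₁ hPD₁ hCI₁ (Ne.symm huv)
      have hprod : (S₁⁻¹ v v * P - S₁⁻¹ v a * Q) * (S₁ a u * S₁ v u) = 0 := by
        linear_combination (P * S₁ a u) * lemA1 - (S₁⁻¹ v a * S₁ a u) * e3u
      have heq : S₁⁻¹ v v * P = S₁⁻¹ v a * Q := by
        rcases mul_eq_zero.1 hprod with h | h
        · linarith
        · exact absurd h (mul_ne_zero hα hβ)
      have hm1 := hmaj₁ v a hleaf1 hav.symm
      have hm2 := hmaj₂ a v ⟨v, hab', huniq'⟩ hab'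
      rw [← hQdef] at hm2
      have habs : |S₁⁻¹ v a| * |Q| < S₁⁻¹ v v * P :=
        mul_lt_mul'' hm1 hm2 (abs_nonneg _) (abs_nonneg _)
      have hle : S₁⁻¹ v v * P ≤ |S₁⁻¹ v a| * |Q| := by
        calc S₁⁻¹ v v * P = S₁⁻¹ v a * Q := heq
        _ ≤ |S₁⁻¹ v a * Q| := le_abs_self _
        _ = |S₁⁻¹ v a| * |Q| := abs_mul _ _
      linarith
  · -- `v` is strictly between `a` and `b'`
    have hub' : u ≠ b' := by
      intro h
      have hb'mem : b' ∈ (pt h₁ a b').support := Walk.end_mem_support _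
      have : u = v := path_second_unique h₁ hau (by rw [h]; exact hb'mem) hav hvmem
      exact huv this
    have hWpath : (Walk.cons hau.symm (pt h₁ a b')).IsPath := by
      rw [Walk.cons_isPath_iff]; exact ⟨pt_isPath h₁ a b', hunotmem⟩
    have hW : pt h₁ u b' = Walk.cons hau.symm (pt h₁ a b') := (pt_unique h₁ hWpath).symm
    have hBtw_uav : Btw h₁ u a v := btw_of_adj h₁ hau hav huv
    have hBtw_uvb' : Btw h₁ u v b' := by
      refine ⟨?_, Ne.symm huv, hvb⟩
      rw [hW, Walk.support_cons]
      exact List.mem_cons_of_mem _ hvmem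
    have e1 := prod_btw h₁ hPD₁ hCI₁ hBtw_uav
    have e2 := prod_btw h₁ hPD₁ hCI₁ hBtw_uvb'
    have e3u := lemA2 u hau.ne' hub'
    have e3v := lemA2 v hav.ne' hvb
    rw [ssym hPD₁ u a] at e1
    rw [ssym hPD₁ b' u] at e3u
    rw [ssym hPD₁ b' v] at e3v
    have hSub' : S₁ u b' ≠ 0 := offdiag_ne h₁ hPD₁ hCI₁ hub'
    have hP6 := sq_lt hPD₁ hav.ne
    have hfinal : P^2 * S₁ u b' * (S₁ a a * S₁ v v - S₁ a v^2) = 0 := by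
      linear_combination (P^2 * S₁ a a) * e2 + (P^2 * S₁ v b') * e1 +
        (P * S₁ v b' * S₁ a v) * e3u - (P * S₁ u b' * S₁ a v) * e3v
    have hzero : S₁ a a * S₁ v v - S₁ a v^2 = 0 := by
      rcases mul_eq_zero.1 hfinal with h | h
      · exact absurd h (mul_ne_zero (pow_ne_zero _ hP.ne') hSub')
      · exact h
    linarith

/-- Step 3: every edge of `T₂` is an edge of `T₁`. -/
theorem adj_transfer
    (T₁ T₂ : SimpleGraph V) (h₁ : T₁.IsTree) (h₂ : T₂.IsTree)
    (hcard : 3 ≤ Fintype.card V)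
    {S₁ S₂ : Matrix V V ℝ} (hPD₁ : S₁.PosDef) (hPD₂ : S₂.PosDef)
    (hCI₁ : CondIndepStruct S₁ T₁) (hCI₂ : CondIndepStruct S₂ T₂)
    (hmaj₁ : ∀ a b : V, IsLeaf T₁ a → T₁.Adj a b → |S₁⁻¹ a b| < S₁⁻¹ a a)
    (hmaj₂ : ∀ a b : V, IsLeaf T₂ a → T₂.Adj a b → |S₂⁻¹ a b| < S₂⁻¹ a a)
    (hoff : ∀ i j : V, i ≠ j → S₁ i j = S₂ i j)
    {u v : V} (hadj : T₂.Adj u v) : T₁.Adj u v := by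
  classical
  by_contra hn
  have huv : u ≠ v := hadj.ne
  obtain ⟨k, huk, p', hp⟩ := Walk.exists_eq_cons_of_ne huv (pt h₁ u v)
  have hkv : k ≠ v := by rintro rfl; exact hn huk
  have hBtwT : Btw h₁ u k v := ⟨by rw [hp]; simp, huk.ne', hkv⟩
  have hp'path : p'.IsPath ∧ u ∉ p'.support := by
    have := pt_isPath h₁ u v
    rw [hp, Walk.cons_isPath_iff] at this
    exact this
  obtain ⟨x₂, hkx₂, p₂, hp₂⟩ := Walk.exists_eq_cons_of_ne hkv p'
  have hx₂mem : x₂ ∈ p'.support := by rw [hp₂]; simp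
  have hx₂u : x₂ ≠ u := fun h => hp'path.2 (h ▸ hx₂mem)
  have hknl₁ : ¬ IsLeaf T₁ k := by
    rintro ⟨b, hb, hbu⟩
    have h1 := hbu u huk.symm
    have h2 := hbu x₂ hkx₂
    exact hx₂u (h2.trans h1.symm)
  have hknl₂ : ¬ IsLeaf T₂ k := fun hl => hknl₁
    (leaf_transfer T₁ T₂ h₁ h₂ hcard hPD₁ hPD₂ hCI₁ hCI₂ hmaj₁ hmaj₂ hoff hl)
  obtain ⟨y₁, y₂, hky₁, hky₂, hy12⟩ := two_nbrs_of_not_leaf h₂ (by omega) hknl₂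
  have hDS : ∃ i j : V, i ≠ j ∧ k ≠ i ∧ k ≠ j ∧ k ∈ (pt h₁ i j).support ∧
      k ∈ (pt h₂ i j).support := by
    by_cases hc1 : k ∈ (pt h₁ y₁ y₂).support
    · exact ⟨y₁, y₂, hy12, hky₁.ne, hky₂.ne, hc1, (btw_of_adj h₂ hky₁ hky₂ hy12).1⟩
    · have hxx : ∃ x, T₁.Adj k x ∧ k ∈ (pt h₁ y₁ x).support := by
        by_cases hA : k ∈ (pt h₁ y₁ u).support
        · exact ⟨u, huk.symm, hA⟩
        · by_cases hB : k ∈ (pt h₁ y₁ x₂).support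
          · exact ⟨x₂, hkx₂, hB⟩
          · exfalso
            have h1 : k ∉ (pt h₁ u y₁).support := fun h => hA (mem_pt_symm h₁ h)
            have h2 : k ∉ (pt h₁ u x₂).support := avoid h₁ h1 hB
            exact h2 (btw_of_adj h₁ huk.symm hkx₂ (Ne.symm hx₂u)).1
      obtain ⟨x, hkx, hx⟩ := hxx
      have hy₁x : y₁ ≠ x := by
        rintro rfl
        rw [pt_self h₁] at hx
        simp only [Walk.support_nil, List.mem_cons, List.not_mem_nil, or_false] at hx
        exact hky₁.ne hx
      by_cases hC : k ∈ (pt h₂ y₁ x).support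
      · exact ⟨y₁, x, hy₁x, hky₁.ne, hkx.ne, hx, hC⟩
      · have hT2 : k ∈ (pt h₂ y₂ x).support := by
          by_contra hD
          have h1 : k ∉ (pt h₂ x y₂).support := fun h => hD (mem_pt_symm h₂ h)
          have h2 : k ∉ (pt h₂ y₁ y₂).support := avoid h₂ hC h1
          exact h2 (btw_of_adj h₂ hky₁ hky₂ hy12).1
        have hT1 : k ∈ (pt h₁ y₂ x).support := by
          by_contra hD
          exact (avoid h₁ hc1 hD) hx
        have hy₂x : y₂ ≠ x := by
          rintro rfl
          rw [pt_self h₁] at hT1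
          simp only [Walk.support_nil, List.mem_cons, List.not_mem_nil, or_false] at hT1
          exact hky₂.ne hT1
        exact ⟨y₂, x, hy₂x, hky₂.ne, hkx.ne, hT1, hT2⟩
  obtain ⟨i, j, hij, hki, hkj, hm1, hm2⟩ := hDS
  have q1 := prod_btw h₁ hPD₁ hCI₁ (⟨hm1, hki, hkj⟩ : Btw h₁ i k j)
  have q2 := prod_btw h₂ hPD₂ hCI₂ (⟨hm2, hki, hkj⟩ : Btw h₂ i k j)
  rw [← hoff i j hij, ← hoff i k (Ne.symm hki), ← hoff k j hkj] at q2
  have hSij : S₁ i j ≠ 0 := offdiag_ne h₁ hPD₁ hCI₁ hij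
  have hdiag : S₂ k k = S₁ k k := mul_left_cancel₀ hSij (q2.trans q1.symm)
  have hkpt : k ∉ (pt h₂ u v).support := by
    rw [pt_adj h₂ hadj]
    simp only [Walk.support_cons, Walk.support_nil, List.mem_cons, List.not_mem_nil, or_false]
    push_neg
    exact ⟨huk.ne', hkv⟩
  have hne2 := cond_ne h₂ hPD₂ hCI₂ huv huk.ne' hkv hkpt
  apply hne2
  rw [← hoff u v huv, ← hoff u k huk.ne, ← hoff k v hkv, hdiag]
  have := prod_btw h₁ hPD₁ hCI₁ hBtwT
  linarith

end StmtAux3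

theorem stmt_3 {V : Type*} [Fintype V] [DecidableEq V]
    (Tstar : SimpleGraph V) (hTree : Tstar.IsTree) (hcard : 3 ≤ Fintype.card V)
    (Sig : Matrix V V ℝ) (hPD : Sig.PosDef) (hCI : CondIndepStruct Sig Tstar)
    (hmaj : ∀ a b : V, IsLeaf Tstar a → Tstar.Adj a b → |Sig⁻¹ a b| < Sig⁻¹ a a)
    (Dstar : Matrix V V ℝ) (hDstar : IsDiagNonneg Dstar)
    (Sig' : Matrix V V ℝ) (hPD' : Sig'.PosDef)
    (D' : Matrix V V ℝ) (hD' : IsDiagNonneg D')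
    (hsum : Sig' + D' = Sig + Dstar)
    (T' : SimpleGraph V) (hTree' : T'.IsTree) (hCI' : CondIndepStruct Sig' T')
    (hmaj' : ∀ a b : V, IsLeaf T' a → T'.Adj a b → |Sig'⁻¹ a b| < Sig'⁻¹ a a) :
    T' = Tstar := by
  have hoff : ∀ i j : V, i ≠ j → Sig' i j = Sig i j := by
    intro i j hij
    have h := congrFun (congrFun hsum i) j
    simp only [Matrix.add_apply] at h
    rw [hD'.1 i j hij, hDstar.1 i j hij] at h
    simpa using h
  ext u v
  constructor
  · intro h
    exact StmtAux3.adj_transfer Tstar T' hTree hTree' hcard hPD hPD' hCI hCI' hmaj hmaj'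
      (fun i j hij => (hoff i j hij).symm) h
  · intro h
    exact StmtAux3.adj_transfer T' Tstar hTree' hTree hcard hPD' hPD hCI' hCI hmaj' hmaj
      hoff h
end

section
/- Let T* be a tree on a finite vertex set V with at least 3 vertices, let Σ* be a positive definite real matrix indexed by V whose conditional independence structure is given by T*, let D* be a diagonal matrix with nonnegative entries, and set Σ^o = Σ* + D*. Let λ₀ > 0 satisfy xᵀΣ*x ≥ λ₀‖x‖² for all vectors x, and suppose D*_{bb} < λ₀ for every vertex b of T* that is adjacent to some leaf of T*. If Σ' is positive definite with xᵀΣ'x ≥ λ₀‖x‖² for all x, D' is a diagonal matrix with nonnegative entries, Σ' + D' = Σ^o, and the conditional independence structure of Σ' is given by a tree T', then T' = T*, i.e., T' and T* have exactly the same edges. -/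
set_option linter.unusedSectionVars false
set_option linter.unusedVariables false
set_option maxHeartbeats 1000000


open Matrix

namespace Stmt4Aux


variable {V : Type*} [Fintype V] [DecidableEq V]

open SimpleGraph

/-- Delete a vertex by isolating it. -/
def delV (G : SimpleGraph V) (m : V) : SimpleGraph V where
  Adj x y := G.Adj x y ∧ x ≠ m ∧ y ≠ m
  symm := ⟨fun _ _ ⟨h, hx, hy⟩ => ⟨h.symm, hy, hx⟩⟩
  loopless := ⟨fun x ⟨h, _, _⟩ => G.loopless.irrefl x h⟩

/-- `m` lies strictly between `i` and `j`: removing it disconnects them. -/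
def Btw (G : SimpleGraph V) (i m j : V) : Prop :=
  i ≠ j ∧ i ≠ m ∧ j ≠ m ∧ ¬ (delV G m).Reachable i j

lemma delV_le {G : SimpleGraph V} {m : V} : delV G m ≤ G := fun _ _ h => h.1

lemma reach_avoid_delV {G : SimpleGraph V} {m : V} :
    ∀ {u v : V} (w : G.Walk u v), m ∉ w.support → (delV G m).Reachable u v := by
  intro u v w
  induction w with
  | nil => intro _; exact Reachable.refl _
  | cons h p ih =>
    intro hm
    rw [Walk.support_cons, List.mem_cons] at hm
    push_neg at hm
    have hadj : (delV G m).Adj _ _ := ⟨h, fun he => hm.1 he.symm,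
      fun he => hm.2 (he ▸ p.start_mem_support)⟩
    exact hadj.reachable.trans (ih hm.2)

lemma walk_of_le {G G' : SimpleGraph V} (hle : ∀ ⦃a b⦄, G.Adj a b → G'.Adj a b) :
    ∀ {u v : V} (w : G.Walk u v), ∃ w' : G'.Walk u v, w'.support = w.support := by
  intro u v w
  induction w with
  | nil => exact ⟨.nil, rfl⟩
  | cons h p ih =>
    obtain ⟨w', hw'⟩ := ih
    exact ⟨.cons (hle h) w', by rw [Walk.support_cons, Walk.support_cons, hw']⟩

lemma delV_walk_avoids {G : SimpleGraph V} {m u v : V} (hum : u ≠ m) :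
    ∀ (w : (delV G m).Walk u v), m ∉ w.support := by
  intro w
  induction w with
  | nil => simpa using hum.symm
  | cons h p ih =>
    rw [Walk.support_cons, List.mem_cons]
    push_neg
    exact ⟨fun he => (h.2.1 he.symm), ih h.2.2⟩

lemma path_unique' {G : SimpleGraph V} (hG : G.IsAcyclic) {u v : V}
    (p q : G.Walk u v) (hp : p.IsPath) (hq : q.IsPath) : p = q := by
  have := hG.path_unique ⟨p, hp⟩ ⟨q, hq⟩
  exact congrArg Subtype.val this

/-- A vertex interior to a path in a tree separates its endpoints. -/
lemma btw_of_interior {T : SimpleGraph V} (hT : T.IsTree) {i j m : V}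
    (p : T.Walk i j) (hp : p.IsPath) (hm : m ∈ p.support) (hmi : m ≠ i) (hmj : m ≠ j) :
    Btw T i m j := by
  have hij : i ≠ j := by
    rintro rfl
    rw [Walk.isPath_iff_eq_nil] at hp
    subst hp
    simp at hm
    exact hmi hm
  refine ⟨hij, hmi.symm, hmj.symm, ?_⟩
  rintro ⟨w⟩
  obtain ⟨w', hw'⟩ := walk_of_le (fun a b h => delV_le h) w
  have hmw : m ∉ w'.support := by
    rw [hw']; exact delV_walk_avoids hmi.symm w
  have hmq : m ∉ (w'.toPath : T.Walk i j).support :=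
    fun h => hmw (Walk.support_toPath_subset _ h)
  have heq : p = (w'.toPath : T.Walk i j) :=
    path_unique' hT.IsAcyclic _ _ hp w'.toPath.2
  exact hmq (heq ▸ hm)

lemma mem_support_of_btw {T : SimpleGraph V} {i m j : V} (hb : Btw T i m j)
    (w : T.Walk i j) : m ∈ w.support := by
  by_contra hm
  exact hb.2.2.2 (reach_avoid_delV w hm)

/-- A vertex with two distinct neighbors separates them (in a tree). -/
lemma btw_of_adj_adj {T : SimpleGraph V} (hT : T.IsTree) {x m y : V}
    (hx : T.Adj x m) (hy : T.Adj m y) (hxy : x ≠ y) : Btw T x m y := by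
  refine ⟨hxy, hx.ne, hy.ne', ?_⟩
  rintro ⟨w⟩
  obtain ⟨w', hw'⟩ := walk_of_le (fun a b h => delV_le h) w
  have hmw : m ∉ w'.support := by
    rw [hw']; exact delV_walk_avoids hx.ne w
  have hmq : m ∉ (w'.toPath : T.Walk x y).support :=
    fun h => hmw (Walk.support_toPath_subset _ h)
  have h2 : (Walk.cons hx (Walk.cons hy Walk.nil)).IsPath := by
    rw [Walk.isPath_def]
    simp [hx.ne, hxy, hy.ne]
  have heq : Walk.cons hx (Walk.cons hy Walk.nil) = (w'.toPath : T.Walk x y) :=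
    path_unique' hT.IsAcyclic _ _ h2 w'.toPath.2
  apply hmq
  rw [← heq]
  simp

/-- Every other vertex is separated from a leaf `m` by the leaf's unique neighbor. -/
lemma btw_leaf {T : SimpleGraph V} {m c v : V} (hmc : T.Adj m c)
    (huniq : ∀ y, T.Adj m y → y = c) (hvm : v ≠ m) (hvc : v ≠ c) :
    Btw T v c m := by
  refine ⟨hvm, hvc, hmc.ne, ?_⟩
  rintro ⟨w⟩
  have hcw : c ∉ w.support := delV_walk_avoids hvc w
  obtain ⟨x, h, w', hw⟩ := Walk.exists_eq_cons_of_ne (hvm.symm : m ≠ v) w.reverse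
  have hadj : T.Adj m x := h.1
  have hxc : x ≠ c := h.2.2
  exact hxc (huniq x hadj)

lemma exists_adj {T : SimpleGraph V} (hT : T.IsTree) (h2 : 2 ≤ Fintype.card V)
    (m : V) : ∃ c, T.Adj m c := by
  obtain ⟨v, hv⟩ := Fintype.exists_ne_of_one_lt_card (by omega) m
  obtain ⟨x, h, w', hw⟩ :=
    Walk.exists_eq_cons_of_ne (hv.symm : m ≠ v) ((hT.isConnected.preconnected m v).some)
  exact ⟨x, h⟩

lemma exists_two_nbrs {G : SimpleGraph V} {u v m : V} :
    ∀ (w : G.Walk u v), w.IsPath → m ∈ w.support → m ≠ u → m ≠ v →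
    ∃ x y, G.Adj x m ∧ G.Adj m y ∧ x ≠ y := by
  intro w
  induction w with
  | nil =>
    intro _ hm hmu _
    simp at hm
    exact absurd hm hmu
  | @cons a s b h p ih =>
    intro hp hm hmu hmv
    by_cases hs : m = s
    · subst hs
      obtain ⟨t, h2, p', hp'⟩ := Walk.exists_eq_cons_of_ne hmv p
      refine ⟨a, t, h, h2, ?_⟩
      intro hat
      have : a ∉ p.support := (Walk.cons_isPath_iff h p).mp hp |>.2
      apply this
      rw [hp', Walk.support_cons]
      exact List.mem_cons_of_mem _ (hat ▸ p'.start_mem_support)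
    · rw [Walk.support_cons, List.mem_cons] at hm
      rcases hm with hm | hm
      · exact absurd hm hmu
      · exact ih hp.of_cons hm hs hmv

lemma nbrs_of_btw {T : SimpleGraph V} (hT : T.IsTree) {a m b : V}
    (hb : Btw T a m b) :
    ∃ x y, T.Adj x m ∧ T.Adj m y ∧ x ≠ y ∧ Btw T x m y := by
  let q := ((hT.isConnected.preconnected a b).some).toPath
  have hm := mem_support_of_btw hb (q : T.Walk a b)
  obtain ⟨x, y, hx, hy, hxy⟩ :=
    exists_two_nbrs (q : T.Walk a b) q.2 hm hb.2.1.symm hb.2.2.1.symm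
  exact ⟨x, y, hx, hy, hxy, btw_of_adj_adj hT hx hy hxy⟩

/-- For an edge `x ~ s` and a third vertex `y`, either `s` is between `x,y` or
`x` is between `s,y`. -/
lemma btw_side {T : SimpleGraph V} (hT : T.IsTree) {x s y : V}
    (h : T.Adj x s) (hyx : y ≠ x) (hys : y ≠ s) :
    Btw T x s y ∨ Btw T s x y := by
  let p := ((hT.isConnected.preconnected x y).some).toPath
  by_cases hs : s ∈ (p : T.Walk x y).support
  · exact Or.inl (btw_of_interior hT _ p.2 hs h.ne' hys.symm)
  · right
    have hq : (Walk.cons h.symm (p : T.Walk x y)).IsPath := p.2.cons hs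
    refine btw_of_interior hT _ hq ?_ h.ne hyx.symm
    rw [Walk.support_cons]
    exact List.mem_cons_of_mem _ (p : T.Walk x y).start_mem_support

/-- Two trees on the same vertex set, one contained in the other, are equal. -/
lemma tree_eq_of_le {T T' : SimpleGraph V} (hT : T.IsTree) (hT' : T'.IsTree)
    (hle : ∀ ⦃a b⦄, T.Adj a b → T'.Adj a b) : T = T' := by
  ext a b
  constructor
  · exact fun h => hle h
  · intro hab
    by_contra hnab
    have hab' : a ≠ b := hab.ne
    let q := ((hT.isConnected.preconnected a b).some).toPath
    obtain ⟨s, h, p', hp'⟩ := Walk.exists_eq_cons_of_ne hab' (q : T.Walk a b)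
    have hsb : s ≠ b := fun h' => hnab (h' ▸ h)
    have hsa : s ≠ a := h.ne'
    obtain ⟨w', hw'⟩ := walk_of_le hle (q : T.Walk a b)
    have hw'path : w'.IsPath := by
      rw [Walk.isPath_def, hw', ← Walk.isPath_def]
      exact q.2
    have hedge : (Walk.cons hab (Walk.nil : T'.Walk b b)).IsPath := by
      rw [Walk.isPath_def]; simp [hab']
    have heq : w' = Walk.cons hab Walk.nil :=
      path_unique' hT'.IsAcyclic _ _ hw'path hedge
    have hsmem : s ∈ w'.support := by
      rw [hw', hp', Walk.support_cons]
      exact List.mem_cons_of_mem _ p'.start_mem_support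
    rw [heq] at hsmem
    simp at hsmem
    rcases hsmem with h1 | h1
    · exact hsa h1
    · exact hsb h1



section MatrixLemmas

variable {S : Matrix V V ℝ}

lemma sym_apply (hPD : S.PosDef) (i j : V) : S i j = S j i := by
  have h := hPD.1
  have h2 := congrFun (congrFun h i) j
  rw [Matrix.conjTranspose_apply] at h2
  simpa using h2.symm

lemma sum_single {m : V} (F : V → ℝ) (s : ℝ) :
    (∑ v, F v * (if v = m then s else 0)) = F m * s := by
  rw [Finset.sum_eq_single m]
  · simp
  · intro b _ hb; simp [hb]
  · intro h; exact absurd (Finset.mem_univ m) h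

lemma sum_two {m c : V} (hmc : m ≠ c) (F : V → ℝ) (s t : ℝ) :
    (∑ v, F v * (if v = m then s else if v = c then t else 0)) = F m * s + F c * t := by
  have key : ∀ v, F v * (if v = m then s else if v = c then t else 0)
      = F v * (if v = m then s else 0) + F v * (if v = c then t else 0) := by
    intro v
    by_cases h1 : v = m
    · subst h1; simp [hmc]
    · by_cases h2 : v = c
      · subst h2; simp [hmc.symm]
      · simp [h1, h2]
  rw [Finset.sum_congr rfl (fun v _ => key v), Finset.sum_add_distrib,
    sum_single, sum_single]

lemma diag_lb {lam : ℝ} (hq : ∀ x : V → ℝ, lam * (x ⬝ᵥ x) ≤ x ⬝ᵥ (S *ᵥ x)) (m : V) :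
    lam ≤ S m m := by
  have h := hq (fun v => if v = m then 1 else 0)
  have h1 : (fun v => if v = m then (1:ℝ) else 0) ⬝ᵥ (fun v => if v = m then 1 else 0) = 1 := by
    simp only [dotProduct]
    rw [Finset.sum_congr rfl (fun v _ => (mul_comm _ _)), sum_single]
    simp
  have h2 : (fun v => if v = m then (1:ℝ) else 0) ⬝ᵥ
      (S *ᵥ (fun v => if v = m then 1 else 0)) = S m m := by
    simp only [dotProduct, Matrix.mulVec]
    have inner : ∀ u, (∑ x, S u x * (if x = m then (1:ℝ) else 0)) = S u m := by
      intro u; rw [sum_single]; simp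
    calc (∑ u, (if u = m then (1:ℝ) else 0) * (∑ x, S u x * (if x = m then (1:ℝ) else 0)))
        = ∑ u, (∑ x, S u x * (if x = m then (1:ℝ) else 0)) * (if u = m then (1:ℝ) else 0) := by
          exact Finset.sum_congr rfl (fun u _ => mul_comm _ _)
      _ = (∑ x, S m x * (if x = m then (1:ℝ) else 0)) * 1 := by
          rw [sum_single (fun u => ∑ x, S u x * (if x = m then (1:ℝ) else 0)) 1]
      _ = S m m := by rw [inner m]; ring
  rw [h1, h2] at h
  linarith

lemma quad_two {m c : V} (hmc : m ≠ c) (s t : ℝ) :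
    (fun v => if v = m then s else if v = c then t else 0) ⬝ᵥ
      (S *ᵥ (fun v => if v = m then s else if v = c then t else 0))
    = s * (S m m * s + S m c * t) + t * (S c m * s + S c c * t) := by
  have hrow : ∀ u, (S *ᵥ (fun v => if v = m then s else if v = c then t else 0)) u
      = S u m * s + S u c * t := by
    intro u
    simp only [Matrix.mulVec, dotProduct]
    exact sum_two hmc (fun v => S u v) s t
  simp only [dotProduct]
  rw [Finset.sum_congr rfl (fun u _ => by rw [hrow u, mul_comm])]
  rw [sum_two hmc (fun u => S u m * s + S u c * t) s t]
  ring

lemma dot_two {m c : V} (hmc : m ≠ c) (s t : ℝ) :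
    (fun v => if v = m then s else if v = c then t else 0) ⬝ᵥ
      (fun v => if v = m then s else if v = c then t else 0) = s * s + t * t := by
  simp only [dotProduct]
  have key : ∀ v, (if v = m then s else if v = c then t else 0) *
      (if v = m then s else if v = c then t else 0)
      = (if v = m then s else if v = c then t else 0) * (if v = m then s else 0)
        + (if v = m then s else if v = c then t else 0) * (if v = c then t else 0) := by
    intro v
    by_cases h1 : v = m
    · subst h1; simp [hmc]
    · by_cases h2 : v = c
      · subst h2; simp [hmc.symm]
      · simp [h1, h2]
  rw [Finset.sum_congr rfl (fun v _ => key v), Finset.sum_add_distrib]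
  rw [sum_single (fun v => if v = m then s else if v = c then t else 0) s]
  rw [sum_single (fun v => if v = m then s else if v = c then t else 0) t]
  simp [hmc, hmc.symm]

lemma discrim_nonneg {A B C : ℝ}
    (key : ∀ s t : ℝ, 0 ≤ A * s ^ 2 + 2 * C * s * t + B * t ^ 2) : C ^ 2 ≤ A * B := by
  have hA0 : 0 ≤ A := by have := key 1 0; nlinarith
  rcases eq_or_lt_of_le hA0 with hA0' | hApos
  · have hC0 : C = 0 := by
      by_contra hC0
      have h := key (-(B + 1) / (2 * C)) 1
      rw [← hA0'] at h
      have hcalc : 2 * C * (-(B + 1) / (2 * C)) = -(B + 1) := by field_simp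
      nlinarith [h, hcalc]
    rw [hC0, ← hA0']
    norm_num
  · nlinarith [key C (-A)]

/-- 2×2 PSD inequality from a quadratic-form lower bound. -/
lemma pair_psd {lam : ℝ} {m c : V}
    (hq : ∀ x : V → ℝ, lam * (x ⬝ᵥ x) ≤ x ⬝ᵥ (S *ᵥ x))
    (hsym : S c m = S m c) (hmc : m ≠ c) :
    (S m c) ^ 2 ≤ (S m m - lam) * (S c c - lam) := by
  apply discrim_nonneg
  intro s t
  have h := hq (fun v => if v = m then s else if v = c then t else 0)
  rw [quad_two hmc, dot_two hmc, hsym] at h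
  nlinarith [h]

end MatrixLemmas

section Core

variable {S : Matrix V V ℝ} {T : SimpleGraph V}

lemma diag_pos (hPD : S.PosDef) (m : V) : 0 < S m m := by
  have hx : (fun v => if v = m then (1:ℝ) else 0) ≠ 0 := by
    intro h
    have := congrFun h m
    simp at this
  have h := hPD.dotProduct_mulVec_pos hx
  have hstar : star (fun v => if v = m then (1:ℝ) else 0)
      = (fun v => if v = m then (1:ℝ) else 0) := by
    ext v; simp
  rw [hstar] at h
  have h2 : (fun v => if v = m then (1:ℝ) else 0) ⬝ᵥ
      (S *ᵥ (fun v => if v = m then 1 else 0)) = S m m := by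
    simp only [dotProduct, Matrix.mulVec]
    have inner : ∀ u, (∑ x, S u x * (if x = m then (1:ℝ) else 0)) = S u m := by
      intro u; rw [sum_single]; simp
    calc (∑ u, (if u = m then (1:ℝ) else 0) * (∑ x, S u x * (if x = m then (1:ℝ) else 0)))
        = ∑ u, (∑ x, S u x * (if x = m then (1:ℝ) else 0)) * (if u = m then (1:ℝ) else 0) := by
          exact Finset.sum_congr rfl (fun u _ => mul_comm _ _)
      _ = (∑ x, S m x * (if x = m then (1:ℝ) else 0)) * 1 := by
          rw [sum_single (fun u => ∑ x, S u x * (if x = m then (1:ℝ) else 0)) 1]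
      _ = S m m := by rw [inner m]; ring
  rwa [h2] at h

/-- Strict 2×2 minor positivity for positive definite matrices. -/
lemma strict_minor (hPD : S.PosDef) {i j : V} (hij : i ≠ j) :
    (S i j) ^ 2 < S i i * S j j := by
  have hsym := sym_apply hPD j i
  have hx : (fun v => if v = i then S i j else if v = j then -(S i i) else 0) ≠ 0 := by
    intro h
    have := congrFun h j
    simp [hij.symm] at this
    exact (diag_pos hPD i).ne' this
  have h := hPD.dotProduct_mulVec_pos hx
  have hstar : star (fun v => if v = i then S i j else if v = j then -(S i i) else 0)
      = (fun v => if v = i then S i j else if v = j then -(S i i) else 0) := by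
    ext v; simp
  rw [hstar, quad_two hij] at h
  have hii := diag_pos hPD i
  rw [hsym] at h
  nlinarith [h, hii]

/-- The key separation lemma: if every `T`-neighbor of a vertex in `A` either lies
in `A` or equals `m`, with `i ∈ A` and `j, m ∉ A`, then the partial covariance
vanishes. -/
lemma sep_mul (hPD : S.PosDef) (hCI : CondIndepStruct S T)
    {A : Set V} {i m j : V} (hiA : i ∈ A) (hjA : j ∉ A) (hmA : m ∉ A) (hjm : j ≠ m)
    (hsep : ∀ x ∈ A, ∀ y, y ∉ A → y ≠ m → S⁻¹ x y = 0) :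
    S i j * S m m = S i m * S m j := by
  classical
  set K := S⁻¹ with hK
  have hKPD : K.PosDef := hPD.inv
  have hdet : IsUnit S.det := isUnit_iff_ne_zero.mpr hPD.det_pos.ne'
  have hKS : K * S = 1 := Matrix.nonsing_inv_mul S hdet
  set w : V → ℝ := fun y => S m m * S y j - S m j * S y m with hw
  set z : V → ℝ := fun y => if y ∈ A then w y else 0 with hz
  have hwm : w m = 0 := by simp [hw]; ring
  have hKz : ∀ x ∈ A, (K *ᵥ z) x = 0 := by
    intro x hx
    have hterm : ∀ y, K x y * z y = K x y * w y := by
      intro y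
      by_cases hyA : y ∈ A
      · simp [hz, hyA]
      · by_cases hym : y = m
        · subst hym
          simp [hz, hyA, hwm]
        · rw [hsep x hx y hyA hym]
          ring
    have hxj : x ≠ j := fun h => hjA (h ▸ hx)
    have hxm : x ≠ m := fun h => hmA (h ▸ hx)
    have hKSxj : (∑ y, K x y * S y j) = 0 := by
      have := congrFun (congrFun hKS x) j
      rw [Matrix.mul_apply] at this
      rw [this, Matrix.one_apply_ne hxj]
    have hKSxm : (∑ y, K x y * S y m) = 0 := by
      have := congrFun (congrFun hKS x) m
      rw [Matrix.mul_apply] at this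
      rw [this, Matrix.one_apply_ne hxm]
    calc (K *ᵥ z) x = ∑ y, K x y * z y := by simp [Matrix.mulVec, dotProduct]
      _ = ∑ y, K x y * w y := Finset.sum_congr rfl (fun y _ => hterm y)
      _ = ∑ y, (S m m * (K x y * S y j) - S m j * (K x y * S y m)) := by
          apply Finset.sum_congr rfl
          intro y _
          simp only [hw]
          ring
      _ = S m m * (∑ y, K x y * S y j) - S m j * (∑ y, K x y * S y m) := by
          rw [Finset.sum_sub_distrib, Finset.mul_sum, Finset.mul_sum]
      _ = 0 := by rw [hKSxj, hKSxm]; ring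
  have hquad : z ⬝ᵥ (K *ᵥ z) = 0 := by
    simp only [dotProduct]
    apply Finset.sum_eq_zero
    intro x _
    by_cases hx : x ∈ A
    · rw [hKz x hx]; ring
    · have : z x = 0 := by simp [hz, hx]
      rw [this]; ring
  have hz0 : z = 0 := by
    by_contra hz0
    have h := hKPD.dotProduct_mulVec_pos hz0
    have hstar : star z = z := by ext v; simp
    rw [hstar, hquad] at h
    exact lt_irrefl 0 h
  have : z i = 0 := by rw [hz0]; rfl
  have hzi : S m m * S i j - S m j * S i m = 0 := by
    simpa [hz, hz0, hiA, hw] using this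
  linarith [hzi, (by ring : S m m * S i j - S m j * S i m
    = S i j * S m m - S i m * S m j)]

/-- Markov property along a separator in the tree. -/
lemma btw_mul (hPD : S.PosDef) (hCI : CondIndepStruct S T)
    {i m j : V} (hb : Btw T i m j) :
    S i j * S m m = S i m * S m j := by
  classical
  obtain ⟨hij, him, hjm, hreach⟩ := hb
  set A : Set V := {v | (delV T m).Reachable i v} with hA
  have hiA : i ∈ A := Reachable.refl i
  have hjA : j ∉ A := hreach
  have hmA : m ∉ A := by
    intro hm
    obtain ⟨wk⟩ := (hm : (delV T m).Reachable i m)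
    obtain ⟨x, h, w', hw⟩ := SimpleGraph.Walk.exists_eq_cons_of_ne (him.symm : m ≠ i) wk.reverse
    exact h.2.1 rfl
  refine sep_mul hPD hCI hiA hjA hmA (fun h => hjm h) ?_
  intro x hx y hyA hym
  by_contra hKxy
  have hxy : x ≠ y := by rintro rfl; exact hyA hx
  have hadj : T.Adj x y := (hCI x y hxy).mp hKxy
  have hxm : x ≠ m := fun h => hmA (h ▸ hx)
  have hadj' : (delV T m).Adj x y := ⟨hadj, hxm, hym⟩
  exact hyA ((hx : (delV T m).Reachable i x).trans hadj'.reachable)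

end Core

section Tree

variable {S : Matrix V V ℝ} {T : SimpleGraph V}

/-- Edge entries of a tree-structured covariance are nonzero. -/
lemma edge_ne (hT : T.IsTree) (hPD : S.PosDef) (hCI : CondIndepStruct S T)
    {a b : V} (hab : T.Adj a b) : S a b ≠ 0 := by
  intro h0
  have hK : S⁻¹ a b ≠ 0 := (hCI a b hab.ne).mpr hab
  have hdet : IsUnit S.det := isUnit_iff_ne_zero.mpr hPD.det_pos.ne'
  have hSK : S * S⁻¹ = 1 := Matrix.mul_nonsing_inv S hdet
  have h1 : (0:ℝ) = ∑ y, S a y * S⁻¹ y b := by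
    have := congrFun (congrFun hSK a) b
    rw [Matrix.mul_apply] at this
    rw [this, Matrix.one_apply_ne hab.ne]
  have h2 : (∑ y, S a y * S⁻¹ y b) = S a a * S⁻¹ a b := by
    apply Finset.sum_eq_single a
    · intro y _ hya
      by_cases hyb : y = b
      · subst hyb; rw [h0]; ring
      · by_cases hKyb : S⁻¹ y b = 0
        · rw [hKyb]; ring
        · have hadj : T.Adj y b := (hCI y b hyb).mp hKyb
          have hbtw : Btw T a b y := btw_of_adj_adj hT hab hadj.symm (Ne.symm hya)
          have := btw_mul hPD hCI hbtw
          -- S a y * S b b = S a b * S b y = 0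
          have hay : S a y = 0 := by
            have hbb := diag_pos hPD b
            rw [h0] at this
            have : S a y * S b b = 0 := by linarith [this]
            exact (mul_eq_zero.mp this).resolve_right hbb.ne'
          rw [hay]; ring
    · intro h; exact absurd (Finset.mem_univ a) h
  rw [← h1] at h2
  have haa := diag_pos hPD a
  exact hK ((mul_eq_zero.mp h2.symm).resolve_left haa.ne')

/-- All off-diagonal entries of a tree-structured covariance are nonzero. -/
lemma offdiag_ne (hT : T.IsTree) (hPD : S.PosDef) (hCI : CondIndepStruct S T)
    {i j : V} (hij : i ≠ j) : S i j ≠ 0 := by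
  classical
  have main : ∀ {i j : V} (w : T.Walk i j), w.IsPath → i ≠ j → S i j ≠ 0 := by
    intro i j w
    induction w with
    | nil => intro _ hij; exact absurd rfl hij
    | @cons a s b h p ih =>
      intro hp hab
      by_cases hsj : s = b
      · subst hsj; exact edge_ne hT hPD hCI h
      · have hsa : s ≠ a := fun he => ((Walk.cons_isPath_iff h p).mp hp).2
          (he ▸ p.start_mem_support)
        have hmem : s ∈ (Walk.cons h p).support := by
          rw [Walk.support_cons]
          exact List.mem_cons_of_mem _ p.start_mem_support
        have hbtw : Btw T a s b := btw_of_interior hT _ hp hmem hsa hsj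
        have heq := btw_mul hPD hCI hbtw
        have h1 : S a s ≠ 0 := edge_ne hT hPD hCI h
        have h2 : S s b ≠ 0 := ih hp.of_cons hsj
        have h3 : S s s ≠ 0 := (diag_pos hPD s).ne'
        intro h0
        rw [h0] at heq
        have : S a s * S s b = 0 := by linarith
        rcases mul_eq_zero.mp this with h | h
        · exact h1 h
        · exact h2 h
  obtain ⟨w⟩ := hT.isConnected.preconnected i j
  exact main (w.toPath : T.Walk i j) w.toPath.2 hij

/-- Squared correlation. -/
noncomputable def gg (S : Matrix V V ℝ) (i j : V) : ℝ :=
  (S i j) ^ 2 / (S i i * S j j)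

lemma gg_self (hPD : S.PosDef) (i : V) : gg S i i = 1 := by
  have := diag_pos hPD i
  rw [gg]
  field_simp

lemma gg_nonneg (hPD : S.PosDef) (i j : V) : 0 ≤ gg S i j :=
  div_nonneg (sq_nonneg _) (mul_pos (diag_pos hPD i) (diag_pos hPD j)).le

lemma gg_pos (hT : T.IsTree) (hPD : S.PosDef) (hCI : CondIndepStruct S T)
    {i j : V} (hij : i ≠ j) : 0 < gg S i j :=
  div_pos (lt_of_le_of_ne (sq_nonneg _) (Ne.symm (pow_ne_zero 2 (offdiag_ne hT hPD hCI hij))))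
    (mul_pos (diag_pos hPD i) (diag_pos hPD j))

lemma gg_lt_one (hPD : S.PosDef) {i j : V} (hij : i ≠ j) : gg S i j < 1 := by
  rw [gg, div_lt_one (mul_pos (diag_pos hPD i) (diag_pos hPD j))]
  exact strict_minor hPD hij

lemma gg_le_one (hPD : S.PosDef) (i j : V) : gg S i j ≤ 1 := by
  by_cases hij : i = j
  · subst hij; rw [gg_self hPD]
  · exact (gg_lt_one hPD hij).le

lemma gg_symm (hPD : S.PosDef) (i j : V) : gg S i j = gg S j i := by
  rw [gg, gg, sym_apply hPD i j, mul_comm]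

lemma gg_btw (hPD : S.PosDef) (hCI : CondIndepStruct S T)
    {i m j : V} (hb : Btw T i m j) : gg S i j = gg S i m * gg S m j := by
  have key := btw_mul hPD hCI hb
  have key2 : (S i j) ^ 2 * (S m m) ^ 2 = (S i m) ^ 2 * (S m j) ^ 2 := by
    linear_combination (S i j * S m m + S i m * S m j) * key
  have hii := diag_pos hPD i
  have hjj := diag_pos hPD j
  have hmm := diag_pos hPD m
  rw [gg, gg, gg, div_mul_div_comm, div_eq_div_iff (by positivity) (by positivity)]
  linear_combination (S i i * S j j) * key2

end Tree

section WalkProd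

variable {S : Matrix V V ℝ} {T : SimpleGraph V}

/-- The product of squared edge correlations along any walk is at most the
endpoint squared correlation. -/
lemma walk_prod_le (hT : T.IsTree) (hPD : S.PosDef) (hCI : CondIndepStruct S T) :
    ∀ {x y : V} (w : T.Walk x y),
      (w.darts.map (fun d => gg S d.toProd.1 d.toProd.2)).prod ≤ gg S x y := by
  intro x y w
  induction w with
  | nil => rw [gg_self hPD]; simp
  | @cons x s y h p ih =>
    rw [Walk.darts_cons, List.map_cons, List.prod_cons]
    have hprodnn : 0 ≤ (p.darts.map (fun d => gg S d.toProd.1 d.toProd.2)).prod := by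
      apply List.prod_nonneg
      intro a ha
      obtain ⟨d, _, rfl⟩ := List.mem_map.mp ha
      exact gg_nonneg hPD _ _
    have step : gg S x s * (p.darts.map (fun d => gg S d.toProd.1 d.toProd.2)).prod
        ≤ gg S x s * gg S s y :=
      mul_le_mul_of_nonneg_left ih (gg_nonneg hPD x s)
    refine le_trans step ?_
    by_cases hsy : s = y
    · subst hsy
      rw [gg_self hPD]
      simp
    · by_cases hxy : x = y
      · subst hxy
        rw [gg_self hPD, gg_symm hPD s x]
        have h1 := gg_le_one hPD x s
        have h0 := gg_nonneg hPD x s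
        nlinarith
      · rcases btw_side hT h (Ne.symm hxy) (Ne.symm hsy) with hb | hb
        · exact le_of_eq (gg_btw hPD hCI hb).symm
        · have heq := gg_btw hPD hCI hb
          -- gg s y = gg s x * gg x y
          rw [heq, gg_symm hPD s x]
          have h1 := gg_le_one hPD x s
          have h0 := gg_nonneg hPD x s
          have h2 := gg_nonneg hPD x y
          have hsq : gg S x s * gg S x s ≤ 1 := mul_le_one₀ h1 h0 h1
          nlinarith [mul_nonneg (sub_nonneg.mpr hsq) h2]

/-- Along a path, the product of squared edge correlations equals the endpoint
squared correlation. -/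
lemma path_prod_eq (hT : T.IsTree) (hPD : S.PosDef) (hCI : CondIndepStruct S T) :
    ∀ {x y : V} (w : T.Walk x y), w.IsPath →
      (w.darts.map (fun d => gg S d.toProd.1 d.toProd.2)).prod = gg S x y := by
  intro x y w
  induction w with
  | nil => intro _; rw [gg_self hPD]; simp
  | @cons x s y h p ih =>
    intro hp
    rw [Walk.darts_cons, List.map_cons, List.prod_cons, ih hp.of_cons]
    by_cases hsy : s = y
    · subst hsy
      rw [gg_self hPD]
      ring
    · have hsa : s ≠ x := fun he => ((Walk.cons_isPath_iff h p).mp hp).2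
        (he ▸ p.start_mem_support)
      have hmem : s ∈ (Walk.cons h p).support := by
        rw [Walk.support_cons]
        exact List.mem_cons_of_mem _ p.start_mem_support
      have hbtw : Btw T x s y := btw_of_interior hT _ hp hmem hsa hsy
      exact (gg_btw hPD hCI hbtw).symm

/-- Weak multiplicative triangle inequality for squared correlations. -/
lemma gg_tri (hT : T.IsTree) (hPD : S.PosDef) (hCI : CondIndepStruct S T)
    (x c y : V) : gg S x c * gg S c y ≤ gg S x y := by
  classical
  obtain ⟨w1⟩ := hT.isConnected.preconnected x c
  obtain ⟨w2⟩ := hT.isConnected.preconnected c y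
  have h1 := path_prod_eq hT hPD hCI (w1.toPath : T.Walk x c) w1.toPath.2
  have h2 := path_prod_eq hT hPD hCI (w2.toPath : T.Walk c y) w2.toPath.2
  have h3 := walk_prod_le hT hPD hCI ((w1.toPath : T.Walk x c).append (w2.toPath : T.Walk c y))
  rw [Walk.darts_append, List.map_append, List.prod_append, h1, h2] at h3
  exact h3

end WalkProd


end Stmt4Aux

open Stmt4Aux SimpleGraph

theorem stmt_4 {V : Type*} [Fintype V] [DecidableEq V]
    (Tstar : SimpleGraph V) (hTree : Tstar.IsTree) (hcard : 3 ≤ Fintype.card V)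
    (Sig : Matrix V V ℝ) (hPD : Sig.PosDef) (hCI : CondIndepStruct Sig Tstar)
    (Dstar : Matrix V V ℝ) (hDstar : IsDiagNonneg Dstar)
    (lam0 : ℝ) (hlam0 : 0 < lam0)
    (hmin : ∀ x : V → ℝ, lam0 * (x ⬝ᵥ x) ≤ x ⬝ᵥ (Sig *ᵥ x))
    (hnoise : ∀ b : V, (∃ a : V, IsLeaf Tstar a ∧ Tstar.Adj a b) → Dstar b b < lam0)
    (Sig' : Matrix V V ℝ) (hPD' : Sig'.PosDef)
    (hmin' : ∀ x : V → ℝ, lam0 * (x ⬝ᵥ x) ≤ x ⬝ᵥ (Sig' *ᵥ x))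
    (D' : Matrix V V ℝ) (hD' : IsDiagNonneg D')
    (hsum : Sig' + D' = Sig + Dstar)
    (T' : SimpleGraph V) (hTree' : T'.IsTree) (hCI' : CondIndepStruct Sig' T') :
    T' = Tstar := by
  classical
  have hoff : ∀ i j : V, i ≠ j → Sig' i j = Sig i j := by
    intro i j hij
    have h := congrFun (congrFun hsum i) j
    simp only [Matrix.add_apply] at h
    rw [hD'.1 i j hij, hDstar.1 i j hij] at h
    linarith
  have hdiagsum : ∀ i : V, Sig' i i + D' i i = Sig i i + Dstar i i := by
    intro i
    have h := congrFun (congrFun hsum i) i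
    simpa using h
  have hsymS : ∀ i j : V, Sig i j = Sig j i := sym_apply hPD
  have hsymS' : ∀ i j : V, Sig' i j = Sig' j i := sym_apply hPD'
  have key : ∀ a b : V, Tstar.Adj a b → T'.Adj a b := by
    intro a b hab
    by_contra hnadj
    have hab' : a ≠ b := hab.ne
    -- Find a vertex strictly between a and b in T'
    have hexm : ∃ m, Btw T' a m b := by
      obtain ⟨w⟩ := hTree'.isConnected.preconnected a b
      obtain ⟨s, h, p', hp'⟩ := Walk.exists_eq_cons_of_ne hab' (w.toPath : T'.Walk a b)
      have hsa : s ≠ a := h.ne'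
      have hsb : s ≠ b := fun h' => hnadj (h' ▸ h)
      have hmem : s ∈ (w.toPath : T'.Walk a b).support := by
        rw [hp', Walk.support_cons]
        exact List.mem_cons_of_mem _ p'.start_mem_support
      exact ⟨s, btw_of_interior hTree' _ w.toPath.2 hmem hsa hsb⟩
    obtain ⟨m, hbtw'⟩ := hexm
    have ham : a ≠ m := hbtw'.2.1
    have hbm : b ≠ m := hbtw'.2.2.1
    -- key identity from T'-betweenness
    have hE1 : Sig a b * Sig' m m = Sig a m * Sig m b := by
      have h := btw_mul hPD' hCI' hbtw'
      rwa [hoff a b hab', hoff a m ham, hoff m b (Ne.symm hbm)] at h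
    have hMm' : 0 < Sig' m m := diag_pos hPD' m
    have hMm : 0 < Sig m m := diag_pos hPD m
    by_cases hdeg : ∃ p q, Tstar.Adj m p ∧ Tstar.Adj m q ∧ p ≠ q
    · -- m is internal in Tstar : contradiction
      obtain ⟨p, q, hp, hq, hpq⟩ := hdeg
      have hpm : p ≠ m := hp.ne'
      have hmq : m ≠ q := hq.ne
      have hbtwT : Btw Tstar p m q := btw_of_adj_adj hTree hp.symm hq hpq
      have h1 : Sig p q * Sig m m = Sig p m * Sig m q := btw_mul hPD hCI hbtwT
      -- weak triangle in (Sig', T') at p, m, q  ⇒  Sig m m ≤ Sig' m m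
      have hPp := diag_pos hPD' p
      have hQq := diag_pos hPD' q
      have h2 := gg_tri hTree' hPD' hCI' p m q
      rw [gg, gg, gg, div_mul_div_comm,
        div_le_div_iff₀ (by positivity) (by positivity)] at h2
      rw [hoff p m hpm, hoff m q hmq, hoff p q hpq] at h2
      have h3 : (Sig p m ^ 2 * Sig m q ^ 2) * (Sig' p p * Sig' q q)
          ≤ (Sig p q ^ 2 * Sig' m m ^ 2) * (Sig' p p * Sig' q q) := by nlinarith [h2]
      have h4 := le_of_mul_le_mul_right h3 (mul_pos hPp hQq)
      have h1sq : Sig p m ^ 2 * Sig m q ^ 2 = Sig p q ^ 2 * Sig m m ^ 2 := by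
        linear_combination (-(Sig p q * Sig m m) - Sig p m * Sig m q) * h1
      have hpq0 : Sig p q ≠ 0 := offdiag_ne hTree hPD hCI hpq
      have hpq2 : 0 < Sig p q ^ 2 :=
        lt_of_le_of_ne (sq_nonneg _) (Ne.symm (pow_ne_zero 2 hpq0))
      have h5 : Sig m m ^ 2 ≤ Sig' m m ^ 2 := by
        have h6 : Sig p q ^ 2 * Sig m m ^ 2 ≤ Sig p q ^ 2 * Sig' m m ^ 2 := by
          nlinarith [h4, h1sq]
        exact le_of_mul_le_mul_left h6 hpq2
      have hmono : Sig m m ≤ Sig' m m := by nlinarith [h5, hMm, hMm']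
      -- strict inequality from the edge a~b  ⇒  Sig' m m < Sig m m
      have hab0 : Sig a b ≠ 0 := offdiag_ne hTree hPD hCI hab'
      rcases btw_side hTree hab (Ne.symm ham) (Ne.symm hbm) with hb1 | hb1
      · have e := btw_mul hPD hCI hb1  -- Sig a m * Sig b b = Sig a b * Sig b m
        have hs : Sig m b = Sig b m := hsymS m b
        have e2' : Sig a b * (Sig' m m * Sig b b) = Sig a b * Sig b m ^ 2 := by
          linear_combination Sig b b * hE1 + Sig m b * e + Sig a b * Sig b m * hs
        have e2 := mul_left_cancel₀ hab0 e2'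
        have minor : (Sig b m) ^ 2 < Sig b b * Sig m m := strict_minor hPD hbm
        have hBb := diag_pos hPD b
        nlinarith [e2, minor, hmono, hBb]
      · have e := btw_mul hPD hCI hb1  -- Sig b m * Sig a a = Sig b a * Sig a m
        have hs1 : Sig m b = Sig b m := hsymS m b
        have hs2 : Sig b a = Sig a b := hsymS b a
        have e2' : Sig a b * (Sig' m m * Sig a a) = Sig a b * Sig a m ^ 2 := by
          linear_combination Sig a a * hE1 + Sig a m * e + Sig a m * Sig a a * hs1
            + Sig a m * Sig a m * hs2
        have e2 := mul_left_cancel₀ hab0 e2'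
        have minor : (Sig a m) ^ 2 < Sig a a * Sig m m := strict_minor hPD ham
        have hAa := diag_pos hPD a
        nlinarith [e2, minor, hmono, hAa]
    · -- m is a leaf of Tstar
      push_neg at hdeg
      obtain ⟨c, hc⟩ := exists_adj hTree (by omega) m
      have huniq : ∀ y, Tstar.Adj m y → y = c := fun y hy => hdeg y c hy hc
      have hleaf : IsLeaf Tstar m := ⟨c, hc, huniq⟩
      have hDcc : Dstar c c < lam0 := hnoise c ⟨m, hleaf, hc⟩
      have hmc : m ≠ c := hc.ne
      have hCc := diag_pos hPD c
      -- two T'-neighbors of m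
      obtain ⟨x, y, hxm, hmy, hxy, hbxy⟩ := nbrs_of_btw hTree' hbtw'
      have hxm' : x ≠ m := hxm.ne
      have hmy' : m ≠ y := hmy.ne
      have hE3 : Sig x y * Sig' m m = Sig x m * Sig m y := by
        have h := btw_mul hPD' hCI' hbxy
        rwa [hoff x y hxy, hoff x m hxm', hoff m y hmy'] at h
      -- main bound : Sig' m m * Sig c c ≤ Sig c m ^ 2
      have hmain : Sig' m m * Sig c c ≤ Sig c m ^ 2 := by
        by_cases hxc : x = c
        · have hE3c : Sig c y * Sig' m m = Sig c m * Sig m y := by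
            rw [← hxc]; exact hE3
          have hyc : y ≠ c := fun h => hxy (hxc.trans h.symm)
          have hbycm : Btw Tstar y c m :=
            btw_leaf hc huniq (hmy.ne' : y ≠ m) hyc
          have e := btw_mul hPD hCI hbycm  -- Sig y m * Sig c c = Sig y c * Sig c m
          have hcy0 : Sig c y ≠ 0 := offdiag_ne hTree hPD hCI (Ne.symm hyc)
          have hs1 : Sig m y = Sig y m := hsymS m y
          have hs2 : Sig y c = Sig c y := hsymS y c
          have e2' : Sig c y * (Sig' m m * Sig c c) = Sig c y * Sig c m ^ 2 := by
            linear_combination Sig c c * hE3c + Sig c m * e + Sig c m * Sig c c * hs1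
              + Sig c m * Sig c m * hs2
          exact le_of_eq (mul_left_cancel₀ hcy0 e2')
        · by_cases hyc : y = c
          · have hE3c : Sig x c * Sig' m m = Sig x m * Sig m c := by
              rw [← hyc]; exact hE3
            have hbxcm : Btw Tstar x c m := btw_leaf hc huniq hxm' hxc
            have e := btw_mul hPD hCI hbxcm  -- Sig x m * Sig c c = Sig x c * Sig c m
            have hxc0 : Sig x c ≠ 0 := offdiag_ne hTree hPD hCI hxc
            have e2' : Sig x c * (Sig' m m * Sig c c) = Sig x c * Sig c m ^ 2 := by
              linear_combination Sig c c * hE3c + Sig x m * Sig c c * (hsymS m c)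
                + Sig c m * e
            exact le_of_eq (mul_left_cancel₀ hxc0 e2')
          · -- generic case
            have hbxcm : Btw Tstar x c m := btw_leaf hc huniq hxm' hxc
            have hbycm : Btw Tstar y c m := btw_leaf hc huniq hmy.ne' hyc
            have e1 := btw_mul hPD hCI hbxcm  -- Sig x m * Sig c c = Sig x c * Sig c m
            have e2 := btw_mul hPD hCI hbycm  -- Sig y m * Sig c c = Sig y c * Sig c m
            have hXx := diag_pos hPD x
            have hYy := diag_pos hPD y
            have tri := gg_tri hTree hPD hCI x c y
            rw [gg, gg, gg, div_mul_div_comm,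
              div_le_div_iff₀ (by positivity) (by positivity)] at tri
            have traw : (Sig x c ^ 2 * Sig c y ^ 2) * (Sig x x * Sig y y)
                ≤ (Sig x y ^ 2 * Sig c c ^ 2) * (Sig x x * Sig y y) := by nlinarith [tri]
            have traw2 := le_of_mul_le_mul_right traw (mul_pos hXx hYy)
            -- identity : Sig x y * (Sig' m m * Sig c c ^ 2) = Sig x c * Sig y c * Sig c m ^ 2
            have e3 : Sig x y * (Sig' m m * Sig c c ^ 2)
                = (Sig x c * Sig y c) * Sig c m ^ 2 := by
              linear_combination Sig c c ^ 2 * hE3 + Sig m y * Sig c c * e1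
                + Sig x c * Sig c m * Sig c c * (hsymS m y) + Sig x c * Sig c m * e2
            -- squared identity and bound
            have e3sq : Sig x y ^ 2 * (Sig' m m ^ 2 * Sig c c ^ 4)
                = (Sig x c ^ 2 * Sig y c ^ 2) * Sig c m ^ 4 := by
              linear_combination (Sig x y * (Sig' m m * Sig c c ^ 2)
                + (Sig x c * Sig y c) * Sig c m ^ 2) * e3
            rw [hsymS y c] at e3sq
            have hb1 : Sig x y ^ 2 * (Sig' m m ^ 2 * Sig c c ^ 4)
                ≤ Sig x y ^ 2 * (Sig c c ^ 2 * Sig c m ^ 4) := by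
              nlinarith [e3sq, mul_le_mul_of_nonneg_right traw2 (sq_nonneg (Sig c m ^ 2))]
            have hxy0 : Sig x y ≠ 0 := offdiag_ne hTree hPD hCI hxy
            have hxy2 : 0 < Sig x y ^ 2 :=
              lt_of_le_of_ne (sq_nonneg _) (Ne.symm (pow_ne_zero 2 hxy0))
            have hb2 := le_of_mul_le_mul_left hb1 hxy2
            -- (Sig' m m * Sig c c)^2 ≤ (Sig c m ^2)^2
            have hb3 : (Sig' m m * Sig c c) ^ 2 ≤ (Sig c m ^ 2) ^ 2 := by
              have hcc2 : 0 < Sig c c ^ 2 :=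
                lt_of_le_of_ne (sq_nonneg _) (Ne.symm (pow_ne_zero 2 hCc.ne'))
              have h7 : Sig c c ^ 2 * (Sig' m m * Sig c c) ^ 2
                  ≤ Sig c c ^ 2 * (Sig c m ^ 2) ^ 2 := by nlinarith [hb2]
              exact le_of_mul_le_mul_left h7 hcc2
            have hpos : 0 < Sig' m m * Sig c c := mul_pos hMm' hCc
            nlinarith [hb3, hpos, sq_nonneg (Sig c m)]
      -- the analytic contradiction
      have hlamm : lam0 ≤ Sig' m m := diag_lb hmin' m
      have hpair : (Sig' m c) ^ 2 ≤ (Sig' m m - lam0) * (Sig' c c - lam0) :=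
        pair_psd hmin' (hsymS' c m) hmc
      rw [hoff m c hmc] at hpair
      have hscm : Sig m c = Sig c m := hsymS m c
      have hccle : Sig' c c ≤ Sig c c + Dstar c c := by
        have := hdiagsum c
        have h2 := hD'.2 c
        linarith
      rw [hscm] at hpair
      have h9 : Sig' m m * Sig c c ≤ (Sig' m m - lam0) * (Sig' c c - lam0) :=
        le_trans hmain hpair
      have hA : 0 ≤ Sig' m m - lam0 := sub_nonneg.mpr hlamm
      have h10 : Sig' c c - lam0 ≤ Sig c c := by linarith
      have h11 : (Sig' m m - lam0) * (Sig' c c - lam0) ≤ (Sig' m m - lam0) * Sig c c :=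
        mul_le_mul_of_nonneg_left h10 hA
      nlinarith [h9, h11, mul_pos hlam0 hCc]
  exact (tree_eq_of_le hTree hTree' (fun a b h => key a b h)).symm
end

section
/- Let n ≥ 3, let Σ be an n×n positive definite real matrix with Ω = Σ⁻¹, let a ≠ b be indices such that a is a leaf attached to b in Ω, let c > 0, and set Σ' = Σ − (1/Ω_{aa})·E_{aa} + c·E_{bb}. Define e = 1 + Ω_{aa}/|Ω_{ab}|, f = Ω_{aa}²/Ω_{ab}² + Ω_{aa}/|Ω_{ab}|, g = Ω_{aa}(Ω_{aa}Ω_{bb} − Ω_{ab}²)/Ω_{ab}² + Σ_{j∉{a,b}} Ω_{aa}|Ω_{bj}|/|Ω_{ab}|, and h = max_{i∉{a,b}} ( Σ_{j∉{a,b}} |Ω_{ij}| + Ω_{aa}|Ω_{bi}|/|Ω_{ab}| ). Then Σ' is positive definite and xᵀΣ'x ≥ (max(e/c, f/c + g, h))⁻¹·‖x‖² for all vectors x; that is, every eigenvalue of Σ' is at least 1/max(e/c, f/c + g, h). -/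
open Matrix

/-- In the precision matrix `Om`, node `a` is a leaf attached to node `b`. -/
def IsLeafAttached {n : ℕ} (Om : Matrix (Fin n) (Fin n) ℝ) (a b : Fin n) : Prop :=
  (∀ i : Fin n, i ≠ a → i ≠ b → Om i a = 0) ∧ Om a b ≠ 0

/-- Explicit inverse of the perturbed covariance matrix. -/
noncomputable def invP {n : ℕ} (Om : Matrix (Fin n) (Fin n) ℝ) (a b : Fin n) (c : ℝ) :
    Matrix (Fin n) (Fin n) ℝ :=
  Matrix.of fun i j =>
    if i = a then
      (if j = a then Om a a ^ 2 / (c * Om a b ^ 2)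
          + Om a a * (Om a a * Om b b - Om a b ^ 2) / Om a b ^ 2
       else if j = b then Om a a / (c * Om a b)
       else -(Om a a / Om a b) * Om b j)
    else if i = b then
      (if j = a then Om a a / (c * Om a b) else if j = b then 1 / c else 0)
    else
      (if j = a then -(Om a a / Om a b) * Om b i else if j = b then 0 else Om i j)

/-- Symmetric dot-product swap. -/
lemma dot_symm {n : ℕ} (A : Matrix (Fin n) (Fin n) ℝ) (hA : ∀ i j, A i j = A j i)
    (v w : Fin n → ℝ) : v ⬝ᵥ A *ᵥ w = w ⬝ᵥ A *ᵥ v := by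
  calc v ⬝ᵥ A *ᵥ w = ∑ i, ∑ j, v i * (A i j * w j) := by
        simp [dotProduct, mulVec, Finset.mul_sum]
    _ = ∑ j, ∑ i, w j * (A j i * v i) := by
        rw [Finset.sum_comm]
        refine Finset.sum_congr rfl fun j _ => Finset.sum_congr rfl fun i _ => ?_
        rw [hA i j]; ring
    _ = w ⬝ᵥ A *ᵥ v := by simp [dotProduct, mulVec, Finset.mul_sum]

/-- Gershgorin-type quadratic form bound for a symmetric matrix. -/
lemma gersh_bound {n : ℕ} (A : Matrix (Fin n) (Fin n) ℝ) (hA : ∀ i j, A i j = A j i)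
    (M : ℝ) (hrow : ∀ i, ∑ j, |A i j| ≤ M) (x : Fin n → ℝ) :
    x ⬝ᵥ A *ᵥ x ≤ M * (x ⬝ᵥ x) := by
  have key : ∀ r u v : ℝ, u * (r * v) ≤ |r| * u ^ 2 / 2 + |r| * v ^ 2 / 2 := by
    intro r u v
    have h1 : u * (r * v) ≤ |r| * (|u| * |v|) := by
      calc u * (r * v) ≤ |u * (r * v)| := le_abs_self _
        _ = |r| * (|u| * |v|) := by rw [abs_mul, abs_mul]; ring
    have h2 : |u| * |v| ≤ (u ^ 2 + v ^ 2) / 2 := by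
      nlinarith [sq_abs u, sq_abs v, sq_nonneg (|u| - |v|)]
    nlinarith [abs_nonneg r]
  calc x ⬝ᵥ A *ᵥ x = ∑ i, ∑ j, x i * (A i j * x j) := by
        simp [dotProduct, mulVec, Finset.mul_sum]
    _ ≤ ∑ i, ∑ j, (|A i j| * (x i) ^ 2 / 2 + |A i j| * (x j) ^ 2 / 2) := by
        refine Finset.sum_le_sum fun i _ => Finset.sum_le_sum fun j _ => key _ _ _
    _ = ∑ i, ∑ j, |A i j| * (x i) ^ 2 / 2 + ∑ i, ∑ j, |A i j| * (x j) ^ 2 / 2 := by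
        rw [← Finset.sum_add_distrib]
        exact Finset.sum_congr rfl fun i _ => Finset.sum_add_distrib
    _ = ∑ i, ∑ j, |A i j| * (x i) ^ 2 / 2 + ∑ i, ∑ j, |A j i| * (x i) ^ 2 / 2 := by
        rw [Finset.sum_comm (f := fun i j => |A i j| * (x j) ^ 2 / 2)]
    _ = ∑ i, (∑ j, |A i j|) * (x i) ^ 2 := by
        rw [← Finset.sum_add_distrib]
        refine Finset.sum_congr rfl fun i _ => ?_
        rw [Finset.sum_mul]
        rw [← Finset.sum_add_distrib]
        refine Finset.sum_congr rfl fun j _ => ?_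
        rw [hA j i]; ring
    _ ≤ ∑ i, M * (x i) ^ 2 := by
        refine Finset.sum_le_sum fun i _ => ?_
        exact mul_le_mul_of_nonneg_right (hrow i) (sq_nonneg _)
    _ = M * (x ⬝ᵥ x) := by
        rw [← Finset.mul_sum, dotProduct]
        congr 1
        exact Finset.sum_congr rfl fun i _ => by ring

set_option maxHeartbeats 1600000 in
theorem stmt_7 {n : ℕ} (hn : 3 ≤ n)
    (Sig : Matrix (Fin n) (Fin n) ℝ) (hPD : Sig.PosDef)
    (Om : Matrix (Fin n) (Fin n) ℝ) (hOm : Om = Sig⁻¹)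
    (a b : Fin n) (hab : a ≠ b) (hleaf : IsLeafAttached Om a b)
    (c : ℝ) (hc : 0 < c)
    (Sig' : Matrix (Fin n) (Fin n) ℝ)
    (hSig' : Sig' = Sig - Matrix.single a a (1 / Om a a) + Matrix.single b b c)
    (e f g h : ℝ)
    (he : e = 1 + Om a a / |Om a b|)
    (hf : f = (Om a a) ^ 2 / (Om a b) ^ 2 + Om a a / |Om a b|)
    (hg : g = Om a a * (Om a a * Om b b - (Om a b) ^ 2) / (Om a b) ^ 2 +
      ∑ j ∈ ({a, b} : Finset (Fin n))ᶜ, Om a a * |Om b j| / |Om a b|)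
    (hh : h = ⨆ i : {i : Fin n // i ≠ a ∧ i ≠ b},
      (∑ j ∈ ({a, b} : Finset (Fin n))ᶜ, |Om i.1 j|) + Om a a * |Om b i.1| / |Om a b|) :
    Sig'.PosDef ∧
      ∀ x : Fin n → ℝ, (max (e / c) (max (f / c + g) h))⁻¹ * (x ⬝ᵥ x) ≤ x ⬝ᵥ (Sig' *ᵥ x) := by
  obtain ⟨hleaf0, hs0⟩ := hleaf
  have hdet : IsUnit Sig.det := hPD.det_pos.ne'.isUnit
  have hOS : Om * Sig = 1 := by rw [hOm]; exact Sig.nonsing_inv_mul hdet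
  have hSO : Sig * Om = 1 := by rw [hOm]; exact Sig.mul_nonsing_inv hdet
  have hOmPD : Om.PosDef := hOm ▸ hPD.inv
  have hSymS : ∀ i j, Sig i j = Sig j i := by
    intro i j
    have := hPD.1.apply i j
    simpa using this.symm
  have hSymO : ∀ i j, Om i j = Om j i := by
    intro i j
    have := hOmPD.1.apply i j
    simpa using this.symm
  -- splitting sums over {a, b} and its complement
  have hsplit : ∀ F : Fin n → ℝ,
      ∑ k, F k = F a + F b + ∑ k ∈ ({a, b} : Finset (Fin n))ᶜ, F k := by
    intro F
    rw [← Finset.sum_add_sum_compl ({a, b} : Finset (Fin n)) F]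
    congr 1
    rw [Finset.sum_insert (by simp [hab]), Finset.sum_singleton]
  have hmem : ∀ k : Fin n, k ∈ ({a, b} : Finset (Fin n))ᶜ ↔ (k ≠ a ∧ k ≠ b) := by
    intro k; simp [not_or]
  -- positivity facts
  have hα : 0 < Om a a := by
    have hne : (Pi.single a 1 : Fin n → ℝ) ≠ 0 := by
      intro H
      simpa using congrFun H a
    have h0 := hOmPD.dotProduct_mulVec_pos hne
    simpa [dotProduct, mulVec, Pi.single_apply, mul_comm] using h0
  have habs : 0 < |Om a b| := abs_pos.mpr hs0
  have hminor : 0 < Om a a * Om b b - Om a b ^ 2 := by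
    set x : Fin n → ℝ := fun k =>
      (if k = a then Om a b else 0) + (if k = b then -Om a a else 0) with hxdef
    have hxsupp : ∀ k, k ≠ a → k ≠ b → x k = 0 := by
      intro k h1 h2; simp [hxdef, h1, h2]
    have hxa : x a = Om a b := by simp [hxdef, hab]
    have hxb : x b = -Om a a := by simp [hxdef, hab.symm]
    have hxne : x ≠ 0 := by
      intro H
      have := congrFun H a
      rw [hxa] at this
      exact hs0 this
    have hinner : ∀ i, (Om *ᵥ x) i = Om i a * x a + Om i b * x b := by
      intro i
      show ∑ j, Om i j * x j = _
      rw [hsplit (fun j => Om i j * x j)]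
      rw [Finset.sum_eq_zero, add_zero]
      intro k hk
      rw [hxsupp k ((hmem k).mp hk).1 ((hmem k).mp hk).2, mul_zero]
    have h0 := hOmPD.dotProduct_mulVec_pos hxne
    have hq : x ⬝ᵥ Om *ᵥ x = Om a a * (Om a a * Om b b - Om a b ^ 2) := by
      show ∑ i, x i * (Om *ᵥ x) i = _
      rw [hsplit (fun i => x i * (Om *ᵥ x) i)]
      rw [Finset.sum_eq_zero, add_zero, hinner, hinner, hxa, hxb]
      · rw [hSymO b a]; ring
      · intro k hk
        rw [hxsupp k ((hmem k).mp hk).1 ((hmem k).mp hk).2, zero_mul]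
    rw [show (star x : Fin n → ℝ) = x from star_trivial x, hq] at h0
    nlinarith
  -- entries of Sig'
  have hS' : ∀ k j, Sig' k j = Sig k j - (if a = k ∧ a = j then 1 / Om a a else 0)
      + (if b = k ∧ b = j then c else 0) := by
    intro k j
    rw [hSig']
    simp [Matrix.sub_apply, Matrix.add_apply, Matrix.single, Matrix.of_apply]
  -- row identities of Om * Sig = 1
  have hrowOS : ∀ i j, Om i a * Sig a j + Om i b * Sig b j
      + ∑ k ∈ ({a, b} : Finset (Fin n))ᶜ, Om i k * Sig k j
      = (if i = j then (1 : ℝ) else 0) := by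
    intro i j
    have h0 : (Om * Sig) i j = (1 : Matrix (Fin n) (Fin n) ℝ) i j := by rw [hOS]
    rw [Matrix.mul_apply, Matrix.one_apply, hsplit (fun k => Om i k * Sig k j)] at h0
    exact h0
  have hI1 : ∀ j, Om a a * Sig a j + Om a b * Sig b j = (if a = j then (1 : ℝ) else 0) := by
    intro j
    have h0 := hrowOS a j
    rw [Finset.sum_eq_zero, add_zero] at h0
    · simpa [eq_comm] using h0
    · intro k hk
      rw [hSymO a k, hleaf0 k ((hmem k).mp hk).1 ((hmem k).mp hk).2, zero_mul]
  -- the explicit inverse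
  have hInv : invP Om a b c * Sig' = 1 := by
    ext i j
    rw [Matrix.mul_apply, Matrix.one_apply, hsplit (fun k => invP Om a b c i k * Sig' k j)]
    have hS'a : Sig' a j = Sig a j - (if a = j then 1 / Om a a else 0) := by
      rw [hS']; simp [hab, Ne.symm hab]
    have hS'b : Sig' b j = Sig b j + (if b = j then c else 0) := by
      rw [hS']; simp [hab, Ne.symm hab]
    have hS'c : ∀ k, k ≠ a → k ≠ b → Sig' k j = Sig k j := by
      intro k h1 h2; rw [hS']; simp [Ne.symm h1, Ne.symm h2]
    have hA1 : Sig a j = ((if a = j then (1:ℝ) else 0) - Om a b * Sig b j) / Om a a := by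
      field_simp
      linarith [hI1 j]
    by_cases hia : i = a
    · subst hia
      have hsum : ∑ k ∈ ({i, b} : Finset (Fin n))ᶜ, invP Om i b c i k * Sig' k j
          = -(Om i i / Om i b) * ((if b = j then (1:ℝ) else 0)
              - Om i b * Sig i j - Om b b * Sig b j) := by
        have h1 : ∀ k ∈ ({i, b} : Finset (Fin n))ᶜ,
            invP Om i b c i k * Sig' k j = -(Om i i / Om i b) * (Om b k * Sig k j) := by
          intro k hk
          obtain ⟨hk1, hk2⟩ := (hmem k).mp hk
          rw [hS'c k hk1 hk2]
          have hv : invP Om i b c i k = -(Om i i / Om i b) * Om b k := by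
            simp [invP, hk1, hk2, Ne.symm hk1, Ne.symm hk2, hab, Ne.symm hab]
          rw [hv]; ring
        rw [Finset.sum_congr rfl h1, ← Finset.mul_sum]
        congr 1
        have h0 := hrowOS b j
        rw [hSymO b i] at h0
        linarith [h0]
      have hiv1 : invP Om i b c i i = Om i i ^ 2 / (c * Om i b ^ 2)
          + Om i i * (Om i i * Om b b - Om i b ^ 2) / Om i b ^ 2 := by
        simp [invP]
      have hiv2 : invP Om i b c i b = Om i i / (c * Om i b) := by
        simp [invP, hab, Ne.symm hab]
      rw [hsum, hS'a, hS'b, hiv1, hiv2, hA1]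
      split_ifs <;> field_simp <;> ring
    · by_cases hib : i = b
      · subst hib
        have hsum : ∑ k ∈ ({a, i} : Finset (Fin n))ᶜ, invP Om a i c i k * Sig' k j = 0 := by
          apply Finset.sum_eq_zero
          intro k hk
          obtain ⟨hk1, hk2⟩ := (hmem k).mp hk
          have hv : invP Om a i c i k = 0 := by
            simp [invP, hk1, hk2, Ne.symm hab, Ne.symm hk1, Ne.symm hk2]
          rw [hv, zero_mul]
        have hiv1 : invP Om a i c i a = Om a a / (c * Om a i) := by
          simp [invP, Ne.symm hab]
        have hiv2 : invP Om a i c i i = 1 / c := by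
          simp [invP, Ne.symm hab]
        rw [hsum, hS'a, hS'b, hiv1, hiv2, hA1]
        split_ifs <;> field_simp <;> ring
      · have hsum : ∑ k ∈ ({a, b} : Finset (Fin n))ᶜ, invP Om a b c i k * Sig' k j
            = (if i = j then (1:ℝ) else 0) - Om b i * Sig b j := by
          have h1 : ∀ k ∈ ({a, b} : Finset (Fin n))ᶜ,
              invP Om a b c i k * Sig' k j = Om i k * Sig k j := by
            intro k hk
            obtain ⟨hk1, hk2⟩ := (hmem k).mp hk
            rw [hS'c k hk1 hk2]
            have hv : invP Om a b c i k = Om i k := by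
              simp [invP, hia, hib, hk1, hk2]
            rw [hv]
          rw [Finset.sum_congr rfl h1]
          have h0 := hrowOS i j
          rw [hleaf0 i hia hib, hSymO i b] at h0
          linarith [h0]
        have hiv1 : invP Om a b c i a = -(Om a a / Om a b) * Om b i := by
          simp [invP, hia, hib, hab, Ne.symm hab]
        have hiv2 : invP Om a b c i b = 0 := by
          simp [invP, hia, hib, hab, Ne.symm hab]
        rw [hsum, hS'a, hS'b, hiv1, hiv2, hA1]
        split_ifs <;> field_simp <;> ring
  have hInv' : Sig' * invP Om a b c = 1 := mul_eq_one_comm.mp hInv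
  -- symmetry of invP
  have hWsym : ∀ i j, invP Om a b c i j = invP Om a b c j i := by
    intro i j
    by_cases h1 : i = a <;> by_cases h2 : i = b <;> by_cases h3 : j = a <;> by_cases h4 : j = b
    all_goals try exact absurd (h1.symm.trans h2) hab
    all_goals try exact absurd (h3.symm.trans h4) hab
    all_goals simp [invP, h1, h2, h3, h4, hab, Ne.symm hab, hSymO i j]
  -- upper bound for each absolute row sum
  have hbdd : BddAbove (Set.range (fun i : {i : Fin n // i ≠ a ∧ i ≠ b} =>
      (∑ j ∈ ({a, b} : Finset (Fin n))ᶜ, |Om i.1 j|) + Om a a * |Om b i.1| / |Om a b|)) :=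
    Set.Finite.bddAbove (Set.finite_range _)
  have hrowsum : ∀ i, ∑ j, |invP Om a b c i j| ≤ max (e / c) (max (f / c + g) h) := by
    intro i
    rw [hsplit (fun j => |invP Om a b c i j|)]
    by_cases h1 : i = a
    · subst h1
      have hv1 : |invP Om i b c i i| = Om i i ^ 2 / (c * Om i b ^ 2)
          + Om i i * (Om i i * Om b b - Om i b ^ 2) / Om i b ^ 2 := by
        have e1 : invP Om i b c i i = Om i i ^ 2 / (c * Om i b ^ 2)
            + Om i i * (Om i i * Om b b - Om i b ^ 2) / Om i b ^ 2 := by simp [invP]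
        rw [e1, abs_of_nonneg]
        exact add_nonneg (div_nonneg (sq_nonneg _) (mul_nonneg hc.le (sq_nonneg _)))
          (div_nonneg (mul_nonneg hα.le hminor.le) (sq_nonneg _))
      have hv2 : |invP Om i b c i b| = Om i i / (c * |Om i b|) := by
        have e1 : invP Om i b c i b = Om i i / (c * Om i b) := by
          simp [invP, hab, Ne.symm hab]
        rw [e1, abs_div, abs_mul, abs_of_pos hα, abs_of_pos hc]
      have hv3 : (∑ k ∈ ({i, b} : Finset (Fin n))ᶜ, |invP Om i b c i k|)
          = ∑ k ∈ ({i, b} : Finset (Fin n))ᶜ, Om i i * |Om b k| / |Om i b| := by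
        refine Finset.sum_congr rfl fun k hk => ?_
        obtain ⟨hk1, hk2⟩ := (hmem k).mp hk
        have e1 : invP Om i b c i k = -(Om i i / Om i b * Om b k) := by
          simp [invP, hk1, hk2, Ne.symm hk1, Ne.symm hk2, hab, Ne.symm hab]
        rw [e1, abs_neg, abs_mul, abs_div, abs_of_pos hα]
        ring
      rw [hv1, hv2, hv3, hf, hg]
      refine le_trans (le_of_eq ?_) (le_trans (le_max_left _ h) (le_max_right (e / c) _))
      ring
    · by_cases h2 : i = b
      · subst h2
        have hv1 : |invP Om a i c i a| = Om a a / (c * |Om a i|) := by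
          have e1 : invP Om a i c i a = Om a a / (c * Om a i) := by
            simp [invP, Ne.symm hab]
          rw [e1, abs_div, abs_mul, abs_of_pos hα, abs_of_pos hc]
        have hv2 : |invP Om a i c i i| = 1 / c := by
          have e1 : invP Om a i c i i = 1 / c := by simp [invP, Ne.symm hab]
          rw [e1, abs_of_pos (by positivity)]
        have hv3 : (∑ k ∈ ({a, i} : Finset (Fin n))ᶜ, |invP Om a i c i k|) = 0 := by
          refine Finset.sum_eq_zero fun k hk => ?_
          obtain ⟨hk1, hk2⟩ := (hmem k).mp hk
          have e1 : invP Om a i c i k = 0 := by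
            simp [invP, hk1, hk2, Ne.symm hk1, Ne.symm hk2, Ne.symm hab]
          rw [e1, abs_zero]
        rw [hv1, hv2, hv3, add_zero]
        refine le_trans (le_of_eq ?_) (le_max_left _ _)
        rw [he]
        field_simp
        ring
      · have hv1 : |invP Om a b c i a| = Om a a * |Om b i| / |Om a b| := by
          have e1 : invP Om a b c i a = -(Om a a / Om a b) * Om b i := by
            simp [invP, h1, h2, hab, Ne.symm hab]
          rw [e1, abs_mul, abs_neg, abs_div, abs_of_pos hα]
          ring
        have hv2 : |invP Om a b c i b| = 0 := by
          have e1 : invP Om a b c i b = 0 := by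
            simp [invP, h1, h2, hab, Ne.symm hab]
          rw [e1, abs_zero]
        have hv3 : (∑ k ∈ ({a, b} : Finset (Fin n))ᶜ, |invP Om a b c i k|)
            = ∑ k ∈ ({a, b} : Finset (Fin n))ᶜ, |Om i k| := by
          refine Finset.sum_congr rfl fun k hk => ?_
          obtain ⟨hk1, hk2⟩ := (hmem k).mp hk
          have e1 : invP Om a b c i k = Om i k := by
            simp [invP, h1, h2, hk1, hk2]
          rw [e1]
        rw [hv1, hv2, hv3, add_zero]
        have hle : (∑ j ∈ ({a, b} : Finset (Fin n))ᶜ, |Om i j|)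
            + Om a a * |Om b i| / |Om a b| ≤ h := by
          rw [hh]
          exact le_ciSup hbdd (⟨i, h1, h2⟩ : {i : Fin n // i ≠ a ∧ i ≠ b})
        refine le_trans (le_of_eq (by ring)) (le_trans hle (le_trans (le_max_right _ _)
          (le_max_right _ _)))
  -- positivity of M
  have he' : 0 < e := by
    rw [he]
    have : 0 ≤ Om a a / |Om a b| := div_nonneg hα.le (abs_nonneg _)
    linarith
  have hM0 : 0 < max (e / c) (max (f / c + g) h) :=
    lt_of_lt_of_le (div_pos he' hc) (le_max_left _ _)
  -- quadratic form of Sig'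
  have hquad : ∀ x : Fin n → ℝ, x ⬝ᵥ Sig' *ᵥ x
      = x ⬝ᵥ Sig *ᵥ x - (x a) ^ 2 / Om a a + c * (x b) ^ 2 := by
    intro x
    have hmv : Sig' *ᵥ x = fun k => (Sig *ᵥ x) k - (if a = k then (1 / Om a a) * x a else 0)
        + (if b = k then c * x b else 0) := by
      funext k
      show ∑ j, Sig' k j * x j = _
      have h1 : ∀ j, Sig' k j * x j = Sig k j * x j
          - (if a = k then (if a = j then (1 / Om a a) * x j else 0) else 0)
          + (if b = k then (if b = j then c * x j else 0) else 0) := by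
        intro j; rw [hS']
        by_cases q1 : a = k <;> by_cases q2 : a = j <;> by_cases q3 : b = k <;>
          by_cases q4 : b = j <;> simp [q1, q2, q3, q4] <;> split_ifs <;> ring
      rw [Finset.sum_congr rfl fun j _ => h1 j, Finset.sum_add_distrib, Finset.sum_sub_distrib]
      congr 1
      · congr 1
        by_cases q1 : a = k
        · simp [q1, Finset.sum_ite_eq]
        · simp [q1]
      · by_cases q3 : b = k
        · simp [q3, Finset.sum_ite_eq]
        · simp [q3]
    rw [hmv]
    show ∑ k, x k * _ = _
    have h2 : ∀ k, x k * ((Sig *ᵥ x) k - (if a = k then (1 / Om a a) * x a else 0)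
        + (if b = k then c * x b else 0))
        = x k * (Sig *ᵥ x) k - (if a = k then (1 / Om a a) * x a * x k else 0)
          + (if b = k then c * x b * x k else 0) := by
      intro k; by_cases q1 : a = k <;> by_cases q3 : b = k <;> simp [q1, q3] <;> ring
    rw [Finset.sum_congr rfl fun k _ => h2 k, Finset.sum_add_distrib, Finset.sum_sub_distrib,
      Finset.sum_ite_eq, Finset.sum_ite_eq]
    simp only [Finset.mem_univ, if_true]
    have : x ⬝ᵥ Sig *ᵥ x = ∑ k, x k * (Sig *ᵥ x) k := rfl
    rw [this]
    field_simp
  -- symmetry of Sig'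
  have hSig'sym : ∀ i j, Sig' i j = Sig' j i := by
    intro i j
    rw [hS', hS', hSymS i j]
    by_cases q1 : a = i <;> by_cases q2 : a = j <;> by_cases q3 : b = i <;> by_cases q4 : b = j <;>
      simp [q1, q2, q3, q4]
  have hHerm : Sig'.IsHermitian := by
    unfold Matrix.IsHermitian
    ext i j
    rw [Matrix.conjTranspose_apply, star_trivial]
    exact hSig'sym j i
  -- auxiliary facts for positive definiteness
  have hSigu : ∀ k, (∑ j, Sig k j * Om j a) = (if k = a then (1:ℝ) else 0) := by
    intro k
    have h0 : (Sig * Om) k a = (1 : Matrix (Fin n) (Fin n) ℝ) k a := by rw [hSO]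
    rw [Matrix.mul_apply, Matrix.one_apply] at h0
    exact h0
  have hPD' : Sig'.PosDef := by
    refine Matrix.PosDef.of_dotProduct_mulVec_pos hHerm fun x hx => ?_
    rw [show (star x : Fin n → ℝ) = x from star_trivial x, hquad x]
    set t : ℝ := x a / Om a a with htdef
    set y : Fin n → ℝ := fun k => x k - t * Om k a with hydef
    have hSy : ∀ k, (Sig *ᵥ y) k = (Sig *ᵥ x) k - t * (if k = a then 1 else 0) := by
      intro k
      show ∑ j, Sig k j * y j = _
      have h1 : ∀ j, Sig k j * y j = Sig k j * x j - t * (Sig k j * Om j a) := by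
        intro j; simp only [hydef]; ring
      rw [Finset.sum_congr rfl fun j _ => h1 j, Finset.sum_sub_distrib, ← Finset.mul_sum,
        hSigu k]
      rfl
    have huSx : ∑ k, Om k a * (Sig *ᵥ x) k = x a := by
      calc ∑ k, Om k a * (Sig *ᵥ x) k = (fun k => Om k a) ⬝ᵥ Sig *ᵥ x := rfl
        _ = x ⬝ᵥ Sig *ᵥ (fun k => Om k a) := dot_symm Sig hSymS _ x
        _ = ∑ k, x k * (if k = a then 1 else 0) := by
            refine Finset.sum_congr rfl fun k _ => ?_
            rw [show (Sig *ᵥ (fun k => Om k a)) k = ∑ j, Sig k j * Om j a from rfl, hSigu k]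
        _ = x a := by simp [mul_ite, Finset.sum_ite_eq']
    have hyq : y ⬝ᵥ Sig *ᵥ y = x ⬝ᵥ Sig *ᵥ x - (x a) ^ 2 / Om a a := by
      have hds : y ⬝ᵥ Sig *ᵥ y = ∑ k, y k * ((Sig *ᵥ x) k - t * (if k = a then 1 else 0)) :=
        Finset.sum_congr rfl fun k _ => by rw [hSy k]
      rw [hds]
      have h1 : ∀ k, y k * ((Sig *ᵥ x) k - t * (if k = a then 1 else 0))
          = x k * (Sig *ᵥ x) k - t * (Om k a * (Sig *ᵥ x) k)
            - (if k = a then (x k - t * Om k a) * t else 0) := by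
        intro k; simp only [hydef]; by_cases q : k = a <;> simp [q] <;> ring
      rw [Finset.sum_congr rfl fun k _ => h1 k, Finset.sum_sub_distrib, Finset.sum_sub_distrib,
        ← Finset.mul_sum, Finset.sum_ite_eq' Finset.univ a (fun k => (x k - t * Om k a) * t),
        huSx]
      simp only [Finset.mem_univ, if_true]
      have : x ⬝ᵥ Sig *ᵥ x = ∑ k, x k * (Sig *ᵥ x) k := rfl
      rw [this, htdef]
      field_simp
      ring
    by_cases hxb : x b = 0
    · have hyne : y ≠ 0 := by
        intro H
        apply hx
        have ht0 : t = 0 := by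
          have hk := congrFun H b
          simp only [hydef, Pi.zero_apply] at hk
          have h2 : t * Om b a = 0 := by linarith [hk, hxb]
          rcases mul_eq_zero.mp h2 with h3 | h3
          · exact h3
          · exact absurd (h3 ▸ hSymO b a ▸ h3) (by rw [hSymO b a] at h3; exact absurd h3 (by rw [hSymO a b] at hs0 ⊢; exact hs0))
        funext k
        have hk := congrFun H k
        simp only [hydef, Pi.zero_apply, ht0, zero_mul, sub_zero] at hk
        exact hk
      have h2 : 0 < y ⬝ᵥ Sig *ᵥ y := by
        have := hPD.dotProduct_mulVec_pos hyne
        simpa using this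
      have h3 : c * x b ^ 2 = 0 := by rw [hxb]; ring
      linarith [hyq]
    · have h2 : 0 ≤ y ⬝ᵥ Sig *ᵥ y := by
        have := hPD.posSemidef.dotProduct_mulVec_nonneg y
        simpa using this
      have h3 : 0 < c * x b ^ 2 :=
        mul_pos hc ((sq_nonneg (x b)).lt_of_ne (Ne.symm (pow_ne_zero 2 hxb)))
      linarith [hyq]
  refine ⟨hPD', fun x => ?_⟩
  by_cases hx0 : x = 0
  · subst hx0
    simp
  · set M : ℝ := max (e / c) (max (f / c + g) h) with hMdef
    set u : Fin n → ℝ := invP Om a b c *ᵥ x with hudef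
    have hSu : Sig' *ᵥ u = x := by
      rw [hudef, Matrix.mulVec_mulVec, hInv', Matrix.one_mulVec]
    have hune : u ≠ 0 := by
      intro H
      apply hx0
      rw [← hSu, H, Matrix.mulVec_zero]
    have hN : 0 < x ⬝ᵥ x := by
      obtain ⟨i, hi⟩ := Function.ne_iff.mp hx0
      have hi' : x i ≠ 0 := by simpa using hi
      exact Finset.sum_pos' (fun k _ => mul_self_nonneg (x k))
        ⟨i, Finset.mem_univ i, mul_self_pos.mpr hi'⟩
    have hR : 0 < x ⬝ᵥ u := by
      have h1 : x ⬝ᵥ u = u ⬝ᵥ Sig' *ᵥ u := by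
        rw [hSu, dotProduct_comm]
      rw [h1]
      have := hPD'.dotProduct_mulVec_pos hune
      simpa using this
    have hRM : x ⬝ᵥ u ≤ M * (x ⬝ᵥ x) := by
      rw [hudef]
      exact gersh_bound _ hWsym M hrowsum x
    set t : ℝ := (x ⬝ᵥ x) / (x ⬝ᵥ u) with htdef
    set z : Fin n → ℝ := fun k => x k - t * u k with hzdef
    have hSz : ∀ k, (Sig' *ᵥ z) k = (Sig' *ᵥ x) k - t * x k := by
      intro k
      show ∑ j, Sig' k j * z j = _
      have h1 : ∀ j, Sig' k j * z j = Sig' k j * x j - t * (Sig' k j * u j) := by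
        intro j; simp only [hzdef]; ring
      rw [Finset.sum_congr rfl fun j _ => h1 j, Finset.sum_sub_distrib, ← Finset.mul_sum]
      congr 2
      exact congrFun hSu k
    have huSx : ∑ k, u k * (Sig' *ᵥ x) k = x ⬝ᵥ x := by
      calc ∑ k, u k * (Sig' *ᵥ x) k = u ⬝ᵥ Sig' *ᵥ x := rfl
        _ = x ⬝ᵥ Sig' *ᵥ u := dot_symm Sig' hSig'sym u x
        _ = x ⬝ᵥ x := by rw [hSu]
    have hexp : z ⬝ᵥ Sig' *ᵥ z
        = x ⬝ᵥ Sig' *ᵥ x - 2 * t * (x ⬝ᵥ x) + t ^ 2 * (x ⬝ᵥ u) := by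
      have hds : z ⬝ᵥ Sig' *ᵥ z = ∑ k, z k * ((Sig' *ᵥ x) k - t * x k) :=
        Finset.sum_congr rfl fun k _ => by rw [hSz k]
      rw [hds]
      have h1 : ∀ k, z k * ((Sig' *ᵥ x) k - t * x k)
          = x k * (Sig' *ᵥ x) k - t * (u k * (Sig' *ᵥ x) k)
            - t * (x k * x k) + t ^ 2 * (u k * x k) := by
        intro k; simp only [hzdef]; ring
      rw [Finset.sum_congr rfl fun k _ => h1 k]
      rw [Finset.sum_add_distrib, Finset.sum_sub_distrib, Finset.sum_sub_distrib,
        ← Finset.mul_sum, ← Finset.mul_sum, ← Finset.mul_sum, huSx]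
      have e1 : ∑ k, x k * (Sig' *ᵥ x) k = x ⬝ᵥ Sig' *ᵥ x := rfl
      have e2 : ∑ k, x k * x k = x ⬝ᵥ x := rfl
      have e3 : ∑ k, u k * x k = x ⬝ᵥ u := by rw [dotProduct_comm]; rfl
      rw [e1, e2, e3]
      ring
    have hz : 0 ≤ z ⬝ᵥ Sig' *ᵥ z := by
      have := hPD'.posSemidef.dotProduct_mulVec_nonneg z
      simpa using this
    have htR : t * (x ⬝ᵥ u) = x ⬝ᵥ x := div_mul_cancel₀ _ hR.ne'
    have hP : t * (x ⬝ᵥ x) ≤ x ⬝ᵥ Sig' *ᵥ x := by nlinarith [hexp, hz, htR]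
    have hMt : M⁻¹ ≤ t := by
      rw [htdef, le_div_iff₀ hR]
      calc M⁻¹ * (x ⬝ᵥ u) ≤ M⁻¹ * (M * (x ⬝ᵥ x)) := by
            exact mul_le_mul_of_nonneg_left hRM (inv_nonneg.mpr hM0.le)
        _ = x ⬝ᵥ x := by field_simp
    calc M⁻¹ * (x ⬝ᵥ x) ≤ t * (x ⬝ᵥ x) := mul_le_mul_of_nonneg_right hMt hN.le
      _ ≤ x ⬝ᵥ Sig' *ᵥ x := hP
end
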